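/- arXiv:2304.07657 — 3 statements merged into one kernel-verified Lean document; each statement's English description precedes it below -/
import Mathlib

section
/- For every positive integer n and every nonnegative integer k, n^k equals the sum over all partitions λ of n of f^λ · m^λ_{(n)}(k), where f^λ is the number of standard Young tableaux of shape λ and m^λ_{(n)}(k) is the number of vacillating tableaux of length k from λ to the one-row partition (n). -/
open YoungDiagram

/-- `ν` is obtained from `μ` by adding exactly one cell. -/
def AddCell (μ ν : YoungDiagram) : Prop := μ ≤ ν ∧ ν.card = μ.card + 1

/-- Vacillating tableaux of length `k` from `lam` to `mu`: sequences
`lam = λ⁰ ⊃ λ¹ ⊂ λ² ⊃ ⋯ ⊂ λ^{2k} = mu` with consecutive terms differing by one cell,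
encoded as functions `ℕ → YoungDiagram` that are constantly `mu` from index `2k` on. -/
def vacTabs (k : ℕ) (lam mu : YoungDiagram) : Set (ℕ → YoungDiagram) :=
  {f | f 0 = lam ∧ (∀ j, 2 * k ≤ j → f j = mu) ∧
    ∀ i < k, AddCell (f (2 * i + 1)) (f (2 * i)) ∧ AddCell (f (2 * i + 1)) (f (2 * i + 2))}

/-- `m^lam_mu(k)`: the number of vacillating tableaux of length `k` from `lam` to `mu`. -/
noncomputable def mVac (lam mu : YoungDiagram) (k : ℕ) : ℕ := (vacTabs k lam mu).ncard

/-- Standard Young tableaux of shape `lam`, as saturated chains `∅ = ν⁰ ⊂ ν¹ ⊂ ⋯ ⊂ νⁿ = lam`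
adding one cell at a time (encoded as functions constantly `lam` from index `lam.card` on). -/
def sytChains (lam : YoungDiagram) : Set (ℕ → YoungDiagram) :=
  {g | g 0 = ⊥ ∧ (∀ j, lam.card ≤ j → g j = lam) ∧
    ∀ i < lam.card, AddCell (g i) (g (i + 1))}

/-- `f^lam`: the number of standard Young tableaux of shape `lam`. -/
noncomputable def fSYT (lam : YoungDiagram) : ℕ := (sytChains lam).ncard

/-- The one-row partition `(n)`. -/
def rowD (n : ℕ) : YoungDiagram := ofRowLens [n] (List.sortedGE_iff_pairwise.mpr (List.pairwise_singleton _ n))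

/-- The one-column partition `(1ⁿ)`. -/
def colD (n : ℕ) : YoungDiagram :=
  ofRowLens (List.replicate n 1) (List.sortedGE_iff_pairwise.mpr (List.pairwise_replicate.mpr (Or.inr (le_refl 1))))

/-- The hook partition `(n-1,1)` (for `n ≥ 2`). -/
def hookD (n : ℕ) : YoungDiagram := rowD (n - 1) ⊔ colD 2

/-- Stirling numbers of the second kind: the number of set partitions of a
`k`-element set into exactly `l` nonempty blocks. -/
noncomputable def stirling (k l : ℕ) : ℕ :=
  {P : Finpartition (Finset.univ : Finset (Fin k)) | P.parts.card = l}.ncard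

/-- Bell numbers: the number of set partitions of a `k`-element set. -/
noncomputable def bell (k : ℕ) : ℕ :=
  Nat.card (Finpartition (Finset.univ : Finset (Fin k)))

/-!
Induction on `k`. Splitting off the first removal and addition of a vacillating tableau gives
`m^λ_μ(k+1) = ∑_{ρ ⋖ λ} ∑_{ν ⋗ ρ} m^ν_μ(k)`. After exchanging the order of summation, the step
`k → k+1` multiplies the sum by `n` thanks to the branching rule `f^λ = ∑_{ρ ⋖ λ} f^ρ` and the
identity `∑_{ν ⋗ ρ} f^ν = (|ρ| + 1) f^ρ`. The latter expresses that Young's lattice is a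
differential poset: every diagram has one more addable than removable corner, and two distinct
diagrams of equal size have a common upper cover iff they have a common lower cover
(namely `μ ⊔ ρ` and `μ ⊓ ρ`); it follows by induction on `|ρ|`.
-/

lemma Finset.set_ncard_biUnion {ι α : Type*} {s : Finset ι} {t : ι → Set α}
    (ht : ∀ i ∈ s, (t i).Finite) (h : (s : Set ι).PairwiseDisjoint t) :
    (⋃ i ∈ s, t i).ncard = ∑ i ∈ s, (t i).ncard := by
  rw [← set_biUnion_coe, s.finite_toSet.ncard_biUnion ht h, finsum_mem_coe_finset]

open Finset

namespace YoungDiagram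

instance : DecidableEq YoungDiagram :=
  fun μ ν => decidable_of_iff (μ.cells = ν.cells) YoungDiagram.ext_iff.symm

lemma card_le_card_of_le {μ ν : YoungDiagram} (h : μ ≤ ν) : μ.card ≤ ν.card :=
  Finset.card_le_card (cells_subset_iff.mpr h)

lemma eq_of_le_of_card_le {μ ν : YoungDiagram} (h : μ ≤ ν) (hc : ν.card ≤ μ.card) : μ = ν :=
  YoungDiagram.ext (eq_of_subset_of_card_le (cells_subset_iff.mpr h) hc)

lemma card_sup_add_card_inf (μ ν : YoungDiagram) :
    (μ ⊔ ν).card + (μ ⊓ ν).card = μ.card + ν.card := by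
  simp only [YoungDiagram.card, cells_sup, cells_inf, card_union_add_card_inter]

lemma eq_bot_of_card_eq_zero {μ : YoungDiagram} (h : μ.card = 0) : μ = ⊥ :=
  (eq_of_le_of_card_le bot_le (by omega)).symm

lemma finite_setOf_card_eq (n : ℕ) : {μ : YoungDiagram | μ.card = n}.Finite := by
  refine ((range n ×ˢ range n).powerset.finite_toSet.preimage
    fun μ _ ν _ h => YoungDiagram.ext h).subset fun μ (hμ : μ.card = n) => ?_
  simp only [Set.mem_preimage, coe_powerset, Set.mem_powerset_iff, coe_subset]
  rintro ⟨i, j⟩ hij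
  have hi : μ.colLen j ≤ μ.card := colLen_eq_card μ ▸ card_le_card (filter_subset _ _)
  have hj : μ.rowLen i ≤ μ.card := rowLen_eq_card μ ▸ card_le_card (filter_subset _ _)
  have := mem_iff_lt_colLen.mp hij
  have := mem_iff_lt_rowLen.mp hij
  simp only [mem_product, mem_range]
  omega

lemma rowLen_eq_of_forall_mem_iff {μ : YoungDiagram} {i m : ℕ} (h : ∀ j, (i, j) ∈ μ ↔ j < m) :
    μ.rowLen i = m := by
  have h₁ := h (μ.rowLen i)
  have h₂ := h m
  simp only [mem_iff_lt_rowLen, lt_irrefl, false_iff, iff_false] at h₁ h₂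
  omega

def IsAddableRow (μ : YoungDiagram) (i : ℕ) : Prop := i = 0 ∨ μ.rowLen i < μ.rowLen (i - 1)

def IsRemovableRow (μ : YoungDiagram) (i : ℕ) : Prop := μ.rowLen (i + 1) < μ.rowLen i

variable {μ : YoungDiagram} {i : ℕ}

lemma rowLen_notMem (μ : YoungDiagram) (i : ℕ) : (i, μ.rowLen i) ∉ μ := by
  simp [mem_iff_lt_rowLen]

lemma isLowerSet_insert_rowLen (h : μ.IsAddableRow i) :
    IsLowerSet (↑(insert (i, μ.rowLen i) μ.cells) : Set (ℕ × ℕ)) := by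
  rintro ⟨a₁, a₂⟩ ⟨b₁, b₂⟩ ⟨hb₁, hb₂⟩ ha
  simp only [coe_insert, Set.mem_insert_iff, mem_coe, mem_cells, Prod.mk.injEq,
    mem_iff_lt_rowLen] at ha hb₁ hb₂ ⊢
  have := μ.rowLen_anti b₁ a₁ hb₁
  rcases ha with ⟨rfl, rfl⟩ | ha
  · have := μ.rowLen_anti b₁ (a₁ - 1)
    rcases h with rfl | h <;> omega
  · omega

def addToRow (μ : YoungDiagram) (i : ℕ) (h : μ.IsAddableRow i) : YoungDiagram :=
  ⟨insert (i, μ.rowLen i) μ.cells, isLowerSet_insert_rowLen h⟩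

lemma isLowerSet_erase_rowLen_sub_one (h : μ.IsRemovableRow i) :
    IsLowerSet (↑(μ.cells.erase (i, μ.rowLen i - 1)) : Set (ℕ × ℕ)) := by
  rintro ⟨a₁, a₂⟩ ⟨b₁, b₂⟩ ⟨hb₁, hb₂⟩ ha
  simp only [coe_erase, Set.mem_sdiff, mem_coe, mem_cells, Set.mem_singleton_iff, Prod.mk.injEq,
    mem_iff_lt_rowLen] at ha hb₁ hb₂ ⊢
  refine ⟨hb₂.trans_lt (ha.1.trans_le (μ.rowLen_anti b₁ a₁ hb₁)), ?_⟩
  rintro ⟨rfl, rfl⟩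
  rcases hb₁.eq_or_lt with rfl | hlt
  · omega
  · have := μ.rowLen_anti (b₁ + 1) a₁ hlt
    unfold IsRemovableRow at h
    omega

def removeFromRow (μ : YoungDiagram) (i : ℕ) (h : μ.IsRemovableRow i) : YoungDiagram :=
  ⟨μ.cells.erase (i, μ.rowLen i - 1), isLowerSet_erase_rowLen_sub_one h⟩

lemma mem_rowLen_sub_one (h : μ.IsRemovableRow i) : (i, μ.rowLen i - 1) ∈ μ :=
  mem_iff_lt_rowLen.mpr (by unfold IsRemovableRow at h; omega)

lemma addCell_addToRow (h : μ.IsAddableRow i) : AddCell μ (μ.addToRow i h) :=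
  ⟨cells_subset_iff.mp (subset_insert _ _),
    card_insert_of_notMem (by simpa using μ.rowLen_notMem i)⟩

lemma addCell_removeFromRow (h : μ.IsRemovableRow i) : AddCell (μ.removeFromRow i h) μ :=
  ⟨cells_subset_iff.mp (erase_subset _ _),
    (card_erase_add_one (by simpa using mem_rowLen_sub_one h)).symm⟩

lemma mem_addToRow {h : μ.IsAddableRow i} {c : ℕ × ℕ} :
    c ∈ μ.addToRow i h ↔ c = (i, μ.rowLen i) ∨ c ∈ μ := by
  rw [← mem_cells]
  exact mem_insert

lemma rowLen_addToRow (h : μ.IsAddableRow i) (i' : ℕ) :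
    (μ.addToRow i h).rowLen i' = if i' = i then μ.rowLen i + 1 else μ.rowLen i' := by
  refine rowLen_eq_of_forall_mem_iff fun j => ?_
  rw [mem_addToRow, mem_iff_lt_rowLen, Prod.mk.injEq]
  split_ifs with hi
  · subst hi
    omega
  · omega

lemma row_eq_of_addToRow_eq {i' : ℕ} {h : μ.IsAddableRow i} {h' : μ.IsAddableRow i'}
    (he : μ.addToRow i h = μ.addToRow i' h') : i = i' := by
  have hc : (i, μ.rowLen i) ∈ μ.addToRow i' h' := he ▸ mem_addToRow.mpr (Or.inl rfl)
  rcases mem_addToRow.mp hc with hc | hc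
  · exact (Prod.mk.inj hc).1
  · exact absurd hc (μ.rowLen_notMem i)

lemma row_eq_of_removeFromRow_eq {i' : ℕ} {h : μ.IsRemovableRow i} {h' : μ.IsRemovableRow i'}
    (he : μ.removeFromRow i h = μ.removeFromRow i' h') : i = i' := by
  by_contra hne
  have hc : (i, μ.rowLen i - 1) ∈ (μ.removeFromRow i' h').cells :=
    mem_erase.mpr ⟨fun hc => hne (Prod.mk.inj hc).1, by simpa using mem_rowLen_sub_one h⟩
  rw [← he] at hc
  exact notMem_erase _ _ hc

end YoungDiagram

lemma AddCell.exists_eq_addToRow {μ ν : YoungDiagram} (h : AddCell μ ν) :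
    ∃ i, ∃ hi : μ.IsAddableRow i, ν = μ.addToRow i hi := by
  obtain ⟨⟨i, j⟩, hc, hν⟩ := exists_eq_insert_iff.mpr ⟨cells_subset_iff.mpr h.1, h.2.symm⟩
  have mem_ν : ∀ {c}, c ∈ ν ↔ c = (i, j) ∨ c ∈ μ := by
    intro c
    rw [← mem_cells, ← hν, mem_insert, mem_cells]
  have hij : (i, j) ∈ ν := mem_ν.mpr (Or.inl rfl)
  have hj : j = μ.rowLen i := by
    have hle : μ.rowLen i ≤ j := by rwa [mem_cells, mem_iff_lt_rowLen, not_lt] at hc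
    rcases mem_ν.mp (ν.up_left_mem le_rfl hle hij) with h | h
    · exact (Prod.mk.inj h).2.symm
    · exact absurd h (μ.rowLen_notMem i)
  subst hj
  refine ⟨i, ?_, YoungDiagram.ext hν.symm⟩
  rcases Nat.eq_zero_or_pos i with rfl | hi
  · exact Or.inl rfl
  · refine Or.inr (mem_iff_lt_rowLen.mp ?_)
    rcases mem_ν.mp (ν.up_left_mem (Nat.sub_le i 1) le_rfl hij) with h | h
    · exact absurd (Prod.mk.inj h).1 (by omega)
    · exact h

lemma AddCell.exists_eq_removeFromRow {ρ μ : YoungDiagram} (h : AddCell ρ μ) :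
    ∃ i, ∃ hi : μ.IsRemovableRow i, ρ = μ.removeFromRow i hi := by
  obtain ⟨i, hi, rfl⟩ := h.exists_eq_addToRow
  have hrem : (ρ.addToRow i hi).IsRemovableRow i := by
    have := ρ.rowLen_anti i (i + 1) (Nat.le_succ i)
    simp only [IsRemovableRow, rowLen_addToRow, Nat.succ_ne_self, if_true, if_false]
    omega
  refine ⟨i, hrem, YoungDiagram.ext ?_⟩
  show ρ.cells = (insert (i, ρ.rowLen i) ρ.cells).erase (i, (ρ.addToRow i hi).rowLen i - 1)
  rw [rowLen_addToRow, if_pos rfl, Nat.add_sub_cancel,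
    erase_insert (by simpa using ρ.rowLen_notMem i)]

namespace YoungDiagram

open scoped Classical

noncomputable def ofCard (n : ℕ) : Finset YoungDiagram := (finite_setOf_card_eq n).toFinset

noncomputable def upperCovers (μ : YoungDiagram) : Finset YoungDiagram :=
  (ofCard (μ.card + 1)).filter (AddCell μ)

noncomputable def lowerCovers (μ : YoungDiagram) : Finset YoungDiagram :=
  (ofCard (μ.card - 1)).filter (AddCell · μ)

@[simp] lemma mem_ofCard {n : ℕ} {μ : YoungDiagram} : μ ∈ ofCard n ↔ μ.card = n :=
  Set.Finite.mem_toFinset _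

lemma coe_ofCard (n : ℕ) : (ofCard n : Set YoungDiagram) = {μ | μ.card = n} :=
  Set.Finite.coe_toFinset _

@[simp] lemma mem_upperCovers {μ ν : YoungDiagram} : ν ∈ upperCovers μ ↔ AddCell μ ν := by
  simpa [upperCovers] using fun h : AddCell μ ν => h.2

@[simp] lemma mem_lowerCovers {μ ρ : YoungDiagram} : ρ ∈ lowerCovers μ ↔ AddCell ρ μ := by
  simpa [lowerCovers] using fun h : AddCell ρ μ => by rw [h.2, Nat.add_sub_cancel]

noncomputable def addableRows (μ : YoungDiagram) : Finset ℕ :=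
  (range (μ.colLen 0 + 1)).filter μ.IsAddableRow

noncomputable def removableRows (μ : YoungDiagram) : Finset ℕ :=
  (range (μ.colLen 0)).filter μ.IsRemovableRow

lemma mem_addableRows {μ : YoungDiagram} {i : ℕ} : i ∈ addableRows μ ↔ μ.IsAddableRow i := by
  refine mem_filter.trans (and_iff_right_of_imp fun h => mem_range.mpr ?_)
  rcases h with rfl | h
  · omega
  · have := mem_iff_lt_colLen.mp (mem_iff_lt_rowLen.mpr (Nat.zero_lt_of_lt h))
    omega

lemma mem_removableRows {μ : YoungDiagram} {i : ℕ} :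
    i ∈ removableRows μ ↔ μ.IsRemovableRow i :=
  mem_filter.trans (and_iff_right_of_imp fun h =>
    mem_range.mpr (mem_iff_lt_colLen.mp (mem_iff_lt_rowLen.mpr (Nat.zero_lt_of_lt h))))

lemma card_addableRows (μ : YoungDiagram) : #(addableRows μ) = #(removableRows μ) + 1 := by
  have : addableRows μ = cons 0 ((removableRows μ).map ⟨_, add_left_injective 1⟩) (by simp) := by
    ext (_ | i) <;> simp [addableRows, removableRows, IsAddableRow, IsRemovableRow]
  rw [this, card_cons, card_map]

lemma card_upperCovers (μ : YoungDiagram) : #(upperCovers μ) = #(lowerCovers μ) + 1 := by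
  have hup : #(addableRows μ) = #(upperCovers μ) :=
    card_bij (fun i hi => μ.addToRow i (mem_addableRows.mp hi))
      (fun _ _ => mem_upperCovers.mpr (addCell_addToRow _))
      (fun _ _ _ _ => row_eq_of_addToRow_eq)
      (fun ν hν => by
        obtain ⟨i, hi, rfl⟩ := (mem_upperCovers.mp hν).exists_eq_addToRow
        exact ⟨i, mem_addableRows.mpr hi, rfl⟩)
  have hdown : #(removableRows μ) = #(lowerCovers μ) :=
    card_bij (fun i hi => μ.removeFromRow i (mem_removableRows.mp hi))
      (fun _ _ => mem_lowerCovers.mpr (addCell_removeFromRow _))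
      (fun _ _ _ _ => row_eq_of_removeFromRow_eq)
      (fun ρ hρ => by
        obtain ⟨i, hi, rfl⟩ := (mem_lowerCovers.mp hρ).exists_eq_removeFromRow
        exact ⟨i, mem_removableRows.mpr hi, rfl⟩)
  rw [← hup, ← hdown, card_addableRows]

end YoungDiagram

lemma AddCell.card_eq_of_card_eq_succ {ρ μ : YoungDiagram} {n : ℕ} (h : AddCell ρ μ)
    (hn : μ.card = n + 1) : ρ.card = n := by
  have := h.2
  omega

lemma AddCell.addCell_inf_of_ne {μ ρ ν : YoungDiagram} (hμ : AddCell μ ν) (hρ : AddCell ρ ν)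
    (hne : ρ ≠ μ) : AddCell (μ ⊓ ρ) μ ∧ AddCell (μ ⊓ ρ) ρ ∧ μ ⊔ ρ = ν := by
  have hc := card_sup_add_card_inf μ ρ
  have := hμ.2
  have := hρ.2
  have hsup : μ ⊔ ρ = ν := by
    refine eq_of_le_of_card_le (sup_le hμ.1 hρ.1) ?_
    by_contra! hlt
    have hμρ : μ = μ ⊔ ρ := eq_of_le_of_card_le le_sup_left (by omega)
    exact hne (eq_of_le_of_card_le (le_sup_right.trans_eq hμρ.symm) (by omega))
  rw [hsup] at hc
  exact ⟨⟨inf_le_left, by omega⟩, ⟨inf_le_right, by omega⟩, hsup⟩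

lemma AddCell.addCell_sup_of_ne {σ μ ρ : YoungDiagram} (hμ : AddCell σ μ) (hρ : AddCell σ ρ)
    (hne : ρ ≠ μ) : AddCell μ (μ ⊔ ρ) ∧ AddCell ρ (μ ⊔ ρ) ∧ μ ⊓ ρ = σ := by
  have hc := card_sup_add_card_inf μ ρ
  have := hμ.2
  have := hρ.2
  have hinf : μ ⊓ ρ = σ := by
    refine (eq_of_le_of_card_le (le_inf hμ.1 hρ.1) ?_).symm
    by_contra! hlt
    have := card_le_card_of_le (inf_le_left : μ ⊓ ρ ≤ μ)
    have hμρ : μ ⊓ ρ = μ := eq_of_le_of_card_le inf_le_left (by omega)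
    exact hne (eq_of_le_of_card_le (hμρ.symm.trans_le inf_le_right) (by omega)).symm
  rw [hinf] at hc
  exact ⟨⟨le_sup_left, by omega⟩, ⟨le_sup_right, by omega⟩, hinf⟩

lemma cells_rowD (n : ℕ) : (rowD n).cells = {0} ×ˢ range n := by
  ext ⟨i, j⟩
  simp [rowD, mem_ofRowLens, and_comm, eq_comm]

lemma card_rowD (n : ℕ) : (rowD n).card = n := by
  simp [YoungDiagram.card, cells_rowD]

lemma addCell_rowD (n : ℕ) : AddCell (rowD n) (rowD (n + 1)) :=
  ⟨cells_subset_iff.mp (by simpa only [cells_rowD] using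
    product_subset_product_right (range_subset_range.mpr n.le_succ)), by simp [card_rowD]⟩

lemma eq_rowD_of_le_rowD {μ : YoungDiagram} {n : ℕ} (h : μ ≤ rowD n) : μ = rowD μ.card := by
  have hrow : μ.cells = μ.row 0 := by
    refine (filter_true_of_mem fun c hc => ?_).symm
    have := cells_subset_iff.mpr h hc
    rw [cells_rowD, mem_product, mem_singleton] at this
    exact this.1
  have hcard : μ.card = μ.rowLen 0 := by rw [rowLen_eq_card, ← hrow]
  exact YoungDiagram.ext (by rw [cells_rowD, hrow, row_eq_prod, hcard])

lemma lowerCovers_rowD_succ (n : ℕ) : lowerCovers (rowD (n + 1)) = {rowD n} := by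
  ext ρ
  rw [mem_lowerCovers, mem_singleton]
  constructor
  · intro h
    rw [eq_rowD_of_le_rowD h.1, h.card_eq_of_card_eq_succ (card_rowD _)]
  · rintro rfl
    exact addCell_rowD n

lemma sytChains_subset_of_card_eq_zero {lam : YoungDiagram} (h : lam.card = 0) :
    sytChains lam ⊆ {fun _ => lam} :=
  fun _ hg => funext fun j => hg.2.1 j (h ▸ j.zero_le)

lemma sytChains_eq_biUnion {lam : YoungDiagram} {n : ℕ} (hn : lam.card = n + 1) :
    sytChains lam =
      ⋃ ρ ∈ lowerCovers lam, (fun g j => if j ≤ n then g j else lam) '' sytChains ρ := by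
  ext g
  simp only [Set.mem_iUnion, Set.mem_image, mem_lowerCovers, exists_prop]
  constructor
  · rintro ⟨h0, hend, hstep⟩
    have hlast : AddCell (g n) lam := hend (n + 1) hn.le ▸ hstep n (by omega)
    have hcard := hlast.card_eq_of_card_eq_succ hn
    refine ⟨g n, hlast, fun j => g (min j n), ⟨h0, fun j hj => ?_, fun i hi => ?_⟩, ?_⟩
    · dsimp only
      rw [min_eq_right (by omega)]
    · dsimp only
      rw [min_eq_left (by omega), min_eq_left (by omega)]
      exact hstep i (by omega)
    · funext j
      split_ifs with hj
      · exact congrArg g (min_eq_left hj)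
      · exact (hend j (by omega)).symm
  · rintro ⟨ρ, hρ, g, ⟨h0, hend, hstep⟩, rfl⟩
    have hcard := hρ.card_eq_of_card_eq_succ hn
    refine ⟨by simpa using h0, fun j hj => if_neg (by omega), fun i hi => ?_⟩
    rcases (Nat.lt_succ_iff.mp (hn ▸ hi)).lt_or_eq with hi | rfl
    · simpa only [if_pos hi.le, if_pos (Nat.succ_le_of_lt hi)] using hstep i (by omega)
    · simpa only [le_refl, if_true, Nat.not_succ_le_self, if_false, hend i hcard.le] using hρ

lemma sytChains_finite (lam : YoungDiagram) : (sytChains lam).Finite := by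
  obtain ⟨n, hn⟩ : ∃ n, lam.card = n := ⟨_, rfl⟩
  induction n generalizing lam with
  | zero => exact (Set.finite_singleton _).subset (sytChains_subset_of_card_eq_zero hn)
  | succ n ih =>
    rw [sytChains_eq_biUnion hn]
    exact (lowerCovers lam).finite_toSet.biUnion fun ρ hρ =>
      (ih ρ ((mem_lowerCovers.mp hρ).card_eq_of_card_eq_succ hn)).image _

lemma fSYT_eq_sum_lowerCovers {lam : YoungDiagram} {n : ℕ} (hn : lam.card = n + 1) :
    fSYT lam = ∑ ρ ∈ lowerCovers lam, fSYT ρ := by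
  have hcard : ∀ ρ ∈ lowerCovers lam, ρ.card = n := fun ρ hρ =>
    (mem_lowerCovers.mp hρ).card_eq_of_card_eq_succ hn
  have hdisj : (lowerCovers lam : Set YoungDiagram).PairwiseDisjoint
      fun ρ => (fun g j => if j ≤ n then g j else lam) '' sytChains ρ :=
    (Set.pairwiseDisjoint_fiber (fun g : ℕ → YoungDiagram => g n) _).mono_on fun ρ hρ => by
      rintro _ ⟨g, hg, rfl⟩
      simpa using hg.2.1 n (hcard ρ hρ).le
  rw [fSYT, sytChains_eq_biUnion hn,
    set_ncard_biUnion (fun ρ _ => (sytChains_finite ρ).image _) hdisj]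
  refine sum_congr rfl fun ρ hρ => Set.InjOn.ncard_image fun g hg g' hg' he => funext fun j => ?_
  by_cases hj : j ≤ n
  · simpa [hj] using congrFun he j
  · rw [hg.2.1 j (by rw [hcard ρ hρ]; omega), hg'.2.1 j (by rw [hcard ρ hρ]; omega)]

lemma fSYT_bot : fSYT ⊥ = 1 := by
  refine Set.ncard_eq_one.mpr ⟨fun _ => ⊥, (sytChains_subset_of_card_eq_zero rfl).antisymm ?_⟩
  rintro _ rfl
  exact ⟨rfl, fun _ _ => rfl, fun i hi => absurd hi (Nat.not_lt_zero i)⟩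

lemma fSYT_rowD (n : ℕ) : fSYT (rowD n) = 1 := by
  induction n with
  | zero => rw [eq_bot_of_card_eq_zero (card_rowD 0), fSYT_bot]
  | succ n ih =>
    rw [fSYT_eq_sum_lowerCovers (card_rowD _), lowerCovers_rowD_succ, sum_singleton, ih]

def cons₂ {α : Type*} (a b : α) (g : ℕ → α) : ℕ → α
  | 0 => a
  | 1 => b
  | j + 2 => g j

lemma eq_cons₂ {α : Type*} (f : ℕ → α) : f = cons₂ (f 0) (f 1) (fun j => f (j + 2)) :=
  funext fun | 0 => rfl | 1 => rfl | _ + 2 => rfl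

lemma cons₂_injective {α : Type*} (a b : α) : Function.Injective (cons₂ a b) :=
  fun _ _ h => funext fun j => congrFun h (j + 2)

lemma mem_vacTabs_succ {k : ℕ} {lam mu : YoungDiagram} {f : ℕ → YoungDiagram} :
    f ∈ vacTabs (k + 1) lam mu ↔ f 0 = lam ∧ AddCell (f 1) lam ∧ AddCell (f 1) (f 2) ∧
      (fun j => f (j + 2)) ∈ vacTabs k (f 2) mu := by
  constructor
  · rintro ⟨h0, hend, hstep⟩
    refine ⟨h0, h0 ▸ (hstep 0 k.succ_pos).1, (hstep 0 k.succ_pos).2,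
      ⟨rfl, fun j hj => hend (j + 2) (by omega), fun i hi => ?_⟩⟩
    simpa only [mul_add, add_right_comm _ 2] using hstep (i + 1) (by omega)
  · rintro ⟨h0, h1, h2, -, hend, hstep⟩
    refine ⟨h0, fun j hj => ?_, fun i hi => ?_⟩
    · simpa only [Nat.sub_add_cancel (by omega : 2 ≤ j)] using hend (j - 2) (by omega)
    · rcases i with _ | i
      · exact ⟨h0 ▸ h1, h2⟩
      · simpa only [mul_add, add_right_comm _ 2] using hstep i (by omega)

lemma vacTabs_succ (k : ℕ) (lam mu : YoungDiagram) :
    vacTabs (k + 1) lam mu =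
      ⋃ ρ ∈ lowerCovers lam, ⋃ ν ∈ upperCovers ρ, cons₂ lam ρ '' vacTabs k ν mu := by
  ext f
  simp only [Set.mem_iUnion, Set.mem_image, mem_lowerCovers, mem_upperCovers, exists_prop]
  constructor
  · intro hf
    obtain ⟨h0, h1, h2, htail⟩ := mem_vacTabs_succ.mp hf
    exact ⟨f 1, h1, f 2, h2, _, htail, by rw [← h0, ← eq_cons₂]⟩
  · rintro ⟨ρ, hρ, ν, hν, g, hg, rfl⟩
    exact mem_vacTabs_succ.mpr
      ⟨rfl, hρ, (hg.1.symm ▸ hν : AddCell ρ (g 0)), (hg.1.symm ▸ hg : g ∈ vacTabs k (g 0) mu)⟩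

lemma vacTabs_zero_subset (lam mu : YoungDiagram) : vacTabs 0 lam mu ⊆ {fun _ => mu} :=
  fun _ hf => funext fun j => hf.2.1 j (Nat.zero_le j)

lemma vacTabs_finite (k : ℕ) (lam mu : YoungDiagram) : (vacTabs k lam mu).Finite := by
  induction k generalizing lam with
  | zero => exact (Set.finite_singleton _).subset (vacTabs_zero_subset lam mu)
  | succ k ih =>
    rw [vacTabs_succ]
    exact (lowerCovers lam).finite_toSet.biUnion fun ρ _ =>
      (upperCovers ρ).finite_toSet.biUnion fun ν _ => (ih ν).image _

lemma mVac_self_zero (lam : YoungDiagram) : mVac lam lam 0 = 1 := by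
  refine Set.ncard_eq_one.mpr ⟨fun _ => lam, (vacTabs_zero_subset lam lam).antisymm ?_⟩
  rintro _ rfl
  exact ⟨rfl, fun _ _ => rfl, fun i hi => absurd hi (Nat.not_lt_zero i)⟩

lemma mVac_zero_of_ne {lam mu : YoungDiagram} (h : lam ≠ mu) : mVac lam mu 0 = 0 := by
  rw [mVac, Set.eq_empty_of_forall_notMem fun _ (hf : _ ∈ vacTabs 0 lam mu) =>
    h (hf.1 ▸ hf.2.1 0 le_rfl), Set.ncard_empty]

lemma mVac_succ (k : ℕ) (lam mu : YoungDiagram) :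
    mVac lam mu (k + 1) = ∑ ρ ∈ lowerCovers lam, ∑ ν ∈ upperCovers ρ, mVac ν mu k := by
  have hdisj₁ : (lowerCovers lam : Set YoungDiagram).PairwiseDisjoint
      fun ρ => ⋃ ν ∈ upperCovers ρ, cons₂ lam ρ '' vacTabs k ν mu :=
    (Set.pairwiseDisjoint_fiber (fun f : ℕ → YoungDiagram => f 1) _).mono_on fun ρ _ => by
      simp only [Set.iUnion_subset_iff, Set.image_subset_iff]
      exact fun _ _ _ _ => rfl
  have hdisj₂ (ρ : YoungDiagram) : (upperCovers ρ : Set YoungDiagram).PairwiseDisjoint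
      fun ν => cons₂ lam ρ '' vacTabs k ν mu :=
    (Set.pairwiseDisjoint_fiber (fun f : ℕ → YoungDiagram => f 2) _).mono_on fun ν _ => by
      rintro _ ⟨g, hg, rfl⟩
      exact hg.1
  have hfin (ρ ν : YoungDiagram) : (cons₂ lam ρ '' vacTabs k ν mu).Finite :=
    (vacTabs_finite k ν mu).image _
  rw [mVac, vacTabs_succ, set_ncard_biUnion (fun ρ _ => ?_) hdisj₁]
  · refine sum_congr rfl fun ρ _ => ?_
    rw [set_ncard_biUnion (fun ν _ => hfin ρ ν) (hdisj₂ ρ)]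
    exact sum_congr rfl fun ν _ => Set.ncard_image_of_injective _ (cons₂_injective lam ρ)
  · exact (upperCovers ρ).finite_toSet.biUnion fun ν _ => hfin ρ ν

lemma sum_upperCovers_sum_erase_lowerCovers {M : Type*} [AddCommMonoid M]
    (φ : YoungDiagram → M) (μ : YoungDiagram) :
    ∑ ν ∈ upperCovers μ, ∑ ρ ∈ (lowerCovers ν).erase μ, φ ρ =
      ∑ σ ∈ lowerCovers μ, ∑ ρ ∈ (upperCovers σ).erase μ, φ ρ := by
  rw [sum_sigma', sum_sigma']
  refine sum_nbij' (fun p => ⟨μ ⊓ p.2, p.2⟩) (fun p => ⟨μ ⊔ p.2, p.2⟩) ?_ ?_ ?_ ?_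
    fun _ _ => rfl
  all_goals
    rintro ⟨_, ρ⟩ hp
    simp only [mem_sigma, mem_erase, mem_upperCovers, mem_lowerCovers] at hp ⊢
  · obtain ⟨h₁, h₂, -⟩ := hp.1.addCell_inf_of_ne hp.2.2 hp.2.1
    exact ⟨h₁, hp.2.1, h₂⟩
  · obtain ⟨h₁, h₂, -⟩ := hp.1.addCell_sup_of_ne hp.2.2 hp.2.1
    exact ⟨h₁, hp.2.1, h₂⟩
  · rw [(hp.1.addCell_inf_of_ne hp.2.2 hp.2.1).2.2]
  · rw [(hp.1.addCell_sup_of_ne hp.2.2 hp.2.1).2.2]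

theorem sum_upperCovers_fSYT (μ : YoungDiagram) :
    ∑ ν ∈ upperCovers μ, fSYT ν = (μ.card + 1) * fSYT μ := by
  obtain ⟨m, hm⟩ : ∃ m, μ.card = m := ⟨_, rfl⟩
  induction m using Nat.strong_induction_on generalizing μ with
  | _ m ih =>
    have hup : ∑ ν ∈ upperCovers μ, fSYT ν = #(upperCovers μ) * fSYT μ +
        ∑ σ ∈ lowerCovers μ, ∑ ρ ∈ (upperCovers σ).erase μ, fSYT ρ := by
      rw [← sum_upperCovers_sum_erase_lowerCovers, card_eq_sum_ones, sum_mul, ← sum_add_distrib]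
      refine sum_congr rfl fun ν hν => ?_
      have hν' := mem_upperCovers.mp hν
      rw [one_mul, fSYT_eq_sum_lowerCovers (hν'.2.trans (congrArg (· + 1) hm)),
        add_sum_erase _ _ (mem_lowerCovers.mpr hν')]
    have hdown : ∑ σ ∈ lowerCovers μ, ∑ ρ ∈ (upperCovers σ).erase μ, fSYT ρ +
        #(lowerCovers μ) * fSYT μ = m * fSYT μ := calc
      _ = ∑ σ ∈ lowerCovers μ, (∑ ρ ∈ (upperCovers σ).erase μ, fSYT ρ + fSYT μ) := by
        rw [sum_add_distrib, sum_const, smul_eq_mul]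
      _ = ∑ σ ∈ lowerCovers μ, m * fSYT σ := sum_congr rfl fun σ hσ => by
        have hσ' := mem_lowerCovers.mp hσ
        have := hσ'.2
        rw [sum_erase_add _ _ (mem_upperCovers.mpr hσ'), ih σ.card (by omega) σ rfl]
        congr 1
        omega
      _ = m * fSYT μ := by
        rw [← mul_sum]
        rcases m with _ | m
        · rw [zero_mul, zero_mul]
        · rw [← fSYT_eq_sum_lowerCovers hm]
    rw [hup, card_upperCovers, hm]
    linarith

lemma sum_ofCard_succ_sum_lowerCovers {M : Type*} [AddCommMonoid M] (n : ℕ)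
    (h : YoungDiagram → YoungDiagram → M) :
    ∑ lam ∈ ofCard (n + 1), ∑ ρ ∈ lowerCovers lam, h lam ρ =
      ∑ ρ ∈ ofCard n, ∑ lam ∈ upperCovers ρ, h lam ρ :=
  sum_comm' fun lam ρ => by
    simp only [mem_ofCard, mem_lowerCovers, mem_upperCovers]
    exact ⟨fun hp => ⟨hp.2, hp.2.card_eq_of_card_eq_succ hp.1⟩,
      fun hp => ⟨by rw [hp.1.2, hp.2], hp.1⟩⟩

theorem sum_fSYT_mul_mVac_succ (n k : ℕ) (mu : YoungDiagram) :
    ∑ lam ∈ ofCard (n + 1), fSYT lam * mVac lam mu (k + 1) =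
      (n + 1) * ∑ lam ∈ ofCard (n + 1), fSYT lam * mVac lam mu k := calc
  _ = ∑ lam ∈ ofCard (n + 1), ∑ ρ ∈ lowerCovers lam,
        fSYT lam * ∑ ν ∈ upperCovers ρ, mVac ν mu k := by
    simp_rw [mVac_succ, mul_sum]
  _ = ∑ ρ ∈ ofCard n, (∑ lam ∈ upperCovers ρ, fSYT lam) * ∑ ν ∈ upperCovers ρ, mVac ν mu k := by
    simp_rw [sum_ofCard_succ_sum_lowerCovers, sum_mul]
  _ = (n + 1) * ∑ ρ ∈ ofCard n, ∑ ν ∈ upperCovers ρ, fSYT ρ * mVac ν mu k := by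
    simp_rw [mul_sum]
    refine sum_congr rfl fun ρ hρ => sum_congr rfl fun ν _ => ?_
    rw [sum_upperCovers_fSYT, mem_ofCard.mp hρ, mul_assoc]
  _ = (n + 1) * ∑ lam ∈ ofCard (n + 1), fSYT lam * mVac lam mu k := by
    rw [← sum_ofCard_succ_sum_lowerCovers n fun lam ρ => fSYT ρ * mVac lam mu k]
    simp_rw [← sum_mul]
    refine congrArg _ (sum_congr rfl fun lam hlam => ?_)
    rw [← fSYT_eq_sum_lowerCovers (mem_ofCard.mp hlam)]

theorem stmt0 (n k : ℕ) (hn : 1 ≤ n) :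
    (n : ℕ) ^ k =
      ∑ᶠ lam ∈ {lam : YoungDiagram | lam.card = n}, fSYT lam * mVac lam (rowD n) k := by
  obtain ⟨n, rfl⟩ := Nat.exists_eq_add_of_le' hn
  rw [← coe_ofCard, finsum_mem_coe_finset]
  induction k with
  | zero =>
    rw [pow_zero, sum_eq_single_of_mem _ (mem_ofCard.mpr (card_rowD _))
      fun lam _ h => by rw [mVac_zero_of_ne h, mul_zero], fSYT_rowD, mVac_self_zero, mul_one]
  | succ k ih => rw [sum_fSYT_mul_mVac_succ, ← ih, pow_succ, mul_comm]
end

section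
/- For all positive integers n and k with n ≥ 1, the number of vacillating tableaux of length k from the one-row partition (n) to itself equals the sum over l from 1 to n of the Stirling number of the second kind S(k,l): m^{(n)}_{(n)}(k) = Σ_{l=1}^{n} S(k,l). -/
open YoungDiagram

-- Auxiliary development
open YoungDiagram Finset

namespace VT

lemma rowLen_eq {ν : YoungDiagram} {i l : ℕ} (h : ∀ j, (i,j) ∈ ν ↔ j < l) :
    ν.rowLen i = l := by
  have h1 := h (ν.rowLen i)
  have h2 := h l
  rw [YoungDiagram.mem_iff_lt_rowLen] at h1 h2
  omega

lemma le_iff_rowLen {μ ν : YoungDiagram} : μ ≤ ν ↔ ∀ i, μ.rowLen i ≤ ν.rowLen i := by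
  constructor
  · intro h i
    by_contra hc
    push_neg at hc
    have : (i, ν.rowLen i) ∈ μ := by
      rw [YoungDiagram.mem_iff_lt_rowLen]; exact hc
    have h2 : (i, ν.rowLen i) ∈ ν := YoungDiagram.cells_subset_iff.2 h this
    rw [YoungDiagram.mem_iff_lt_rowLen] at h2
    omega
  · intro h
    rw [← YoungDiagram.cells_subset_iff]
    intro c hc
    obtain ⟨a, b⟩ := c
    rw [YoungDiagram.mem_cells, YoungDiagram.mem_iff_lt_rowLen] at *
    exact lt_of_lt_of_le hc (h a)

lemma ext_rowLen {μ ν : YoungDiagram} (h : ∀ i, μ.rowLen i = ν.rowLen i) : μ = ν := by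
  have : μ ≤ ν ∧ ν ≤ μ := ⟨le_iff_rowLen.2 fun i => (h i).le, le_iff_rowLen.2 fun i => (h i).ge⟩
  exact le_antisymm this.1 this.2

lemma colLen0_le_card (μ : YoungDiagram) : μ.colLen 0 ≤ μ.card := by
  rw [YoungDiagram.colLen_eq_card]
  exact Finset.card_le_card (Finset.filter_subset _ _)

lemma rowLen_eq_zero {μ : YoungDiagram} {i : ℕ} (h : μ.colLen 0 ≤ i) : μ.rowLen i = 0 := by
  by_contra hc
  have : (i, 0) ∈ μ := by rw [YoungDiagram.mem_iff_lt_rowLen]; omega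
  rw [YoungDiagram.mem_iff_lt_colLen] at this
  omega

lemma card_eq_sum_rowLens (μ : YoungDiagram) {N : ℕ} (h : μ.colLen 0 ≤ N) :
    μ.card = ∑ i ∈ Finset.range N, μ.rowLen i := by
  have hc : μ.cells = (Finset.range N).biUnion (fun i => μ.row i) := by
    ext ⟨a, b⟩
    simp only [Finset.mem_biUnion, Finset.mem_range]
    constructor
    · intro hm
      refine ⟨a, ?_, ?_⟩
      · rw [YoungDiagram.mem_cells, YoungDiagram.mem_iff_lt_colLen] at hm
        have := μ.colLen_anti 0 b (Nat.zero_le b)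
        omega
      · rw [YoungDiagram.mem_row_iff]; exact ⟨hm, rfl⟩
    · rintro ⟨i, _, hr⟩
      rw [YoungDiagram.mem_row_iff] at hr
      exact hr.1
  have hd : ∀ x ∈ Finset.range N, ∀ y ∈ Finset.range N, x ≠ y →
      Disjoint (μ.row x) (μ.row y) := by
    intro x _ y _ hxy
    rw [Finset.disjoint_left]
    intro c hcx hcy
    rw [YoungDiagram.mem_row_iff] at hcx hcy
    exact hxy (hcx.2 ▸ hcy.2 ▸ rfl)
  rw [show μ.card = μ.cells.card from rfl, hc, Finset.card_biUnion hd]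
  exact Finset.sum_congr rfl fun i _ => (μ.rowLen_eq_card).symm

/-- Addability of a cell at the end of row `i`. -/
def Ad (μ : YoungDiagram) (i : ℕ) : Prop :=
  match i with
  | 0 => True
  | i + 1 => μ.rowLen (i + 1) < μ.rowLen i

/-- Removability of the last cell of row `i`. -/
def Rm (μ : YoungDiagram) (i : ℕ) : Prop := μ.rowLen (i + 1) < μ.rowLen i

instance (μ : YoungDiagram) (i : ℕ) : Decidable (Ad μ i) := by
  cases i with
  | zero => exact isTrue trivial
  | succ i => exact inferInstanceAs (Decidable (_ < _))

instance (μ : YoungDiagram) (i : ℕ) : Decidable (Rm μ i) :=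
  inferInstanceAs (Decidable (_ < _))

lemma Ad_zero (μ : YoungDiagram) : Ad μ 0 := trivial

lemma Ad_succ_iff {μ : YoungDiagram} {i : ℕ} : Ad μ (i+1) ↔ Rm μ i := Iff.rfl

lemma Ad_iff {μ : YoungDiagram} {i : ℕ} :
    Ad μ i ↔ (i = 0 ∨ (0 < i ∧ μ.rowLen i < μ.rowLen (i-1))) := by
  cases i with
  | zero => simp [Ad]
  | succ i => simp [Ad]

lemma Rm_rowLen_pos {μ : YoungDiagram} {i : ℕ} (h : Rm μ i) : 0 < μ.rowLen i := by
  unfold Rm at h; omega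

lemma Rm_lt {μ : YoungDiagram} {i : ℕ} (h : Rm μ i) : i < μ.card + 2 := by
  have h0 : (i, 0) ∈ μ := by
    rw [YoungDiagram.mem_iff_lt_rowLen]; exact Rm_rowLen_pos h
  rw [YoungDiagram.mem_iff_lt_colLen] at h0
  have := colLen0_le_card μ
  omega

lemma Ad_lt {μ : YoungDiagram} {i : ℕ} (h : Ad μ i) : i < μ.card + 2 := by
  cases i with
  | zero => omega
  | succ i =>
    have := Rm_lt (μ := μ) (i := i) h
    -- need better bound: Rm μ i gives i < card + 2; we need i+1 < card+2 i.e. i < card + 1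
    have h0 : (i, 0) ∈ μ := by
      rw [YoungDiagram.mem_iff_lt_rowLen]; exact Rm_rowLen_pos h
    rw [YoungDiagram.mem_iff_lt_colLen] at h0
    have := colLen0_le_card μ
    omega

end VT

namespace VT

/-- Add a cell at the end of row `i` (junk value `μ` if not addable). -/
def addC (μ : YoungDiagram) (i : ℕ) : YoungDiagram :=
  if h : Ad μ i then
    { cells := insert (i, μ.rowLen i) μ.cells
      isLowerSet := by
        rintro ⟨x, y⟩ ⟨a, b⟩ ⟨(ha : a ≤ x), (hb : b ≤ y)⟩ hm
        rw [Finset.coe_insert, Set.mem_insert_iff] at *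
        rcases hm with hm | hm
        · -- (x,y) is the new cell
          rw [Prod.mk.injEq] at hm
          obtain ⟨hx, hy⟩ := hm
          rw [hx] at ha
          rw [hy] at hb
          rcases Nat.lt_or_ge b (μ.rowLen i) with hlt | hge
          · right
            rw [Finset.mem_coe, YoungDiagram.mem_cells, YoungDiagram.mem_iff_lt_rowLen]
            exact lt_of_lt_of_le hlt (μ.rowLen_anti a i ha)
          · have hbe : b = μ.rowLen i := le_antisymm hb hge
            rcases Nat.eq_or_lt_of_le ha with heq | halt
            · left; rw [hbe, heq]
            · right
              rw [Finset.mem_coe, YoungDiagram.mem_cells, YoungDiagram.mem_iff_lt_rowLen]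
              rw [Ad_iff] at h
              rcases h with rfl | ⟨hpos, hlt2⟩
              · omega
              · have : μ.rowLen i < μ.rowLen a := by
                  have := μ.rowLen_anti a (i-1) (by omega)
                  omega
                omega
        · right
          rw [Finset.mem_coe, YoungDiagram.mem_cells] at *
          exact μ.up_left_mem ha hb hm }
  else μ

lemma rowLen_addC {μ : YoungDiagram} {i : ℕ} (h : Ad μ i) (j : ℕ) :
    (addC μ i).rowLen j = if j = i then μ.rowLen i + 1 else μ.rowLen j := by
  have hmem : ∀ a b, ((a, b) ∈ addC μ i ↔ ((a,b) = (i, μ.rowLen i) ∨ (a,b) ∈ μ)) := by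
    intro a b
    rw [addC, dif_pos h]
    show (a, b) ∈ insert (i, μ.rowLen i) μ.cells ↔ _
    rw [Finset.mem_insert, YoungDiagram.mem_cells]
  apply rowLen_eq
  intro b
  rw [hmem j b]
  by_cases hji : j = i
  · subst hji
    rw [if_pos rfl, YoungDiagram.mem_iff_lt_rowLen, Prod.mk.injEq]
    constructor
    · rintro (⟨-, rfl⟩ | hlt) <;> omega
    · intro hb
      rcases Nat.eq_or_lt_of_le (Nat.lt_succ_iff.1 hb) with rfl | hlt
      · left; exact ⟨rfl, rfl⟩
      · right; omega
  · rw [if_neg hji, YoungDiagram.mem_iff_lt_rowLen, Prod.mk.injEq]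
    constructor
    · rintro (⟨rfl, -⟩ | hlt)
      · exact absurd rfl hji
      · exact hlt
    · intro hb; right; exact hb

lemma card_addC {μ : YoungDiagram} {i : ℕ} (h : Ad μ i) :
    (addC μ i).card = μ.card + 1 := by
  show (addC μ i).cells.card = μ.cells.card + 1
  rw [addC, dif_pos h]
  show (insert (i, μ.rowLen i) μ.cells).card = _
  rw [Finset.card_insert_of_notMem]
  have : ¬ (i, μ.rowLen i) ∈ μ := by rw [YoungDiagram.mem_iff_lt_rowLen]; omega
  rw [YoungDiagram.mem_cells]
  exact this

lemma addCell_addC {μ : YoungDiagram} {i : ℕ} (h : Ad μ i) : AddCell μ (addC μ i) := by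
  constructor
  · rw [le_iff_rowLen]
    intro j
    rw [rowLen_addC h]
    rcases eq_or_ne j i with rfl | hne
    · rw [if_pos rfl]; omega
    · rw [if_neg hne]
  · exact card_addC h

/-- Remove the last cell of row `i` (junk value `μ` if not removable). -/
def delC (μ : YoungDiagram) (i : ℕ) : YoungDiagram :=
  if h : Rm μ i then
    { cells := μ.cells.erase (i, μ.rowLen i - 1)
      isLowerSet := by
        have hpos := Rm_rowLen_pos h
        rintro ⟨x, y⟩ ⟨a, b⟩ ⟨(ha : a ≤ x), (hb : b ≤ y)⟩ hm
        rw [Finset.coe_erase, Set.mem_diff] at *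
        obtain ⟨hxy, hne⟩ := hm
        rw [Finset.mem_coe, YoungDiagram.mem_cells] at hxy
        refine ⟨by rw [Finset.mem_coe, YoungDiagram.mem_cells]; exact μ.up_left_mem ha hb hxy, ?_⟩
        intro hc
        rw [Set.mem_singleton_iff, Prod.mk.injEq] at hc
        obtain ⟨rfl, rfl⟩ := hc
        apply hne
        rw [Set.mem_singleton_iff, Prod.mk.injEq] at *
        have hyx : y < μ.rowLen x := YoungDiagram.mem_iff_lt_rowLen.1 hxy
        have h1 : μ.rowLen x ≤ μ.rowLen a := μ.rowLen_anti a x ha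
        rcases Nat.eq_or_lt_of_le ha with rfl | halt
        · constructor; rfl; omega
        · have h2 : μ.rowLen x ≤ μ.rowLen (a+1) := μ.rowLen_anti (a+1) x halt
          unfold Rm at h
          omega }
  else μ

lemma rowLen_delC {μ : YoungDiagram} {i : ℕ} (h : Rm μ i) (j : ℕ) :
    (delC μ i).rowLen j = if j = i then μ.rowLen i - 1 else μ.rowLen j := by
  have hpos := Rm_rowLen_pos h
  have hmem : ∀ a b, ((a, b) ∈ delC μ i ↔ ((a,b) ∈ μ ∧ (a,b) ≠ (i, μ.rowLen i - 1))) := by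
    intro a b
    rw [delC, dif_pos h]
    show (a, b) ∈ μ.cells.erase (i, μ.rowLen i - 1) ↔ _
    rw [Finset.mem_erase, YoungDiagram.mem_cells]
    tauto
  apply rowLen_eq
  intro b
  rw [hmem j b, YoungDiagram.mem_iff_lt_rowLen]
  have hP : ((j, b) : ℕ × ℕ) ≠ (i, μ.rowLen i - 1) ↔ ¬(j = i ∧ b = μ.rowLen i - 1) := by
    rw [Ne, Prod.mk.injEq]
  rw [hP]
  by_cases hji : j = i
  · subst hji; rw [if_pos rfl]
    constructor
    · rintro ⟨h1, h2⟩; omega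
    · intro hb; constructor <;> omega
  · rw [if_neg hji]
    constructor
    · rintro ⟨h1, -⟩; exact h1
    · intro hb; exact ⟨hb, by tauto⟩

lemma card_delC {μ : YoungDiagram} {i : ℕ} (h : Rm μ i) :
    (delC μ i).card + 1 = μ.card := by
  show (delC μ i).cells.card + 1 = μ.cells.card
  rw [delC, dif_pos h]
  show (μ.cells.erase (i, μ.rowLen i - 1)).card + 1 = _
  rw [Finset.card_erase_of_mem]
  · have : 0 < μ.cells.card := by
      rw [Finset.card_pos]
      exact ⟨_, by rw [YoungDiagram.mem_cells, YoungDiagram.mem_iff_lt_rowLen]; exact Rm_rowLen_pos h⟩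
    omega
  · rw [YoungDiagram.mem_cells, YoungDiagram.mem_iff_lt_rowLen]
    have := Rm_rowLen_pos h
    omega

lemma addCell_delC {μ : YoungDiagram} {i : ℕ} (h : Rm μ i) : AddCell (delC μ i) μ := by
  constructor
  · rw [le_iff_rowLen]
    intro j
    rw [rowLen_delC h]
    rcases eq_or_ne j i with rfl | hne
    · rw [if_pos rfl]; omega
    · rw [if_neg hne]
  · exact (card_delC h).symm

end VT

namespace VT

/-- Finset of addable row indices. -/
def adF (μ : YoungDiagram) : Finset ℕ := (Finset.range (μ.card + 2)).filter (Ad μ)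

/-- Finset of removable row indices. -/
def rmF (μ : YoungDiagram) : Finset ℕ := (Finset.range (μ.card + 2)).filter (Rm μ)

lemma mem_adF {μ : YoungDiagram} {i : ℕ} : i ∈ adF μ ↔ Ad μ i := by
  rw [adF, Finset.mem_filter, Finset.mem_range]
  exact ⟨fun h => h.2, fun h => ⟨Ad_lt h, h⟩⟩

lemma mem_rmF {μ : YoungDiagram} {i : ℕ} : i ∈ rmF μ ↔ Rm μ i := by
  rw [rmF, Finset.mem_filter, Finset.mem_range]
  exact ⟨fun h => h.2, fun h => ⟨Rm_lt h, h⟩⟩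

lemma rowLen_sub_delta {μ ν : YoungDiagram} (h : AddCell μ ν) :
    ∃ i, Rm ν i ∧ (∀ j, ν.rowLen j = if j = i then μ.rowLen j + 1 else μ.rowLen j) := by
  obtain ⟨hle, hcard⟩ := h
  set N := ν.card + 1 with hN
  have hcle : μ.card ≤ ν.card := by omega
  have hNμ : μ.colLen 0 ≤ N := le_trans (colLen0_le_card μ) (by omega)
  have hNν : ν.colLen 0 ≤ N := le_trans (colLen0_le_card ν) (by omega)
  have hsumμ := card_eq_sum_rowLens μ hNμ
  have hsumν := card_eq_sum_rowLens ν hNν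
  have hmono : ∀ j, μ.rowLen j ≤ ν.rowLen j := le_iff_rowLen.1 hle
  have hsum1 : ∑ j ∈ Finset.range N, (ν.rowLen j - μ.rowLen j) = 1 := by
    have : ∑ j ∈ Finset.range N, (μ.rowLen j + (ν.rowLen j - μ.rowLen j))
        = ∑ j ∈ Finset.range N, ν.rowLen j := by
      apply Finset.sum_congr rfl
      intro j _
      have := hmono j
      omega
    rw [Finset.sum_add_distrib] at this
    omega
  -- find the unique index
  have hpos : ∃ i ∈ Finset.range N, 0 < ν.rowLen i - μ.rowLen i := by
    by_contra hc
    push_neg at hc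
    have : ∑ j ∈ Finset.range N, (ν.rowLen j - μ.rowLen j) = 0 :=
      Finset.sum_eq_zero fun j hj => by have := hc j hj; omega
    omega
  obtain ⟨i, hiN, hipos⟩ := hpos
  have hdelta : ∀ j, ν.rowLen j = if j = i then μ.rowLen j + 1 else μ.rowLen j := by
    intro j
    rcases eq_or_ne j i with rfl | hne
    · rw [if_pos rfl]
      have hle1 : ν.rowLen j - μ.rowLen j ≤ 1 := by
        have hsub : {j} ⊆ Finset.range N := by
          rw [Finset.singleton_subset_iff]; exact hiN
        have := Finset.sum_le_sum_of_subset hsub (f := fun t => ν.rowLen t - μ.rowLen t)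
        rw [Finset.sum_singleton] at this
        have hbeta : ∑ x ∈ Finset.range N, (fun t => ν.rowLen t - μ.rowLen t) x = 1 := hsum1
        omega
      omega
    · rw [if_neg hne]
      rcases Nat.lt_or_ge j N with hjN | hjN
      · have hsub : ({i, j} : Finset ℕ) ⊆ Finset.range N := by
          intro t ht
          rw [Finset.mem_insert, Finset.mem_singleton] at ht
          rcases ht with rfl | rfl
          · exact hiN
          · rw [Finset.mem_range]; exact hjN
        have := Finset.sum_le_sum_of_subset hsub (f := fun t => ν.rowLen t - μ.rowLen t)
        rw [Finset.sum_insert (by rw [Finset.mem_singleton]; exact fun hh => hne hh.symm),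
          Finset.sum_singleton] at this
        have hbeta : ∑ x ∈ Finset.range N, (fun t => ν.rowLen t - μ.rowLen t) x = 1 := hsum1
        have := hmono j
        omega
      · have h1 : ν.rowLen j = 0 := rowLen_eq_zero (le_trans hNν hjN)
        have := hmono j
        omega
  refine ⟨i, ?_, hdelta⟩
  have h1 := hdelta i
  have h2 := hdelta (i+1)
  rw [if_pos rfl] at h1
  rw [if_neg (by omega)] at h2
  have h3 := hmono (i+1)
  have h4 : μ.rowLen (i+1) ≤ μ.rowLen i := μ.rowLen_anti i (i+1) (by omega)
  unfold Rm
  omega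

lemma addCell_iff_delC {μ ν : YoungDiagram} :
    AddCell μ ν ↔ ∃ i ∈ rmF ν, μ = delC ν i := by
  constructor
  · intro h
    obtain ⟨i, hrm, hdelta⟩ := rowLen_sub_delta h
    refine ⟨i, mem_rmF.2 hrm, ?_⟩
    apply ext_rowLen
    intro j
    rw [rowLen_delC hrm]
    have := hdelta j
    rcases eq_or_ne j i with rfl | hne
    · rw [if_pos rfl] at *
      omega
    · rw [if_neg hne] at *
      omega
  · rintro ⟨i, hi, rfl⟩
    exact addCell_delC (mem_rmF.1 hi)

lemma addCell_iff_addC {μ ν : YoungDiagram} :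
    AddCell μ ν ↔ ∃ i ∈ adF μ, ν = addC μ i := by
  constructor
  · intro h
    obtain ⟨i, hrm, hdelta⟩ := rowLen_sub_delta h
    have had : Ad μ i := by
      rw [Ad_iff]
      rcases Nat.eq_zero_or_pos i with rfl | hpos
      · left; rfl
      · right
        refine ⟨hpos, ?_⟩
        have h1 := hdelta i
        have h2 := hdelta (i-1)
        rw [if_pos rfl] at h1
        rw [if_neg (by omega)] at h2
        have h3 : ν.rowLen i ≤ ν.rowLen (i-1) := ν.rowLen_anti (i-1) i (by omega)
        omega
    refine ⟨i, mem_adF.2 had, ?_⟩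
    apply ext_rowLen
    intro j
    rw [rowLen_addC had]
    have := hdelta j
    rcases eq_or_ne j i with rfl | hne
    · rw [if_pos rfl] at *; omega
    · rw [if_neg hne] at *; omega
  · rintro ⟨i, hi, rfl⟩
    exact addCell_addC (mem_adF.1 hi)

lemma addC_injOn {μ : YoungDiagram} {i j : ℕ} (hi : Ad μ i) (hj : Ad μ j)
    (h : addC μ i = addC μ j) : i = j := by
  by_contra hne
  have h1 := rowLen_addC hi i
  have h2 := rowLen_addC hj i
  rw [if_pos rfl] at h1
  rw [if_neg hne] at h2
  rw [h] at h1
  omega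

lemma delC_injOn {μ : YoungDiagram} {i j : ℕ} (hi : Rm μ i) (hj : Rm μ j)
    (h : delC μ i = delC μ j) : i = j := by
  by_contra hne
  have h1 := rowLen_delC hi i
  have h2 := rowLen_delC hj i
  rw [if_pos rfl] at h1
  rw [if_neg hne] at h2
  rw [h] at h1
  have := Rm_rowLen_pos hi
  omega

lemma delC_addC {μ : YoungDiagram} {i : ℕ} (h : Ad μ i) :
    Rm (addC μ i) i ∧ delC (addC μ i) i = μ := by
  have hr : Rm (addC μ i) i := by
    unfold Rm
    rw [rowLen_addC h i, rowLen_addC h (i+1), if_pos rfl, if_neg (by omega)]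
    have := μ.rowLen_anti i (i+1) (by omega)
    omega
  refine ⟨hr, ext_rowLen fun j => ?_⟩
  rw [rowLen_delC hr j, rowLen_addC h i, rowLen_addC h j]
  rcases eq_or_ne j i with rfl | hne
  · rw [if_pos rfl, if_pos rfl]; omega
  · rw [if_neg hne, if_neg hne]

lemma addC_delC {μ : YoungDiagram} {i : ℕ} (h : Rm μ i) :
    Ad (delC μ i) i ∧ addC (delC μ i) i = μ := by
  have hpos := Rm_rowLen_pos h
  have ha : Ad (delC μ i) i := by
    rw [Ad_iff]
    rcases Nat.eq_zero_or_pos i with rfl | hip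
    · left; rfl
    · right
      refine ⟨hip, ?_⟩
      rw [rowLen_delC h i, rowLen_delC h (i-1), if_pos rfl, if_neg (by omega)]
      have := μ.rowLen_anti (i-1) i (by omega)
      have h2 : μ.rowLen i ≤ μ.rowLen (i-1) := μ.rowLen_anti (i-1) i (by omega)
      omega
  refine ⟨ha, ext_rowLen fun j => ?_⟩
  rw [rowLen_addC ha j]
  rcases eq_or_ne j i with rfl | hne
  · rw [if_pos rfl, rowLen_delC h j, if_pos rfl]; omega
  · rw [if_neg hne, rowLen_delC h j, if_neg hne]

end VT

namespace VT

lemma card_adF (μ : YoungDiagram) : (adF μ).card = (rmF μ).card + 1 := by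
  have hset : adF μ = insert 0 ((rmF μ).image (· + 1)) := by
    ext i
    rw [mem_adF, Finset.mem_insert, Finset.mem_image]
    cases i with
    | zero => simp [Ad_zero]
    | succ i =>
      rw [Ad_succ_iff]
      constructor
      · intro h; right; exact ⟨i, mem_rmF.2 h, rfl⟩
      · rintro (h | ⟨j, hj, hji⟩)
        · exact absurd h (by omega)
        · have : j = i := by omega
          subst this
          exact mem_rmF.1 hj
  rw [hset, Finset.card_insert_of_notMem, Finset.card_image_of_injective]
  · exact fun a b => by omega
  · rw [Finset.mem_image]
    rintro ⟨j, -, hj⟩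
    omega

lemma swap_lemma₁ {μ : YoungDiagram} {i j : ℕ} (hne : j ≠ i) (hi : Ad μ i)
    (hj : Rm (addC μ i) j) :
    Rm μ j ∧ Ad (delC μ j) i := by
  have hj' : (if j + 1 = i then μ.rowLen i + 1 else μ.rowLen (j+1)) < μ.rowLen j := by
    have h0 := hj
    unfold Rm at h0
    rwa [rowLen_addC hi (j+1), rowLen_addC hi j, if_neg hne] at h0
  have hanti : μ.rowLen (j+1) ≤ μ.rowLen j := μ.rowLen_anti j (j+1) (by omega)
  have hrm : Rm μ j := by
    unfold Rm
    rcases eq_or_ne (j+1) i with he | he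
    · rw [if_pos he] at hj'
      have : μ.rowLen (j+1) = μ.rowLen i := by rw [he]
      omega
    · rwa [if_neg he] at hj'
  refine ⟨hrm, ?_⟩
  rw [Ad_iff]
  rcases Nat.eq_zero_or_pos i with he0 | hip
  · left; exact he0
  · right
    refine ⟨hip, ?_⟩
    rw [rowLen_delC hrm i, if_neg hne.symm, rowLen_delC hrm (i-1)]
    rcases eq_or_ne (i-1) j with he | he
    · rw [if_pos he]
      have hji : j + 1 = i := by omega
      rw [if_pos hji] at hj'
      omega
    · rw [if_neg he]
      rw [Ad_iff] at hi
      rcases hi with he0 | ⟨-, hlt⟩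
      · omega
      · exact hlt

lemma swap_lemma₂ {μ : YoungDiagram} {i j : ℕ} (hne : j ≠ i) (hj : Rm μ j)
    (hi : Ad (delC μ j) i) :
    Ad μ i ∧ Rm (addC μ i) j := by
  have hpos := Rm_rowLen_pos hj
  have had : Ad μ i := by
    rw [Ad_iff] at hi ⊢
    rcases hi with rfl | ⟨hip, hlt⟩
    · left; rfl
    · right
      refine ⟨hip, ?_⟩
      rw [rowLen_delC hj i, if_neg hne.symm, rowLen_delC hj (i-1)] at hlt
      rcases eq_or_ne (i-1) j with he | he
      · rw [if_pos he] at hlt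
        have : μ.rowLen (i-1) = μ.rowLen j := by rw [he]
        omega
      · rwa [if_neg he] at hlt
  refine ⟨had, ?_⟩
  unfold Rm
  rw [rowLen_addC had j, if_neg hne, rowLen_addC had (j+1)]
  rcases eq_or_ne (j+1) i with he | he
  · rw [if_pos he]
    -- j = i - 1; use hi's inequality
    rw [Ad_iff] at hi
    rcases hi with he0 | ⟨hip, hlt⟩
    · omega
    · rw [rowLen_delC hj i, if_neg hne.symm, rowLen_delC hj (i-1)] at hlt
      have hij : i - 1 = j := by omega
      rw [if_pos hij] at hlt
      have h2 : μ.rowLen (i-1) = μ.rowLen j := by rw [hij]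
      have h3 : μ.rowLen (j+1) = μ.rowLen i := by rw [he]
      omega
  · rw [if_neg he]
    exact hj

lemma swap_eq {μ : YoungDiagram} {i j : ℕ} (hne : j ≠ i) (hi : Ad μ i)
    (hj : Rm (addC μ i) j) (hj' : Rm μ j) (hi' : Ad (delC μ j) i) :
    delC (addC μ i) j = addC (delC μ j) i := by
  apply ext_rowLen
  intro t
  rw [rowLen_delC hj t, rowLen_addC hi' t]
  rcases eq_or_ne t j with rfl | htj
  · rw [if_pos rfl, if_neg hne, rowLen_addC hi t, if_neg hne, rowLen_delC hj' t, if_pos rfl]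
  · rw [if_neg htj, rowLen_addC hi t, rowLen_delC hj' t, if_neg htj]
    rcases eq_or_ne t i with rfl | hti
    · rw [if_pos rfl, if_pos rfl, rowLen_delC hj' t, if_neg (fun hh => hne hh.symm)]
    · rw [if_neg hti, if_neg hti]

end VT

namespace VT

/-- "Up" operator on counting functions: sum over lower covers. -/
def Uop (v : YoungDiagram → ℕ) (lam : YoungDiagram) : ℕ := ∑ i ∈ rmF lam, v (delC lam i)

/-- "Down" operator on counting functions: sum over upper covers. -/
def Dop (v : YoungDiagram → ℕ) (μ : YoungDiagram) : ℕ := ∑ i ∈ adF μ, v (addC μ i)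

lemma key_comm (v : YoungDiagram → ℕ) (μ : YoungDiagram) :
    Dop (Uop v) μ = Uop (Dop v) μ + v μ := by
  unfold Dop Uop
  have hL : ∀ i ∈ adF μ, ∑ j ∈ rmF (addC μ i), v (delC (addC μ i) j)
      = v μ + ∑ j ∈ (rmF (addC μ i)).erase i, v (delC (addC μ i) j) := by
    intro i hi
    have had := mem_adF.1 hi
    have h1 := delC_addC had
    rw [← Finset.add_sum_erase _ _ (mem_rmF.2 h1.1), h1.2]
  have hR : ∀ i ∈ rmF μ, ∑ j ∈ adF (delC μ i), v (addC (delC μ i) j)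
      = v μ + ∑ j ∈ (adF (delC μ i)).erase i, v (addC (delC μ i) j) := by
    intro i hi
    have hrm := mem_rmF.1 hi
    have h1 := addC_delC hrm
    rw [← Finset.add_sum_erase _ _ (mem_adF.2 h1.1), h1.2]
  rw [Finset.sum_congr rfl hL, Finset.sum_congr rfl hR, Finset.sum_add_distrib,
    Finset.sum_add_distrib, Finset.sum_const, Finset.sum_const, smul_eq_mul, smul_eq_mul,
    card_adF]
  have hoff : ∑ i ∈ adF μ, ∑ j ∈ (rmF (addC μ i)).erase i, v (delC (addC μ i) j)
      = ∑ i ∈ rmF μ, ∑ j ∈ (adF (delC μ i)).erase i, v (addC (delC μ i) j) := by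
    rw [Finset.sum_sigma', Finset.sum_sigma']
    apply Finset.sum_nbij' (fun p => ⟨p.2, p.1⟩) (fun p => ⟨p.2, p.1⟩)
    · rintro ⟨a, b⟩ hm
      rw [Finset.mem_sigma, Finset.mem_erase] at hm ⊢
      obtain ⟨ha, hbne, hb⟩ := hm
      have := swap_lemma₁ hbne (mem_adF.1 ha) (mem_rmF.1 hb)
      exact ⟨mem_rmF.2 this.1, fun hh => hbne hh.symm, mem_adF.2 this.2⟩
    · rintro ⟨a, b⟩ hm
      rw [Finset.mem_sigma, Finset.mem_erase] at hm ⊢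
      obtain ⟨ha, hbne, hb⟩ := hm
      have := swap_lemma₂ hbne.symm (mem_rmF.1 ha) (mem_adF.1 hb)
      exact ⟨mem_adF.2 this.1, fun hh => hbne hh.symm, mem_rmF.2 this.2⟩
    · rintro ⟨a, b⟩ _; rfl
    · rintro ⟨a, b⟩ _; rfl
    · rintro ⟨a, b⟩ hm
      rw [Finset.mem_sigma, Finset.mem_erase] at hm
      obtain ⟨ha, hbne, hb⟩ := hm
      have h1 := swap_lemma₁ hbne (mem_adF.1 ha) (mem_rmF.1 hb)
      rw [swap_eq hbne (mem_adF.1 ha) (mem_rmF.1 hb) h1.1 h1.2]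
  rw [hoff]
  ring

end VT

namespace VT

lemma Uop_add (a b : YoungDiagram → ℕ) :
    Uop (fun x => a x + b x) = fun x => Uop a x + Uop b x := by
  funext x; exact Finset.sum_add_distrib

lemma Uop_mul (c : ℕ) (a : YoungDiagram → ℕ) :
    Uop (fun x => c * a x) = fun x => c * Uop a x := by
  funext x; exact (Finset.mul_sum _ _ _).symm

lemma Uop_zero : Uop (fun _ => 0) = fun _ => 0 := by
  funext x; exact Finset.sum_const_zero

lemma Uop_iter_add (m : ℕ) (a b : YoungDiagram → ℕ) :
    Uop^[m] (fun x => a x + b x) = fun x => Uop^[m] a x + Uop^[m] b x := by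
  induction m generalizing a b with
  | zero => rfl
  | succ m ih =>
    rw [Function.iterate_succ_apply, Function.iterate_succ_apply,
      Function.iterate_succ_apply, Uop_add, ih]

lemma Uop_iter_mul (m : ℕ) (c : ℕ) (a : YoungDiagram → ℕ) :
    Uop^[m] (fun x => c * a x) = fun x => c * Uop^[m] a x := by
  induction m generalizing a with
  | zero => rfl
  | succ m ih =>
    rw [Function.iterate_succ_apply, Function.iterate_succ_apply, Uop_mul, ih]

lemma Uop_iter_zero (m : ℕ) : Uop^[m] (fun _ => 0) = fun _ => 0 := by
  induction m with
  | zero => rfl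
  | succ m ih => rw [Function.iterate_succ_apply, Uop_zero, ih]

lemma comm_iter (j : ℕ) (v : YoungDiagram → ℕ) :
    Dop (Uop^[j+1] v) = fun μ => Uop^[j+1] (Dop v) μ + (j+1) * Uop^[j] v μ := by
  induction j generalizing v with
  | zero =>
    funext μ
    simpa using key_comm v μ
  | succ j ih =>
    funext μ
    rw [Function.iterate_succ_apply, ih (Uop v)]
    have h1 : Dop (Uop v) = fun x => Uop (Dop v) x + v x := by
      funext x; exact key_comm v x
    rw [h1, Uop_iter_add]
    have h2 : Uop^[j+1] (Uop (Dop v)) = Uop^[j+1+1] (Dop v) :=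
      (Function.iterate_succ_apply Uop (j+1) (Dop v)).symm
    have h3 : Uop^[j] (Uop v) = Uop^[j+1] v :=
      (Function.iterate_succ_apply Uop j v).symm
    rw [h2, h3]
    ring

instance : DecidableEq YoungDiagram :=
  fun μ ν => decidable_of_iff (μ.cells = ν.cells) ⟨YoungDiagram.ext, fun h => by rw [h]⟩

/-- Indicator function of a Young diagram. -/
def dd (b : YoungDiagram) : YoungDiagram → ℕ := fun x => if x = b then 1 else 0

/-- `U^j D^j` applied to the indicator of `rowD n`. -/
def cf (n j : ℕ) : YoungDiagram → ℕ := Uop^[j] (Dop^[j] (dd (rowD n)))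


lemma UD_cf (n j : ℕ) :
    Uop (Dop (cf n j)) = fun μ => cf n (j+1) μ + j * cf n j μ := by
  cases j with
  | zero =>
    funext μ
    simp only [zero_mul, add_zero]
    rfl
  | succ j =>
    set w := Dop^[j+1] (dd (rowD n)) with hw
    have hgoal : Uop (Dop (Uop^[j+1] w)) = fun μ => cf n (j+1+1) μ + (j+1) * cf n (j+1) μ := by
      rw [comm_iter j w]
      have e1 := Uop_add (Uop^[j+1] (Dop w)) (fun x => (j+1) * Uop^[j] w x)
      rw [e1]
      have e2 := Uop_mul (j+1) (Uop^[j] w)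
      rw [e2]
      funext μ
      have h2 : Uop (Uop^[j+1] (Dop w)) = Uop^[j+1+1] (Dop w) :=
        (Function.iterate_succ_apply' Uop (j+1) (Dop w)).symm
      have h3 : Uop (Uop^[j] w) = Uop^[j+1] w :=
        (Function.iterate_succ_apply' Uop j w).symm
      have h4 : Dop w = Dop^[j+1+1] (dd (rowD n)) := by
        rw [hw, ← Function.iterate_succ_apply' Dop (j+1)]
      rw [h2, h3, h4]
      rfl
    exact hgoal

/-- Abstract Stirling numbers of the second kind. -/
def T : ℕ → ℕ → ℕ
  | 0, 0 => 1
  | 0, _ + 1 => 0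
  | _ + 1, 0 => 0
  | k + 1, l + 1 => (l + 1) * T k (l + 1) + T k l

lemma T_zero_right : ∀ k, T (k+1) 0 = 0 := fun _ => rfl

lemma T_eq_zero_of_lt : ∀ k j, k < j → T k j = 0 := by
  intro k
  induction k with
  | zero => intro j hj; cases j with
    | zero => omega
    | succ j => rfl
  | succ k ih =>
    intro j hj
    cases j with
    | zero => omega
    | succ j =>
      show (j + 1) * T k (j+1) + T k j = 0
      rw [ih (j+1) (by omega), ih j (by omega)]
      ring

/-- The walk-counting functions. -/
def Vf (n : ℕ) : ℕ → (YoungDiagram → ℕ)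
  | 0 => dd (rowD n)
  | k + 1 => Uop (Dop (Vf n k))

lemma Vf_eq_sum (n k : ℕ) :
    Vf n k = fun μ => ∑ j ∈ Finset.range (k+1), T k j * cf n j μ := by
  induction k with
  | zero =>
    funext μ
    rw [Finset.sum_range_one]
    show dd (rowD n) μ = 1 * cf n 0 μ
    rw [one_mul]
    rfl
  | succ k ih =>
    funext μ
    show Uop (Dop (Vf n k)) μ = _
    rw [ih]
    -- push Dop and Uop through the finite sum
    have hD : ∀ x, Dop (fun ν => ∑ j ∈ Finset.range (k+1), T k j * cf n j ν) x
        = ∑ j ∈ Finset.range (k+1), T k j * Dop (cf n j) x := by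
      intro x
      unfold Dop
      rw [Finset.sum_comm]
      exact Finset.sum_congr rfl fun j _ => (Finset.mul_sum _ _ _).symm
    have hU : Uop (Dop (fun ν => ∑ j ∈ Finset.range (k+1), T k j * cf n j ν)) μ
        = ∑ j ∈ Finset.range (k+1), T k j * Uop (Dop (cf n j)) μ := by
      have hDfun : Dop (fun ν => ∑ j ∈ Finset.range (k+1), T k j * cf n j ν)
          = fun x => ∑ j ∈ Finset.range (k+1), T k j * Dop (cf n j) x := funext hD
      rw [hDfun]
      unfold Uop
      rw [Finset.sum_comm]
      exact Finset.sum_congr rfl fun j _ => (Finset.mul_sum _ _ _).symm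
    rw [hU]
    have hstep : ∀ j, Uop (Dop (cf n j)) μ = cf n (j+1) μ + j * cf n j μ := by
      intro j
      rw [UD_cf n j]
    calc ∑ j ∈ Finset.range (k+1), T k j * Uop (Dop (cf n j)) μ
        = ∑ j ∈ Finset.range (k+1), (T k j * cf n (j+1) μ + (j * T k j) * cf n j μ) := by
          apply Finset.sum_congr rfl
          intro j _
          rw [hstep j]
          ring
      _ = ∑ j ∈ Finset.range (k+1), T k j * cf n (j+1) μ
            + ∑ j ∈ Finset.range (k+1), (j * T k j) * cf n j μ := Finset.sum_add_distrib
      _ = ∑ j ∈ Finset.range (k+2), T (k+1) j * cf n j μ := by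
          -- second sum: drop j = 0 term, reindex
          have hsec : ∑ j ∈ Finset.range (k+1), (j * T k j) * cf n j μ
              = ∑ j ∈ Finset.range (k+1), ((j+1) * T k (j+1)) * cf n (j+1) μ := by
            rw [Finset.sum_range_succ' (fun j => (j * T k j) * cf n j μ) k]
            rw [Finset.sum_range_succ (fun j => ((j+1) * T k (j+1)) * cf n (j+1) μ) k]
            rw [T_eq_zero_of_lt k (k+1) (by omega)]
            simp
          rw [hsec, ← Finset.sum_add_distrib]
          rw [Finset.sum_range_succ' (fun j => T (k+1) j * cf n j μ) (k+1)]
          have h0 : T (k+1) 0 * cf n 0 μ = 0 := by rw [T_zero_right]; ring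
          rw [h0, add_zero]
          apply Finset.sum_congr rfl
          intro j _
          show T k j * cf n (j+1) μ + ((j+1) * T k (j+1)) * cf n (j+1) μ
              = T (k+1) (j+1) * cf n (j+1) μ
          have : T (k+1) (j+1) = (j+1) * T k (j+1) + T k j := rfl
          rw [this]
          ring

end VT

namespace VT

lemma mem_rowD {n a b : ℕ} : (a, b) ∈ rowD n ↔ a = 0 ∧ b < n := by
  rw [rowD, mem_ofRowLens]
  constructor
  · rintro ⟨h1, h2⟩
    simp only [List.length_singleton] at h1
    refine ⟨by omega, ?_⟩
    simpa using h2
  · rintro ⟨rfl, h2⟩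
    exact ⟨by simp, by simpa using h2⟩

lemma rowLen_rowD (n i : ℕ) : (rowD n).rowLen i = if i = 0 then n else 0 := by
  apply rowLen_eq
  intro j
  rw [mem_rowD]
  rcases eq_or_ne i 0 with rfl | hne
  · simp
  · simp [hne]

lemma colLen0_rowD_le_one (n : ℕ) : (rowD n).colLen 0 ≤ 1 := by
  by_contra hc
  push_neg at hc
  have : (1, 0) ∈ rowD n := by rw [YoungDiagram.mem_iff_lt_colLen]; omega
  rw [mem_rowD] at this
  omega

lemma card_rowD (n : ℕ) : (rowD n).card = n := by
  rw [card_eq_sum_rowLens (rowD n) (colLen0_rowD_le_one n), Finset.sum_range_one,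
    rowLen_rowD, if_pos rfl]

lemma eq_rowD_of_le {μ : YoungDiagram} {n : ℕ} (h : μ ≤ rowD n) : μ = rowD μ.card := by
  have hr := le_iff_rowLen.1 h
  have hcol : μ.colLen 0 ≤ 1 := by
    by_contra hc
    push_neg at hc
    have h1 : (1, 0) ∈ μ := by rw [YoungDiagram.mem_iff_lt_colLen]; omega
    have h2 : (1, 0) ∈ rowD n := YoungDiagram.cells_subset_iff.2 h h1
    rw [mem_rowD] at h2
    omega
  have hcard : μ.card = μ.rowLen 0 := by
    rw [card_eq_sum_rowLens μ hcol, Finset.sum_range_one]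
  apply ext_rowLen
  intro i
  rw [rowLen_rowD]
  rcases eq_or_ne i 0 with rfl | hne
  · rw [if_pos rfl]; omega
  · rw [if_neg hne]
    have := hr i
    rw [rowLen_rowD, if_neg hne] at this
    omega

lemma cover_rowD {ν : YoungDiagram} {m : ℕ} :
    AddCell ν (rowD m) ↔ 1 ≤ m ∧ ν = rowD (m-1) := by
  constructor
  · rintro ⟨hle, hcard⟩
    rw [card_rowD] at hcard
    have h1 : ν = rowD ν.card := eq_rowD_of_le hle
    constructor
    · omega
    · rw [h1]
      congr 1
      omega
  · rintro ⟨hm, rfl⟩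
    constructor
    · rw [le_iff_rowLen]
      intro i
      rw [rowLen_rowD, rowLen_rowD]
      split <;> omega
    · rw [card_rowD, card_rowD]
      omega

lemma Uop_rowD (v : YoungDiagram → ℕ) {m : ℕ} (hm : 1 ≤ m) :
    Uop v (rowD m) = v (rowD (m-1)) := by
  unfold Uop
  have hset : rmF (rowD m) = {0} := by
    ext i
    rw [mem_rmF, Finset.mem_singleton]
    unfold Rm
    rw [rowLen_rowD, rowLen_rowD, if_neg (by omega : ¬ i + 1 = 0)]
    constructor
    · intro h
      by_contra hne
      rw [if_neg hne] at h
      omega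
    · rintro rfl
      rw [if_pos rfl]
      omega
  rw [hset, Finset.sum_singleton]
  congr 1
  have hrm : Rm (rowD m) 0 := by
    unfold Rm
    rw [rowLen_rowD, rowLen_rowD]
    simp
    omega
  apply ext_rowLen
  intro j
  rw [rowLen_delC hrm]
  rcases eq_or_ne j 0 with rfl | hne
  · rw [if_pos rfl, rowLen_rowD, rowLen_rowD, if_pos rfl, if_pos rfl]
  · rw [if_neg hne, rowLen_rowD, rowLen_rowD, if_neg hne, if_neg hne]

lemma Uop_iter_rowD (v : YoungDiagram → ℕ) {j m : ℕ} (hj : j ≤ m) :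
    Uop^[j] v (rowD m) = v (rowD (m - j)) := by
  induction j generalizing m v with
  | zero => simp
  | succ j ih =>
    rw [Function.iterate_succ_apply']
    rw [Uop_rowD _ (by omega : 1 ≤ m)]
    have := ih (v := v) (m := m - 1) (by omega)
    rw [this]
    congr 2
    omega

lemma Dop_dd_rowD {m : ℕ} (hm : 1 ≤ m) :
    Dop (dd (rowD m)) = dd (rowD (m-1)) := by
  funext μ
  unfold Dop dd
  rcases eq_or_ne μ (rowD (m-1)) with rfl | hne
  · rw [if_pos rfl]
    have hadd : AddCell (rowD (m-1)) (rowD m) := cover_rowD.2 ⟨hm, rfl⟩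
    obtain ⟨i0, hi0, heq⟩ := addCell_iff_addC.1 hadd
    have hcong : ∀ i ∈ adF (rowD (m-1)),
        (if addC (rowD (m-1)) i = rowD m then 1 else 0) = if i = i0 then 1 else 0 := by
      intro i hi
      by_cases hii : i = i0
      · subst hii
        rw [if_pos rfl, if_pos heq.symm]
      · rw [if_neg hii, if_neg]
        intro hc
        exact hii (addC_injOn (mem_adF.1 hi) (mem_adF.1 hi0) (by rw [hc, heq]))
    rw [Finset.sum_congr rfl hcong, Finset.sum_ite_eq' (adF (rowD (m-1))) i0 (fun _ => 1),
      if_pos hi0]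
  · rw [if_neg hne]
    apply Finset.sum_eq_zero
    intro i hi
    rw [if_neg]
    intro hc
    have : AddCell μ (rowD m) := hc ▸ addCell_addC (mem_adF.1 hi)
    have := cover_rowD.1 this
    exact hne this.2

end VT

namespace VT

lemma Dop_zero : Dop (fun _ => 0) = fun _ => 0 := by
  funext x; exact Finset.sum_const_zero

lemma Dop_iter_zero (m : ℕ) : Dop^[m] (fun _ => 0) = fun _ => 0 := by
  induction m with
  | zero => rfl
  | succ m ih => rw [Function.iterate_succ_apply, Dop_zero, ih]

lemma Dop_iter_dd (n : ℕ) : ∀ j, j ≤ n → Dop^[j] (dd (rowD n)) = dd (rowD (n - j)) := by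
  intro j
  induction j with
  | zero => intro _; simp
  | succ j ih =>
    intro hj
    rw [Function.iterate_succ_apply', ih (by omega), Dop_dd_rowD (m := n - j) (by omega)]
    have : n - j - 1 = n - (j + 1) := by omega
    rw [this]

lemma Dop_dd_bot : Dop (dd (rowD 0)) = fun _ => 0 := by
  funext μ
  unfold Dop dd
  apply Finset.sum_eq_zero
  intro i hi
  rw [if_neg]
  intro hc
  have h1 : AddCell μ (rowD 0) := hc ▸ addCell_addC (mem_adF.1 hi)
  have h2 := cover_rowD.1 h1
  omega

lemma cf_rowD (n j : ℕ) : cf n j (rowD n) = if j ≤ n then 1 else 0 := by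
  unfold cf
  by_cases hj : j ≤ n
  · rw [if_pos hj, Uop_iter_rowD _ hj, Dop_iter_dd n j hj]
    unfold dd
    rw [if_pos rfl]
  · rw [if_neg hj]
    obtain ⟨m, rfl⟩ : ∃ m, j = m + (n + 1) := ⟨j - (n+1), by omega⟩
    have h1 : Dop^[n+1] (dd (rowD n)) = fun _ => 0 := by
      rw [Function.iterate_succ_apply', Dop_iter_dd n n le_rfl, Nat.sub_self, Dop_dd_bot]
    have h2 : Dop^[m + (n+1)] (dd (rowD n)) = fun _ => 0 := by
      rw [Function.iterate_add_apply, h1, Dop_iter_zero]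
    rw [h2, Uop_iter_zero]

lemma Vf_rowD (n k : ℕ) :
    Vf n k (rowD n) = ∑ j ∈ Finset.range (k+1), T k j * (if j ≤ n then 1 else 0) := by
  rw [Vf_eq_sum]
  exact Finset.sum_congr rfl fun j _ => by rw [cf_rowD]

lemma sum_T_eq (n k : ℕ) (hk : 1 ≤ k) :
    ∑ j ∈ Finset.range (k+1), T k j * (if j ≤ n then 1 else 0)
      = ∑ l ∈ Finset.Icc 1 n, T k l := by
  have hTk0 : T k 0 = 0 := by
    obtain ⟨k', rfl⟩ : ∃ k', k = k' + 1 := ⟨k - 1, by omega⟩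
    rfl
  set M := k + n + 2 with hM
  have hLHS : ∑ j ∈ Finset.range (k+1), T k j * (if j ≤ n then 1 else 0)
      = ∑ j ∈ Finset.range M, (if j ≤ n then T k j else 0) := by
    rw [Finset.sum_subset (Finset.range_subset_range.2 (by omega : k + 1 ≤ M))]
    · exact Finset.sum_congr rfl fun j _ => by split <;> ring
    · intro j _ hj
      rw [Finset.mem_range, not_lt] at hj
      rw [T_eq_zero_of_lt k j (by omega)]
      ring
  have hRHS : ∑ j ∈ Finset.range M, (if j ≤ n then T k j else 0)
      = ∑ l ∈ Finset.Icc 1 n, T k l := by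
    rw [← Finset.sum_subset (Finset.range_subset_range.2 (by omega : n + 1 ≤ M))
      (by intro j _ hj; rw [Finset.mem_range, not_lt] at hj; rw [if_neg (by omega)])]
    have : ∑ j ∈ Finset.range (n+1), (if j ≤ n then T k j else 0)
        = ∑ j ∈ Finset.range (n+1), T k j := by
      apply Finset.sum_congr rfl
      intro j hj
      rw [Finset.mem_range] at hj
      rw [if_pos (by omega)]
    rw [this, Finset.sum_range_succ']
    have himg : Finset.Icc 1 n = (Finset.range n).image (· + 1) := by
      ext l
      rw [Finset.mem_Icc, Finset.mem_image]
      constructor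
      · intro h; exact ⟨l - 1, by rw [Finset.mem_range]; omega, by omega⟩
      · rintro ⟨i, hi, rfl⟩; rw [Finset.mem_range] at hi; omega
    rw [himg, Finset.sum_image (fun a _ b _ h => by omega)]
    rw [hTk0, add_zero]
  rw [hLHS, hRHS]

end VT

namespace VT

lemma ncard_biUnion {ι α : Type*} (S : Finset ι) (A : ι → Set α)
    (hfin : ∀ i ∈ S, (A i).Finite)
    (hdisj : ∀ i ∈ S, ∀ j ∈ S, i ≠ j → Disjoint (A i) (A j)) :
    (⋃ i ∈ S, A i).ncard = ∑ i ∈ S, (A i).ncard := by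
  classical
  induction S using Finset.induction_on with
  | empty => simp
  | @insert a s ha ih =>
    rw [Finset.set_biUnion_insert, Finset.sum_insert ha,
      Set.ncard_union_eq ?dis ?f1 ?f2]
    · rw [ih (fun i hi => hfin i (Finset.mem_insert_of_mem hi))
        (fun i hi j hj hij =>
          hdisj i (Finset.mem_insert_of_mem hi) j (Finset.mem_insert_of_mem hj) hij)]
    case dis =>
      rw [Set.disjoint_iUnion₂_right]
      intro i hi
      exact hdisj a (Finset.mem_insert_self a s) i (Finset.mem_insert_of_mem hi)
        (fun hh => ha (hh ▸ hi))
    case f1 => exact hfin a (Finset.mem_insert_self a s)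
    case f2 =>
      apply Set.Finite.biUnion (s.finite_toSet)
      exact fun i hi => hfin i (Finset.mem_insert_of_mem hi)

lemma vacTabs_zero (lam mu : YoungDiagram) :
    vacTabs 0 lam mu = (if lam = mu then {fun _ => mu} else (∅ : Set (ℕ → YoungDiagram))) := by
  ext f
  unfold vacTabs
  simp only [Set.mem_setOf_eq]
  constructor
  · rintro ⟨h0, hconst, -⟩
    have hf : f = fun _ => mu := funext fun j => hconst j (by omega)
    have hlm : lam = mu := by rw [← h0, hf]
    rw [if_pos hlm, hf]
    exact Set.mem_singleton _
  · intro hf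
    by_cases h : lam = mu
    · rw [if_pos h, Set.mem_singleton_iff] at hf
      subst hf
      exact ⟨h.symm, fun j _ => rfl, fun i hi => absurd hi (by omega)⟩
    · rw [if_neg h] at hf
      exact absurd hf (Set.notMem_empty f)

lemma vacTabs_bridge (n : ℕ) : ∀ (k : ℕ) (mu : YoungDiagram),
    (vacTabs k (rowD n) mu).Finite ∧ (vacTabs k (rowD n) mu).ncard = Vf n k mu := by
  intro k
  induction k with
  | zero =>
    intro mu
    rw [vacTabs_zero]
    by_cases h : rowD n = mu
    · rw [if_pos h]
      refine ⟨Set.finite_singleton _, ?_⟩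
      rw [Set.ncard_singleton]
      show (1 : ℕ) = dd (rowD n) mu
      unfold dd
      rw [if_pos h.symm]
    · rw [if_neg h]
      refine ⟨Set.finite_empty, ?_⟩
      rw [Set.ncard_empty]
      show (0 : ℕ) = dd (rowD n) mu
      unfold dd
      rw [if_neg (fun hh => h hh.symm)]
  | succ k ih =>
    intro mu
    set S : Finset ((_ : ℕ) × ℕ) := (rmF mu).sigma (fun i => adF (delC mu i)) with hS
    have hdecomp : vacTabs (k+1) (rowD n) mu = ⋃ p ∈ S,
        (fun f t => if t ≤ 2*k then f t else if t = 2*k+1 then delC mu p.1 else mu) ''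
          vacTabs k (rowD n) (addC (delC mu p.1) p.2) := by
      ext f
      simp only [Set.mem_iUnion, Set.mem_image]
      constructor
      · intro hf
        obtain ⟨h0, hc, hw⟩ := hf
        obtain ⟨hk1, hk2⟩ := hw k (by omega)
        have hmu2 : f (2*k+2) = mu := hc (2*k+2) (by omega)
        rw [hmu2] at hk2
        obtain ⟨i, hiF, hidel⟩ := addCell_iff_delC.1 hk2
        rw [hidel] at hk1
        obtain ⟨j, hjF, hjadd⟩ := addCell_iff_addC.1 hk1
        refine ⟨⟨i, j⟩, ?_, fun t => f (if t ≤ 2*k then t else 2*k), ?_, ?_⟩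
        · rw [hS, Finset.mem_sigma]
          exact ⟨hiF, hjF⟩
        · refine ⟨?_, ?_, ?_⟩
          · show f (if 0 ≤ 2*k then 0 else 2*k) = rowD n
            rw [if_pos (by omega)]
            exact h0
          · intro t ht
            show f (if t ≤ 2*k then t else 2*k) = addC (delC mu i) j
            by_cases htle : t ≤ 2*k
            · rw [if_pos htle]
              have : t = 2*k := by omega
              rw [this, ← hjadd]
            · rw [if_neg htle, ← hjadd]
          · intro i' hi'
            show AddCell (f (if 2*i'+1 ≤ 2*k then 2*i'+1 else 2*k))
                (f (if 2*i' ≤ 2*k then 2*i' else 2*k)) ∧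
              AddCell (f (if 2*i'+1 ≤ 2*k then 2*i'+1 else 2*k))
                (f (if 2*i'+2 ≤ 2*k then 2*i'+2 else 2*k))
            rw [if_pos (by omega : 2*i'+1 ≤ 2*k), if_pos (by omega : 2*i' ≤ 2*k),
              if_pos (by omega : 2*i'+2 ≤ 2*k)]
            exact hw i' (by omega)
        · funext t
          show (if t ≤ 2*k then f (if t ≤ 2*k then t else 2*k)
              else if t = 2*k+1 then delC mu i else mu) = f t
          by_cases ht : t ≤ 2*k
          · rw [if_pos ht, if_pos ht]
          · rw [if_neg ht]
            by_cases ht2 : t = 2*k+1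
            · rw [if_pos ht2, ht2]
              exact hidel.symm
            · rw [if_neg ht2]
              exact (hc t (by omega)).symm
      · rintro ⟨p, hpS, g, hg, rfl⟩
        rw [hS, Finset.mem_sigma] at hpS
        obtain ⟨hp1, hp2⟩ := hpS
        obtain ⟨hg0, hgc, hgw⟩ := hg
        refine ⟨?_, ?_, ?_⟩
        · show (if 0 ≤ 2*k then g 0 else _) = rowD n
          rw [if_pos (by omega)]
          exact hg0
        · intro t ht
          show (if t ≤ 2*k then g t else if t = 2*k+1 then delC mu p.1 else mu) = mu
          rw [if_neg (by omega), if_neg (by omega)]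
        · intro i' hi'
          rcases Nat.lt_or_ge i' k with hik | hik
          · show AddCell (if 2*i'+1 ≤ 2*k then g (2*i'+1) else _)
                (if 2*i' ≤ 2*k then g (2*i') else _) ∧
              AddCell (if 2*i'+1 ≤ 2*k then g (2*i'+1) else _)
                (if 2*i'+2 ≤ 2*k then g (2*i'+2) else _)
            rw [if_pos (by omega : 2*i'+1 ≤ 2*k), if_pos (by omega : 2*i' ≤ 2*k),
              if_pos (by omega : 2*i'+2 ≤ 2*k)]
            exact hgw i' (by omega)
          · have hik2 : i' = k := by omega
            subst hik2
            show AddCell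
                (if 2*i'+1 ≤ 2*i' then g (2*i'+1) else if 2*i'+1 = 2*i'+1 then delC mu p.1 else mu)
                (if 2*i' ≤ 2*i' then g (2*i') else if 2*i' = 2*i'+1 then delC mu p.1 else mu) ∧
              AddCell
                (if 2*i'+1 ≤ 2*i' then g (2*i'+1) else if 2*i'+1 = 2*i'+1 then delC mu p.1 else mu)
                (if 2*i'+2 ≤ 2*i' then g (2*i'+2) else if 2*i'+2 = 2*i'+1 then delC mu p.1 else mu)
            rw [if_neg (by omega : ¬ 2*i'+1 ≤ 2*i'), if_pos (rfl : 2*i'+1 = 2*i'+1),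
              if_pos (le_refl (2*i')), if_neg (by omega : ¬ 2*i'+2 ≤ 2*i'),
              if_neg (by omega : ¬ 2*i'+2 = 2*i'+1)]
            rw [hgc (2*i') le_rfl]
            exact ⟨addCell_addC (mem_adF.1 hp2), addCell_delC (mem_rmF.1 hp1)⟩
    have hEinj : ∀ p : (_ : ℕ) × ℕ, Set.InjOn
        (fun f t => if t ≤ 2*k then f t else if t = 2*k+1 then delC mu p.1 else mu)
        (vacTabs k (rowD n) (addC (delC mu p.1) p.2)) := by
      intro p f1 hf1 f2 hf2 heq
      funext t
      rcases Nat.lt_or_ge (2*k) t with ht | ht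
      · rw [hf1.2.1 t (by omega), hf2.2.1 t (by omega)]
      · have h3 := congrFun heq t
        simp only at h3
        rwa [if_pos ht, if_pos ht] at h3
    have hfinp : ∀ p ∈ S,
        ((fun f t => if t ≤ 2*k then f t else if t = 2*k+1 then delC mu p.1 else mu) ''
          vacTabs k (rowD n) (addC (delC mu p.1) p.2)).Finite :=
      fun p _ => ((ih _).1).image _
    have hdisj : ∀ p ∈ S, ∀ q ∈ S, p ≠ q → Disjoint
        ((fun f t => if t ≤ 2*k then f t else if t = 2*k+1 then delC mu p.1 else mu) ''
          vacTabs k (rowD n) (addC (delC mu p.1) p.2))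
        ((fun f t => if t ≤ 2*k then f t else if t = 2*k+1 then delC mu q.1 else mu) ''
          vacTabs k (rowD n) (addC (delC mu q.1) q.2)) := by
      rintro ⟨p1, p2⟩ hpS ⟨q1, q2⟩ hqS hpq
      rw [hS, Finset.mem_sigma] at hpS hqS
      rw [Set.disjoint_left]
      rintro x ⟨f1, hf1, rfl⟩ ⟨f2, hf2, heq⟩
      apply hpq
      have h1 : delC mu q1 = delC mu p1 := by
        have h3 := congrFun heq (2*k+1)
        simp only [if_neg (show ¬ (2*k+1 ≤ 2*k) by omega),
          if_pos (show 2*k+1 = 2*k+1 from rfl)] at h3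
        exact h3
      have hfst : q1 = p1 := delC_injOn (mem_rmF.1 hqS.1) (mem_rmF.1 hpS.1) h1
      have h2 : addC (delC mu q1) q2 = addC (delC mu p1) p2 := by
        have h3 := congrFun heq (2*k)
        simp only [if_pos (show 2*k ≤ 2*k from le_rfl)] at h3
        rw [← hf2.2.1 (2*k) le_rfl, ← hf1.2.1 (2*k) le_rfl]
        exact h3
      rw [hfst] at h2
      have hq2' : q2 ∈ adF (delC mu p1) := hfst ▸ hqS.2
      have hsnd : q2 = p2 := addC_injOn (mem_adF.1 hq2') (mem_adF.1 hpS.2) h2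
      rw [hfst, hsnd]
    constructor
    · rw [hdecomp]
      exact Set.Finite.biUnion S.finite_toSet hfinp
    · rw [hdecomp, ncard_biUnion S _ hfinp hdisj]
      have hsum : ∀ p ∈ S,
          ((fun f t => if t ≤ 2*k then f t else if t = 2*k+1 then delC mu p.1 else mu) ''
            vacTabs k (rowD n) (addC (delC mu p.1) p.2)).ncard
          = Vf n k (addC (delC mu p.1) p.2) := by
        intro p _
        rw [Set.ncard_image_of_injOn (hEinj p), (ih _).2]
      rw [Finset.sum_congr rfl hsum]
      show _ = Uop (Dop (Vf n k)) mu
      unfold Uop Dop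
      rw [hS, Finset.sum_sigma]

end VT


namespace VT
open Finset

variable {α β : Type*} [DecidableEq α] [DecidableEq β]

/-- Build a `Finpartition` from parts with the obvious properties. -/
def mkFP (s : Finset α) (parts : Finset (Finset α))
    (hdis : ∀ t ∈ parts, ∀ u ∈ parts, t ≠ u → Disjoint t u)
    (hcov : ∀ x, x ∈ s ↔ ∃ t ∈ parts, x ∈ t)
    (hne : ∀ t ∈ parts, t.Nonempty) : Finpartition s where
  parts := parts
  supIndep := by
    rw [Finset.supIndep_iff_pairwiseDisjoint]
    intro t ht u hu htu
    exact hdis t ht u hu htu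
  sup_parts := by
    ext x
    rw [Finset.mem_sup]
    exact (hcov x).symm
  bot_notMem := by
    intro h
    have := hne ⊥ h
    exact Finset.not_nonempty_empty this

@[simp] lemma mkFP_parts (s : Finset α) (parts) (h1) (h2) (h3) :
    (mkFP s parts h1 h2 h3).parts = parts := rfl

/-- counting partitions with `l` parts -/
noncomputable def Nc (s : Finset α) (l : ℕ) : ℕ :=
  (Finset.univ.filter (fun P : Finpartition s => P.parts.card = l)).card

lemma part_subset {s : Finset α} (P : Finpartition s) {t : Finset α} (ht : t ∈ P.parts) :
    t ⊆ s := P.le ht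

lemma Nc_zero {s : Finset α} (hs : s.Nonempty) (l : ℕ) : Nc s 0 = 0 := by
  rw [Nc, Finset.card_eq_zero, Finset.filter_eq_empty_iff]
  intro P _
  rw [Finset.card_eq_zero, Finpartition.parts_eq_empty_iff]
  intro h
  rw [h] at hs
  exact Finset.not_nonempty_empty hs

/-- Transport of a partition along an embedding. -/
noncomputable def mapFP (e : α ↪ β) {s : Finset α} (P : Finpartition s) :
    Finpartition (s.map e) :=
  mkFP (s.map e) (P.parts.image (fun t => t.map e))
    (by
      intro t' ht' u' hu' hne
      rw [Finset.mem_image] at ht' hu'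
      obtain ⟨t, ht, rfl⟩ := ht'
      obtain ⟨u, hu, rfl⟩ := hu'
      have htu : t ≠ u := fun h => hne (by rw [h])
      rw [Finset.disjoint_map]
      exact P.disjoint ht hu htu)
    (by
      intro y
      rw [Finset.mem_map]
      constructor
      · rintro ⟨x, hx, rfl⟩
        obtain ⟨t, ht, hxt⟩ := P.exists_mem hx
        exact ⟨t.map e, Finset.mem_image_of_mem _ ht, Finset.mem_map_of_mem e hxt⟩
      · rintro ⟨t', ht', hyt⟩
        rw [Finset.mem_image] at ht'
        obtain ⟨t, ht, rfl⟩ := ht'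
        rw [Finset.mem_map] at hyt
        obtain ⟨x, hxt, rfl⟩ := hyt
        exact ⟨x, part_subset P ht hxt, rfl⟩)
    (by
      intro t' ht'
      rw [Finset.mem_image] at ht'
      obtain ⟨t, ht, rfl⟩ := ht'
      exact (P.nonempty_of_mem_parts ht).map)

/-- Pullback of a partition along an embedding. -/
noncomputable def unmapFP (e : α ↪ β) {s : Finset α} (Q : Finpartition (s.map e)) :
    Finpartition s :=
  mkFP s (Q.parts.image (fun t => s.filter (fun x => e x ∈ t)))
    (by
      intro t' ht' u' hu' hne
      rw [Finset.mem_image] at ht' hu'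
      obtain ⟨t, ht, rfl⟩ := ht'
      obtain ⟨u, hu, rfl⟩ := hu'
      have htu : t ≠ u := fun h => hne (by rw [h])
      have hd : Disjoint t u := Q.disjoint ht hu htu
      rw [Finset.disjoint_left] at hd ⊢
      intro x hx1 hx2
      rw [Finset.mem_filter] at hx1 hx2
      exact hd hx1.2 hx2.2)
    (by
      intro x
      constructor
      · intro hx
        have hy : e x ∈ s.map e := Finset.mem_map_of_mem e hx
        obtain ⟨t, ht, hxt⟩ := Q.exists_mem hy
        refine ⟨s.filter (fun x => e x ∈ t), Finset.mem_image_of_mem _ ht, ?_⟩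
        rw [Finset.mem_filter]
        exact ⟨hx, hxt⟩
      · rintro ⟨t', ht', hxt⟩
        rw [Finset.mem_image] at ht'
        obtain ⟨t, ht, rfl⟩ := ht'
        rw [Finset.mem_filter] at hxt
        exact hxt.1)
    (by
      intro t' ht'
      rw [Finset.mem_image] at ht'
      obtain ⟨t, ht, rfl⟩ := ht'
      obtain ⟨y, hyt⟩ := Q.nonempty_of_mem_parts ht
      have hy : y ∈ s.map e := part_subset Q ht hyt
      rw [Finset.mem_map] at hy
      obtain ⟨x, hx, rfl⟩ := hy
      exact ⟨x, by rw [Finset.mem_filter]; exact ⟨hx, hyt⟩⟩)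

lemma filter_map_part (e : α ↪ β) {s : Finset α} (Q : Finpartition (s.map e))
    {t : Finset β} (ht : t ∈ Q.parts) :
    (s.filter (fun x => e x ∈ t)).map e = t := by
  ext y
  rw [Finset.mem_map]
  constructor
  · rintro ⟨x, hx, rfl⟩
    rw [Finset.mem_filter] at hx
    exact hx.2
  · intro hyt
    have hy : y ∈ s.map e := part_subset Q ht hyt
    rw [Finset.mem_map] at hy
    obtain ⟨x, hx, rfl⟩ := hy
    exact ⟨x, by rw [Finset.mem_filter]; exact ⟨hx, hyt⟩, rfl⟩

lemma Nc_map (e : α ↪ β) (s : Finset α) (l : ℕ) : Nc (s.map e) l = Nc s l := by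
  unfold Nc
  apply Finset.card_bij' (fun Q _ => unmapFP e Q) (fun P _ => mapFP e P)
  · intro Q hQ
    rw [Finset.mem_filter] at hQ ⊢
    refine ⟨Finset.mem_univ _, ?_⟩
    show (Q.parts.image (fun t => s.filter (fun x => e x ∈ t))).card = l
    have hinj : Set.InjOn (fun t => s.filter (fun x => e x ∈ t)) (Q.parts : Set (Finset β)) := by
      intro t ht u hu hfe
      rw [← filter_map_part e Q ht, ← filter_map_part e Q hu]
      simp only at hfe
      rw [hfe]
    rw [Finset.card_image_of_injOn hinj, hQ.2]
  · intro P hP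
    rw [Finset.mem_filter] at hP ⊢
    refine ⟨Finset.mem_univ _, ?_⟩
    show (P.parts.image (fun t => t.map e)).card = l
    rw [Finset.card_image_of_injective _ (Finset.map_injective e), hP.2]
  · intro Q _
    apply Finpartition.ext
    show (((unmapFP e Q).parts).image (fun t => t.map e)) = Q.parts
    rw [show (unmapFP e Q).parts = Q.parts.image (fun t => s.filter (fun x => e x ∈ t)) from rfl]
    rw [Finset.image_image]
    have : ∀ t ∈ Q.parts, ((fun t => Finset.map e t) ∘ fun t => s.filter (fun x => e x ∈ t)) t = id t :=
      fun t ht => filter_map_part e Q ht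
    rw [Finset.image_congr (fun t ht => this t ht), Finset.image_id]
  · intro P _
    apply Finpartition.ext
    show (((mapFP e P).parts).image (fun t => s.filter (fun x => e x ∈ t))) = P.parts
    rw [show (mapFP e P).parts = P.parts.image (fun t => t.map e) from rfl]
    rw [Finset.image_image]
    have : ∀ t ∈ P.parts, ((fun t => s.filter (fun x => e x ∈ t)) ∘ fun t => Finset.map e t) t = id t := by
      intro t ht
      show s.filter (fun x => e x ∈ t.map e) = t
      ext x
      rw [Finset.mem_filter]
      constructor
      · rintro ⟨hx, hxt⟩
        rw [Finset.mem_map] at hxt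
        obtain ⟨x', hx't, hex⟩ := hxt
        rwa [← e.injective hex]
      · intro hxt
        exact ⟨part_subset P ht hxt, Finset.mem_map_of_mem e hxt⟩
    rw [Finset.image_congr (fun t ht => this t ht), Finset.image_id]

section Rec
variable {a : α} {s : Finset α}

lemma part_not_a {P : Finpartition (insert a s)} (ha : a ∉ s) {u : Finset α}
    (hu : u ∈ P.parts) (hne : a ∉ u) : u ⊆ s := by
  intro x hx
  have := part_subset P hu hx
  rw [Finset.mem_insert] at this
  rcases this with rfl | h
  · exact absurd hx hne
  · exact h

/-- Add `a` as a singleton part. -/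
noncomputable def addSingle (ha : a ∉ s) (Q : Finpartition s) : Finpartition (insert a s) :=
  mkFP _ (insert {a} Q.parts)
    (by
      intro t ht u hu htu
      rw [Finset.mem_insert] at ht hu
      have hnotmem : ∀ w ∈ Q.parts, a ∉ w := fun w hw hc => ha (part_subset Q hw hc)
      rcases ht with rfl | ht <;> rcases hu with rfl | hu
      · exact absurd rfl htu
      · rw [Finset.disjoint_left]
        intro x hx
        rw [Finset.mem_singleton] at hx
        subst hx
        exact hnotmem u hu
      · rw [Finset.disjoint_right]
        intro x hx
        rw [Finset.mem_singleton] at hx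
        subst hx
        exact hnotmem t ht
      · exact Q.disjoint ht hu htu)
    (by
      intro x
      rw [Finset.mem_insert]
      constructor
      · rintro (rfl | hx)
        · exact ⟨{x}, Finset.mem_insert_self _ _, Finset.mem_singleton_self x⟩
        · obtain ⟨t, ht, hxt⟩ := Q.exists_mem hx
          exact ⟨t, Finset.mem_insert_of_mem ht, hxt⟩
      · rintro ⟨t, ht, hxt⟩
        rw [Finset.mem_insert] at ht
        rcases ht with rfl | ht
        · left; exact Finset.mem_singleton.1 hxt
        · right; exact part_subset Q ht hxt)
    (by
      intro t ht
      rw [Finset.mem_insert] at ht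
      rcases ht with rfl | ht
      · exact ⟨a, Finset.mem_singleton_self a⟩
      · exact Q.nonempty_of_mem_parts ht)

/-- Add `a` into an existing part `t`. -/
noncomputable def addInto (ha : a ∉ s) (Q : Finpartition s) (t : Finset α)
    (ht : t ∈ Q.parts) : Finpartition (insert a s) :=
  mkFP _ (insert (insert a t) (Q.parts.erase t))
    (by
      intro u hu w hw huw
      have hnotmem : ∀ w' ∈ Q.parts, a ∉ w' := fun w' hw' hc => ha (part_subset Q hw' hc)
      rw [Finset.mem_insert] at hu hw
      rcases hu with rfl | hu <;> rcases hw with rfl | hw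
      · exact absurd rfl huw
      · have hw' := Finset.mem_of_mem_erase hw
        have hwt := Finset.ne_of_mem_erase hw
        rw [Finset.disjoint_insert_left]
        exact ⟨hnotmem w hw', Q.disjoint ht hw' (fun hh => hwt hh.symm)⟩
      · have hu' := Finset.mem_of_mem_erase hu
        have hut := Finset.ne_of_mem_erase hu
        rw [Finset.disjoint_insert_right]
        exact ⟨hnotmem u hu', Q.disjoint hu' ht hut⟩
      · exact Q.disjoint (Finset.mem_of_mem_erase hu) (Finset.mem_of_mem_erase hw) huw)
    (by
      intro x
      rw [Finset.mem_insert]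
      constructor
      · rintro (rfl | hx)
        · exact ⟨insert x t, Finset.mem_insert_self _ _, Finset.mem_insert_self _ _⟩
        · obtain ⟨u, hu, hxu⟩ := Q.exists_mem hx
          rcases eq_or_ne u t with rfl | hut
          · exact ⟨insert a u, Finset.mem_insert_self _ _, Finset.mem_insert_of_mem hxu⟩
          · exact ⟨u, Finset.mem_insert_of_mem (Finset.mem_erase.2 ⟨hut, hu⟩), hxu⟩
      · rintro ⟨u, hu, hxu⟩
        rw [Finset.mem_insert] at hu
        rcases hu with rfl | hu
        · rw [Finset.mem_insert] at hxu
          rcases hxu with rfl | hxu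
          · left; rfl
          · right; exact part_subset Q ht hxu
        · right; exact part_subset Q (Finset.mem_of_mem_erase hu) hxu)
    (by
      intro u hu
      rw [Finset.mem_insert] at hu
      rcases hu with rfl | hu
      · exact ⟨a, Finset.mem_insert_self _ _⟩
      · exact Q.nonempty_of_mem_parts (Finset.mem_of_mem_erase hu))

lemma singleton_not_mem_parts (ha : a ∉ s) (Q : Finpartition s) : {a} ∉ Q.parts :=
  fun h => ha (part_subset Q h (Finset.mem_singleton_self a))

/-- Remove the singleton part `{a}`. -/
noncomputable def rmSingle (ha : a ∉ s) (P : Finpartition (insert a s))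
    (h : {a} ∈ P.parts) : Finpartition s :=
  mkFP s (P.parts.erase {a})
    (fun t ht u hu htu => P.disjoint (Finset.mem_of_mem_erase ht) (Finset.mem_of_mem_erase hu) htu)
    (by
      intro x
      constructor
      · intro hx
        obtain ⟨u, hu, hxu⟩ := P.exists_mem (Finset.mem_insert_of_mem hx)
        refine ⟨u, Finset.mem_erase.2 ⟨?_, hu⟩, hxu⟩
        rintro rfl
        rw [Finset.mem_singleton] at hxu
        subst hxu
        exact ha hx
      · rintro ⟨u, hu, hxu⟩
        have hune := Finset.ne_of_mem_erase hu
        have hu' := Finset.mem_of_mem_erase hu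
        have hau : a ∉ u := by
          intro hau
          exact hune (P.eq_of_mem_parts hu' h hau (Finset.mem_singleton_self a))
        exact part_not_a ha hu' hau hxu)
    (fun t ht => P.nonempty_of_mem_parts (Finset.mem_of_mem_erase ht))

lemma part_a_mem (P : Finpartition (insert a s)) : P.part a ∈ P.parts :=
  P.part_mem.2 (Finset.mem_insert_self a s)

lemma a_mem_part_a (P : Finpartition (insert a s)) : a ∈ P.part a :=
  P.mem_part (Finset.mem_insert_self a s)

lemma erase_part_a_ne (ha : a ∉ s) (P : Finpartition (insert a s))
    (h : {a} ∉ P.parts) : ((P.part a).erase a).Nonempty := by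
  have hmem := part_a_mem P
  have hape : P.part a ≠ {a} := fun hh => h (hh ▸ hmem)
  rw [Finset.erase_nonempty (a_mem_part_a P),
    Finset.nontrivial_iff_ne_singleton (a_mem_part_a P)]
  exact hape

lemma erase_part_not_mem (ha : a ∉ s) (P : Finpartition (insert a s))
    (h : {a} ∉ P.parts) : (P.part a).erase a ∉ P.parts.erase (P.part a) := by
  intro hc
  have hc' := Finset.mem_of_mem_erase hc
  have hcne := Finset.ne_of_mem_erase hc
  obtain ⟨x, hx⟩ := erase_part_a_ne ha P h
  have hx1 : x ∈ P.part a := Finset.mem_of_mem_erase hx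
  exact hcne (P.eq_of_mem_parts hc' (part_a_mem P) hx hx1)

/-- Remove `a` from its (non-singleton) part. -/
noncomputable def rmInto (ha : a ∉ s) (P : Finpartition (insert a s))
    (h : {a} ∉ P.parts) : Finpartition s :=
  mkFP s (insert ((P.part a).erase a) (P.parts.erase (P.part a)))
    (by
      intro t ht u hu htu
      rw [Finset.mem_insert] at ht hu
      rcases ht with rfl | ht <;> rcases hu with rfl | hu
      · exact absurd rfl htu
      · exact Finset.disjoint_of_subset_left (Finset.erase_subset _ _)
          (P.disjoint (part_a_mem P) (Finset.mem_of_mem_erase hu)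
            (fun hh => (Finset.ne_of_mem_erase hu) hh.symm))
      · exact Finset.disjoint_of_subset_right (Finset.erase_subset _ _)
          (P.disjoint (Finset.mem_of_mem_erase ht) (part_a_mem P) (Finset.ne_of_mem_erase ht))
      · exact P.disjoint (Finset.mem_of_mem_erase ht) (Finset.mem_of_mem_erase hu) htu)
    (by
      intro x
      constructor
      · intro hx
        have hxa : x ≠ a := fun hh => ha (hh ▸ hx)
        obtain ⟨u, hu, hxu⟩ := P.exists_mem (Finset.mem_insert_of_mem hx)
        rcases eq_or_ne u (P.part a) with rfl | hune
        · exact ⟨_, Finset.mem_insert_self _ _, Finset.mem_erase.2 ⟨hxa, hxu⟩⟩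
        · exact ⟨u, Finset.mem_insert_of_mem (Finset.mem_erase.2 ⟨hune, hu⟩), hxu⟩
      · rintro ⟨u, hu, hxu⟩
        rw [Finset.mem_insert] at hu
        rcases hu with rfl | hu
        · have hx1 : x ∈ P.part a := Finset.mem_of_mem_erase hxu
          have hx2 : x ≠ a := Finset.ne_of_mem_erase hxu
          have := part_subset P (part_a_mem P) hx1
          rw [Finset.mem_insert] at this
          tauto
        · have hu' := Finset.mem_of_mem_erase hu
          have hau : a ∉ u := by
            intro hau
            exact (Finset.ne_of_mem_erase hu)
              (P.eq_of_mem_parts hu' (part_a_mem P) hau (a_mem_part_a P))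
          exact part_not_a ha hu' hau hxu)
    (by
      intro t ht
      rw [Finset.mem_insert] at ht
      rcases ht with rfl | ht
      · exact erase_part_a_ne ha P h
      · exact P.nonempty_of_mem_parts (Finset.mem_of_mem_erase ht))

lemma insertA_not_mem_erase (ha : a ∉ s) (Q : Finpartition s) (t : Finset α) :
    insert a t ∉ Q.parts.erase t :=
  fun hc => ha (part_subset Q (Finset.mem_of_mem_erase hc) (Finset.mem_insert_self a t))

lemma cardA (ha : a ∉ s) (l : ℕ) :
    (Finset.univ.filter (fun P : Finpartition (insert a s) =>
      P.parts.card = l + 1 ∧ {a} ∈ P.parts)).card = Nc s l := by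
  unfold Nc
  refine Finset.card_bij' (fun P hP => rmSingle ha P (Finset.mem_filter.1 hP).2.2)
    (fun Q _ => addSingle ha Q) ?_ ?_ ?_ ?_
  · intro P hP
    obtain ⟨-, hc, hm⟩ := Finset.mem_filter.1 hP
    rw [Finset.mem_filter]
    refine ⟨Finset.mem_univ _, ?_⟩
    show (P.parts.erase {a}).card = l
    rw [Finset.card_erase_of_mem hm, hc]
    omega
  · intro Q hQ
    rw [Finset.mem_filter] at hQ ⊢
    refine ⟨Finset.mem_univ _, ?_, Finset.mem_insert_self _ _⟩
    show (insert {a} Q.parts).card = l + 1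
    rw [Finset.card_insert_of_notMem (singleton_not_mem_parts ha Q), hQ.2]
  · intro P hP
    apply Finpartition.ext
    show insert {a} (P.parts.erase {a}) = P.parts
    exact Finset.insert_erase (Finset.mem_filter.1 hP).2.2
  · intro Q _
    apply Finpartition.ext
    show (insert {a} Q.parts).erase {a} = Q.parts
    exact Finset.erase_insert (singleton_not_mem_parts ha Q)

lemma singleton_not_mem_addInto (ha : a ∉ s) (Q : Finpartition s) (t : Finset α)
    (ht : t ∈ Q.parts) : {a} ∉ (addInto ha Q t ht).parts := by
  have hat : a ∉ t := fun hc => ha (part_subset Q ht hc)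
  show {a} ∉ insert (insert a t) (Q.parts.erase t)
  rw [Finset.mem_insert]
  rintro (hc | hc)
  · obtain ⟨x, hx⟩ := Q.nonempty_of_mem_parts ht
    have hxx : x ∈ ({a} : Finset α) := hc ▸ Finset.mem_insert_of_mem hx
    rw [Finset.mem_singleton] at hxx
    exact hat (hxx ▸ hx)
  · exact ha (part_subset Q (Finset.mem_of_mem_erase hc) (Finset.mem_singleton_self a))

lemma cardB (ha : a ∉ s) (l : ℕ) :
    (Finset.univ.filter (fun P : Finpartition (insert a s) =>
      P.parts.card = l ∧ {a} ∉ P.parts)).card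
    = ((Finset.univ.filter (fun Q : Finpartition s => Q.parts.card = l)).sigma
        (fun Q => Q.parts)).card := by
  refine Finset.card_bij'
    (fun P hP => (⟨rmInto ha P (Finset.mem_filter.1 hP).2.2, (P.part a).erase a⟩ :
      (_ : Finpartition s) × Finset α))
    (fun p hp => addInto ha p.1 p.2 (Finset.mem_sigma.1 hp).2) ?_ ?_ ?_ ?_
  · intro P hP
    obtain ⟨-, hc, hm⟩ := Finset.mem_filter.1 hP
    rw [Finset.mem_sigma]
    constructor
    · rw [Finset.mem_filter]
      refine ⟨Finset.mem_univ _, ?_⟩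
      show (insert ((P.part a).erase a) (P.parts.erase (P.part a))).card = l
      rw [Finset.card_insert_of_notMem (erase_part_not_mem ha P hm),
        Finset.card_erase_of_mem (part_a_mem P), hc]
      have hl : 0 < l := by
        rw [← hc]
        exact Finset.card_pos.2 ⟨_, part_a_mem P⟩
      omega
    · exact Finset.mem_insert_self _ _
  · rintro ⟨Q, t⟩ hp
    obtain ⟨hQ, ht⟩ := Finset.mem_sigma.1 hp
    rw [Finset.mem_filter] at hQ ⊢
    have hat : a ∉ t := fun hc => ha (part_subset Q ht hc)
    refine ⟨Finset.mem_univ _, ?_, ?_⟩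
    · show (insert (insert a t) (Q.parts.erase t)).card = l
      rw [Finset.card_insert_of_notMem (insertA_not_mem_erase ha Q t),
        Finset.card_erase_of_mem ht, hQ.2]
      have hl : 0 < l := by
        rw [← hQ.2]
        exact Finset.card_pos.2 ⟨t, ht⟩
      omega
    · exact singleton_not_mem_addInto ha Q t ht
  · intro P hP
    obtain ⟨-, hc, hm⟩ := Finset.mem_filter.1 hP
    apply Finpartition.ext
    show insert (insert a ((P.part a).erase a))
        ((insert ((P.part a).erase a) (P.parts.erase (P.part a))).erase ((P.part a).erase a))
      = P.parts
    rw [Finset.insert_erase (a_mem_part_a P), Finset.erase_insert (erase_part_not_mem ha P hm),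
      Finset.insert_erase (part_a_mem P)]
  · rintro ⟨Q, t⟩ hp
    obtain ⟨hQ, ht⟩ := Finset.mem_sigma.1 hp
    have hat : a ∉ t := fun hc => ha (part_subset Q ht hc)
    have hpart : (addInto ha Q t ht).part a = insert a t :=
      (addInto ha Q t ht).part_eq_of_mem (Finset.mem_insert_self _ _) (Finset.mem_insert_self a t)
    have hsnd : ((addInto ha Q t ht).part a).erase a = t := by
      rw [hpart, Finset.erase_insert hat]
    have hfst : ∀ hfoo, rmInto ha (addInto ha Q t ht) hfoo = Q := by
      intro hfoo
      apply Finpartition.ext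
      show insert (((addInto ha Q t ht).part a).erase a)
          ((addInto ha Q t ht).parts.erase ((addInto ha Q t ht).part a)) = Q.parts
      rw [hsnd, hpart]
      show insert t ((insert (insert a t) (Q.parts.erase t)).erase (insert a t)) = Q.parts
      rw [Finset.erase_insert (insertA_not_mem_erase ha Q t), Finset.insert_erase ht]
    exact Sigma.ext (hfst (singleton_not_mem_addInto ha Q t ht)) (heq_of_eq hsnd)

lemma Nc_insert (ha : a ∉ s) (l : ℕ) :
    Nc (insert a s) (l+1) = (l+1) * Nc s (l+1) + Nc s l := by
  classical
  have hsplit := Finset.card_filter_add_card_filter_not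
    (s := Finset.univ.filter (fun P : Finpartition (insert a s) => P.parts.card = l+1))
    (p := fun P => {a} ∈ P.parts)
  rw [Finset.filter_filter, Finset.filter_filter] at hsplit
  have h1 : Nc (insert a s) (l+1)
      = (Finset.univ.filter (fun P : Finpartition (insert a s) =>
          P.parts.card = l + 1 ∧ {a} ∈ P.parts)).card
        + (Finset.univ.filter (fun P : Finpartition (insert a s) =>
          P.parts.card = l + 1 ∧ {a} ∉ P.parts)).card := by
    rw [Nc, ← hsplit]
  rw [h1, cardA ha l, cardB ha (l+1), Finset.card_sigma]
  have h2 : ∑ Q ∈ Finset.univ.filter (fun Q : Finpartition s => Q.parts.card = l+1),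
      Q.parts.card = (l+1) * Nc s (l+1) := by
    rw [Finset.sum_congr rfl (fun Q hQ => (Finset.mem_filter.1 hQ).2), Finset.sum_const,
      smul_eq_mul, Nc]
    ring
  rw [h2]
  ring

end Rec
end VT

namespace VT

lemma Nc_empty (l : ℕ) : Nc (∅ : Finset ℕ) l = if l = 0 then 1 else 0 := by
  have hparts : ∀ P : Finpartition (∅ : Finset ℕ), P.parts = ∅ := fun P =>
    Finpartition.parts_eq_empty_iff.2 Finset.bot_eq_empty.symm
  have huniq : ∀ P Q : Finpartition (∅ : Finset ℕ), P = Q := fun P Q =>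
    Finpartition.ext (by rw [hparts P, hparts Q])
  cases l with
  | zero =>
    rw [if_pos rfl, Nc, Finset.filter_true_of_mem (fun P _ => by rw [hparts P]; rfl),
      Finset.card_univ]
    exact Fintype.card_eq_one_iff.2
      ⟨(Finpartition.empty (Finset ℕ)).copy Finset.bot_eq_empty, fun Q => huniq Q _⟩
  | succ l =>
    rw [if_neg (by omega), Nc, Finset.card_eq_zero, Finset.filter_eq_empty_iff]
    intro P _
    rw [hparts P]
    simp

lemma Nc_range_eq_T (k : ℕ) : ∀ l, Nc (Finset.range k) l = T k l := by
  induction k with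
  | zero =>
    intro l
    rw [Finset.range_zero, Nc_empty]
    cases l with
    | zero => rfl
    | succ l => rfl
  | succ k ih =>
    intro l
    have ha : k ∉ Finset.range k := by rw [Finset.mem_range]; omega
    rw [Finset.range_add_one]
    cases l with
    | zero =>
      rw [Nc_zero ⟨k, Finset.mem_insert_self _ _⟩ 0]
      rfl
    | succ l =>
      rw [Nc_insert ha l, ih (l+1), ih l]
      rfl

lemma stirling_eq_T (k l : ℕ) : stirling k l = T k l := by
  have h1 : stirling k l = Nc (Finset.univ : Finset (Fin k)) l := by
    rw [stirling, Set.ncard_eq_toFinset_card', Nc]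
    congr 1
    ext P
    simp
  have h2 : (Finset.univ : Finset (Fin k)).map Fin.valEmbedding = Finset.range k := by
    rw [Fin.map_valEmbedding_univ]
    ext x
    simp
  rw [h1, ← Nc_map Fin.valEmbedding (Finset.univ : Finset (Fin k)) l, h2, Nc_range_eq_T]

end VT

theorem stmt2 (n k : ℕ) (hn : 1 ≤ n) (hk : 1 ≤ k) :
    mVac (rowD n) (rowD n) k = ∑ l ∈ Finset.Icc 1 n, stirling k l := by
  have h1 : mVac (rowD n) (rowD n) k = VT.Vf n k (rowD n) :=
    (VT.vacTabs_bridge n k (rowD n)).2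
  rw [h1, VT.Vf_rowD, VT.sum_T_eq n k hk]
  exact Finset.sum_congr rfl fun l _ => (VT.stirling_eq_T k l).symm
end

section
/- For all positive integers n and k, the number of vacillating tableaux of length k from the one-row partition (n) to the one-column partition (1ⁿ) equals S(k,n) + S(k,n−1), where S denotes Stirling numbers of the second kind: m^{(1ⁿ)}_{(n)}(k) = S(k,n) + S(k,n−1). -/
open YoungDiagram

namespace VP
open Finset

attribute [local instance] Classical.propDecidable

lemma yd_eq_of_cells_eq {x y : YoungDiagram} (h : x.cells = y.cells) : x = y := by
  rwa [YoungDiagram.ext_iff]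

lemma yd_card_le_of_le {x y : YoungDiagram} (h : x ≤ y) : x.card ≤ y.card :=
  Finset.card_le_card (cells_subset_iff.mpr h)

lemma yd_eq_of_le_card {x y : YoungDiagram} (h : x ≤ y) (hc : y.card ≤ x.card) : x = y :=
  yd_eq_of_cells_eq (Finset.eq_of_subset_of_card_le (cells_subset_iff.mpr h) hc)

lemma fst_lt_card {x : YoungDiagram} {c : ℕ × ℕ} (h : c ∈ x) : c.1 < x.card := by
  have hsub : (Finset.range (c.1 + 1)) ×ˢ ({c.2} : Finset ℕ) ⊆ x.cells := by
    rintro ⟨i, j⟩ hij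
    simp only [Finset.mem_product, Finset.mem_range, Finset.mem_singleton] at hij
    have hc : (c.1, c.2) ∈ x := by simpa using h
    refine x.up_left_mem ?_ ?_ hc
    · omega
    · omega
  have h2 := Finset.card_le_card hsub
  rw [Finset.card_product, Finset.card_range, Finset.card_singleton, mul_one] at h2
  exact h2

lemma snd_lt_card {x : YoungDiagram} {c : ℕ × ℕ} (h : c ∈ x) : c.2 < x.card := by
  have hsub : ({c.1} : Finset ℕ) ×ˢ (Finset.range (c.2 + 1)) ⊆ x.cells := by
    rintro ⟨i, j⟩ hij
    simp only [Finset.mem_product, Finset.mem_range, Finset.mem_singleton] at hij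
    have hc : (c.1, c.2) ∈ x := by simpa using h
    refine x.up_left_mem ?_ ?_ hc
    · omega
    · omega
  have h2 := Finset.card_le_card hsub
  rw [Finset.card_product, Finset.card_range, Finset.card_singleton, one_mul] at h2
  exact h2

lemma finite_card_le (K : ℕ) : {d : YoungDiagram | d.card ≤ K}.Finite := by
  apply Set.Finite.of_finite_image (f := YoungDiagram.cells)
  · apply Set.Finite.subset ((Finset.range K ×ˢ Finset.range K).powerset : Finset (Finset (ℕ × ℕ))).finite_toSet
    rintro s ⟨d, hd, rfl⟩
    have hd' : d.card ≤ K := hd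
    simp only [Finset.coe_powerset, Set.mem_preimage, Set.mem_powerset_iff, Finset.coe_subset]
    intro c hc
    have h1 := fst_lt_card (x := d) (c := c) hc
    have h2 := snd_lt_card (x := d) (c := c) hc
    simp only [Finset.mem_product, Finset.mem_range]
    exact ⟨by omega, by omega⟩

  · intro a _ b _ hab
    exact yd_eq_of_cells_eq hab

lemma finite_up (x : YoungDiagram) : {r : YoungDiagram | AddCell x r}.Finite :=
  (finite_card_le (x.card + 1)).subset (fun r hr => le_of_eq hr.2)

lemma finite_down (x : YoungDiagram) : {g : YoungDiagram | AddCell g x}.Finite :=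
  (finite_card_le x.card).subset (fun g hg => by
    show g.card ≤ x.card
    have := hg.2; omega)

noncomputable def upF (x : YoungDiagram) : Finset YoungDiagram := (finite_up x).toFinset

noncomputable def downF (x : YoungDiagram) : Finset YoungDiagram := (finite_down x).toFinset

@[simp] lemma mem_upF {x r : YoungDiagram} : r ∈ upF x ↔ AddCell x r := (finite_up x).mem_toFinset

@[simp] lemma mem_downF {x g : YoungDiagram} : g ∈ downF x ↔ AddCell g x := (finite_down x).mem_toFinset

lemma rowLen_eq {μ : YoungDiagram} {i m : ℕ} (h1 : ∀ j < m, (i, j) ∈ μ) (h2 : (i, m) ∉ μ) :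
    μ.rowLen i = m := by
  have hle : μ.rowLen i ≤ m := by
    by_contra h
    exact h2 (mem_iff_lt_rowLen.mpr (by omega))
  rcases Nat.eq_zero_or_pos m with hm | hm
  · omega
  · have := mem_iff_lt_rowLen.mp (h1 (m - 1) (by omega))
    omega

/-- One can add a cell at the end of row `i`. -/
def Addable (x : YoungDiagram) (i : ℕ) : Prop := i = 0 ∨ x.rowLen i < x.rowLen (i - 1)

/-- One can remove the last cell of row `i`. -/
def Removable (x : YoungDiagram) (i : ℕ) : Prop := x.rowLen (i + 1) < x.rowLen i

lemma addable_lt {x : YoungDiagram} {i : ℕ} (h : Addable x i) {i' : ℕ} (hi' : i' < i) :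
    x.rowLen i < x.rowLen i' := by
  rcases h with h | h
  · omega
  · exact lt_of_lt_of_le h (x.rowLen_anti i' (i - 1) (by omega))

def addRow (x : YoungDiagram) (i : ℕ) (h : Addable x i) : YoungDiagram where
  cells := insert (i, x.rowLen i) x.cells
  isLowerSet := by
    rintro ⟨c, d⟩ ⟨a, b⟩ hle hcd
    simp only [Finset.coe_insert, Set.mem_insert_iff, Finset.mem_coe, mem_cells] at hcd ⊢
    obtain ⟨hac, hbd⟩ : a ≤ c ∧ b ≤ d := Prod.mk_le_mk.mp hle
    rcases hcd with hcd | hcd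
    · rw [Prod.mk.injEq] at hcd
      obtain ⟨hc, hd⟩ := hcd
      by_cases hai : a = i
      · rcases Nat.lt_or_ge b (x.rowLen a) with hb | hb
        · exact Or.inr (mem_iff_lt_rowLen.mpr hb)
        · left
          rw [Prod.mk.injEq]
          refine ⟨hai, ?_⟩
          rw [hai] at hb
          omega
      · right
        have ha' : a < i := by omega
        have hlt : x.rowLen i < x.rowLen a := addable_lt h ha'
        exact mem_iff_lt_rowLen.mpr (by omega)
    · exact Or.inr (x.up_left_mem hac hbd hcd)

lemma mem_addRow {x : YoungDiagram} {i : ℕ} {h : Addable x i} {c : ℕ × ℕ} :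
    c ∈ addRow x i h ↔ c ∈ x ∨ c = (i, x.rowLen i) := by
  show c ∈ insert (i, x.rowLen i) x.cells ↔ _
  simp only [addRow, YoungDiagram.mem_mk, Finset.mem_insert, mem_cells]
  tauto

lemma new_not_mem {x : YoungDiagram} (i : ℕ) : (i, x.rowLen i) ∉ x := by
  simp [mem_iff_lt_rowLen]

lemma addCell_addRow {x : YoungDiagram} {i : ℕ} (h : Addable x i) : AddCell x (addRow x i h) := by
  constructor
  · intro c hc
    exact mem_addRow.mpr (Or.inl hc)
  · show (insert (i, x.rowLen i) x.cells).card = _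
    rw [Finset.card_insert_of_notMem (by simpa using new_not_mem (x := x) i)]

lemma rowLen_addRow {x : YoungDiagram} {i : ℕ} (h : Addable x i) (a : ℕ) :
    (addRow x i h).rowLen a = x.rowLen a + if a = i then 1 else 0 := by
  apply rowLen_eq
  · intro j hj
    rw [mem_addRow]
    by_cases hai : a = i
    · rw [if_pos hai] at hj
      subst hai
      rcases Nat.lt_or_ge j (x.rowLen a) with hb | hb
      · exact Or.inl (mem_iff_lt_rowLen.mpr hb)
      · right
        have : j = x.rowLen a := by omega
        simp [Prod.ext_iff, this]
    · rw [if_neg hai] at hj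
      exact Or.inl (mem_iff_lt_rowLen.mpr (by omega))
  · rw [mem_addRow]
    push_neg
    constructor
    · rw [mem_iff_lt_rowLen]
      split <;> omega
    · simp only [ne_eq, Prod.mk.injEq, not_and]
      intro hai
      subst hai
      rw [if_pos rfl]
      omega

lemma addRow_inj {x : YoungDiagram} {i i' : ℕ} {h : Addable x i} {h' : Addable x i'}
    (heq : addRow x i h = addRow x i' h') : i = i' := by
  by_contra hne
  have h1 := rowLen_addRow h i
  have h2 := rowLen_addRow h' i
  rw [heq] at h1
  rw [if_pos rfl] at h1
  rw [if_neg hne] at h2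
  omega

lemma up_eq_addRow {x r : YoungDiagram} (h : AddCell x r) :
    ∃ i, ∃ hi : Addable x i, r = addRow x i hi := by
  have hsub : x.cells ⊆ r.cells := cells_subset_iff.mpr h.1
  have hsd : (r.cells \ x.cells).card = 1 := by
    rw [Finset.card_sdiff_of_subset hsub]
    have h2 : r.card = x.card + 1 := h.2
    have hxx : #x.cells = x.card := rfl
    have hrr : #r.cells = r.card := rfl
    omega
  obtain ⟨c, hc⟩ := Finset.card_eq_one.mp hsd
  have hcr : c ∈ r.cells := (Finset.mem_sdiff.mp (hc ▸ Finset.mem_singleton_self c)).1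
  have hcx : c ∉ x.cells := (Finset.mem_sdiff.mp (hc ▸ Finset.mem_singleton_self c)).2
  have hcells : r.cells = insert c x.cells := by
    ext d
    constructor
    · intro hd
      by_cases hdx : d ∈ x.cells
      · exact Finset.mem_insert_of_mem hdx
      · have : d ∈ r.cells \ x.cells := Finset.mem_sdiff.mpr ⟨hd, hdx⟩
        rw [hc, Finset.mem_singleton] at this
        rw [this]
        exact Finset.mem_insert_self c _
    · intro hd
      rcases Finset.mem_insert.mp hd with rfl | hd
      · exact hcr
      · exact hsub hd
  obtain ⟨i, j⟩ := c
  have hj : x.rowLen i = j := by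
    apply rowLen_eq
    · intro j' hj'
      have hmem : (i, j') ∈ r := r.up_left_mem le_rfl (by omega) hcr
      have : (i, j') ∈ r.cells := hmem
      rw [hcells, Finset.mem_insert] at this
      rcases this with heq | hx
      · exfalso
        have : j' = j := by simpa using congrArg Prod.snd heq
        omega
      · exact hx
    · exact hcx
  have hi : Addable x i := by
    rcases Nat.eq_zero_or_pos i with rfl | hipos
    · exact Or.inl rfl
    · right
      have hmem : (i - 1, j) ∈ r := r.up_left_mem (by omega) le_rfl hcr
      have : (i - 1, j) ∈ r.cells := hmem
      rw [hcells, Finset.mem_insert] at this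
      rcases this with heq | hx
      · exfalso
        have : i - 1 = i := by simpa using congrArg Prod.fst heq
        omega
      · have := mem_iff_lt_rowLen.mp (show ((i-1 : ℕ), j) ∈ x from hx)
        omega
  refine ⟨i, hi, ?_⟩
  apply yd_eq_of_cells_eq
  show r.cells = insert (i, x.rowLen i) x.cells
  rw [hj, hcells]

def remRow (x : YoungDiagram) (i : ℕ) (h : Removable x i) : YoungDiagram where
  cells := x.cells.erase (i, x.rowLen i - 1)
  isLowerSet := by
    rintro ⟨c, d⟩ ⟨a, b⟩ hle hcd
    obtain ⟨hac, hbd⟩ : a ≤ c ∧ b ≤ d := Prod.mk_le_mk.mp hle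
    rw [Finset.mem_coe, Finset.mem_erase] at hcd ⊢
    obtain ⟨hne, hcd⟩ := hcd
    have hrm : x.rowLen (i + 1) < x.rowLen i := h
    constructor
    · simp only [ne_eq, Prod.mk.injEq, not_and]
      rintro rfl rfl
      -- (a, b) = (i, rowLen i - 1), a ≤ c, b ≤ d, (c,d) ∈ x, (c,d) ≠ (i, rowLen i - 1)
      have hdc : d < x.rowLen c := mem_iff_lt_rowLen.mp hcd
      have hcc : x.rowLen c ≤ x.rowLen a := x.rowLen_anti a c hac
      -- so d ≤ rowLen a - 1 = b ≤ d, d = rowLen a - 1 and rowLen c = rowLen a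
      by_cases hca : c = a
      · subst hca
        apply hne
        simp only [Prod.mk.injEq]
        exact ⟨trivial, by omega⟩
      · have : c ≥ a + 1 := by omega
        have : x.rowLen c ≤ x.rowLen (a + 1) := x.rowLen_anti _ _ this
        omega
    · exact x.isLowerSet hle hcd

lemma mem_remRow {x : YoungDiagram} {i : ℕ} {h : Removable x i} {c : ℕ × ℕ} :
    c ∈ remRow x i h ↔ c ∈ x ∧ c ≠ (i, x.rowLen i - 1) := by
  show c ∈ Finset.erase _ _ ↔ _
  rw [Finset.mem_erase]
  exact ⟨fun ⟨a, b⟩ => ⟨b, a⟩, fun ⟨a, b⟩ => ⟨b, a⟩⟩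

lemma corner_mem {x : YoungDiagram} {i : ℕ} (h : Removable x i) : (i, x.rowLen i - 1) ∈ x := by
  have : x.rowLen (i + 1) < x.rowLen i := h
  exact mem_iff_lt_rowLen.mpr (by omega)

lemma addCell_remRow {x : YoungDiagram} {i : ℕ} (h : Removable x i) : AddCell (remRow x i h) x := by
  constructor
  · intro c hc
    exact (mem_remRow.mp hc).1
  · show x.card = (x.cells.erase _).card + 1
    rw [Finset.card_erase_of_mem (corner_mem h)]
    have : (0 : ℕ) < x.cells.card := Finset.card_pos.mpr ⟨_, corner_mem h⟩
    have hxx : #x.cells = x.card := rfl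
    omega

lemma rowLen_remRow {x : YoungDiagram} {i : ℕ} (h : Removable x i) (a : ℕ) :
    (remRow x i h).rowLen a = x.rowLen a - if a = i then 1 else 0 := by
  have hrm : x.rowLen (i + 1) < x.rowLen i := h
  apply rowLen_eq
  · intro j hj
    rw [mem_remRow]
    by_cases hai : a = i
    · rw [if_pos hai] at hj
      subst hai
      constructor
      · exact mem_iff_lt_rowLen.mpr (by omega)
      · simp only [ne_eq, Prod.mk.injEq, not_and]
        intro _
        omega
    · rw [if_neg hai] at hj
      constructor
      · exact mem_iff_lt_rowLen.mpr (by omega)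
      · simp only [ne_eq, Prod.mk.injEq, not_and]
        intro heq
        exact absurd heq hai
  · rw [mem_remRow]
    by_cases hai : a = i
    · rw [if_pos hai]
      subst hai
      rintro ⟨h1, h2⟩
      exact h2 rfl
    · rw [if_neg hai]
      rintro ⟨h1, -⟩
      have := mem_iff_lt_rowLen.mp h1
      omega

lemma down_eq_remRow {x g : YoungDiagram} (h : AddCell g x) :
    ∃ i, ∃ hi : Removable x i, g = remRow x i hi := by
  have hsub : g.cells ⊆ x.cells := cells_subset_iff.mpr h.1
  have hsd : (x.cells \ g.cells).card = 1 := by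
    rw [Finset.card_sdiff_of_subset hsub]
    have h2 : x.card = g.card + 1 := h.2
    have hxx : #x.cells = x.card := rfl
    have hgg : #g.cells = g.card := rfl
    omega
  obtain ⟨c, hc⟩ := Finset.card_eq_one.mp hsd
  have hcx : c ∈ x.cells := (Finset.mem_sdiff.mp (hc ▸ Finset.mem_singleton_self c)).1
  have hcg : c ∉ g.cells := (Finset.mem_sdiff.mp (hc ▸ Finset.mem_singleton_self c)).2
  have hcells : x.cells = insert c g.cells := by
    ext d
    constructor
    · intro hd
      by_cases hdg : d ∈ g.cells
      · exact Finset.mem_insert_of_mem hdg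
      · have : d ∈ x.cells \ g.cells := Finset.mem_sdiff.mpr ⟨hd, hdg⟩
        rw [hc, Finset.mem_singleton] at this
        rw [this]
        exact Finset.mem_insert_self c _
    · intro hd
      rcases Finset.mem_insert.mp hd with rfl | hd
      · exact hcx
      · exact hsub hd
  obtain ⟨i, j⟩ := c
  have hxj : x.rowLen i = j + 1 := by
    apply rowLen_eq
    · intro j' hj'
      exact x.up_left_mem le_rfl (by omega) hcx
    · intro hmem
      have : ((i : ℕ), j + 1) ∈ g := by
        have h1 : ((i : ℕ), j+1) ∈ x.cells := hmem
        rw [hcells, Finset.mem_insert] at h1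
        rcases h1 with heq | hg
        · exfalso
          have : j + 1 = j := by simpa using congrArg Prod.snd heq
          omega
        · exact hg
      have h2 : ((i : ℕ), j) ∈ g := g.up_left_mem le_rfl (by omega) this
      exact hcg h2
  have hrm : Removable x i := by
    show x.rowLen (i + 1) < x.rowLen i
    rw [hxj]
    by_contra hcon
    push_neg at hcon
    have hmem : ((i : ℕ) + 1, j) ∈ x := mem_iff_lt_rowLen.mpr (by omega)
    have h1 : ((i : ℕ) + 1, j) ∈ x.cells := hmem
    rw [hcells, Finset.mem_insert] at h1
    rcases h1 with heq | hg
    · have : i + 1 = i := by simpa using congrArg Prod.fst heq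
      omega
    · have h2 : ((i : ℕ), j) ∈ g := g.up_left_mem (by omega) le_rfl hg
      exact hcg h2
  refine ⟨i, hrm, ?_⟩
  apply yd_eq_of_cells_eq
  show g.cells = x.cells.erase (i, x.rowLen i - 1)
  have : x.rowLen i - 1 = j := by omega
  rw [this, hcells, Finset.erase_insert (by exact hcg)]

lemma remRow_inj {x : YoungDiagram} {i i' : ℕ} {h : Removable x i} {h' : Removable x i'}
    (heq : remRow x i h = remRow x i' h') : i = i' := by
  by_contra hne
  have h1 := rowLen_remRow h i
  have h2 := rowLen_remRow h' i
  rw [heq] at h1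
  rw [if_pos rfl] at h1
  rw [if_neg hne] at h2
  have hrm : x.rowLen (i + 1) < x.rowLen i := h
  omega

noncomputable def addSet (x : YoungDiagram) : Finset ℕ :=
  (Finset.range (x.colLen 0 + 1)).filter (fun i => Addable x i)

noncomputable def remSet (x : YoungDiagram) : Finset ℕ :=
  (Finset.range (x.colLen 0)).filter (fun i => Removable x i)

lemma mem_addSet {x : YoungDiagram} {i : ℕ} : i ∈ addSet x ↔ Addable x i := by
  rw [addSet, Finset.mem_filter, Finset.mem_range]
  constructor
  · exact fun h => h.2
  · intro h
    refine ⟨?_, h⟩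
    rcases h with rfl | h
    · omega
    · have : 0 < x.rowLen (i - 1) := by omega
      have : ((i : ℕ) - 1, 0) ∈ x := mem_iff_lt_rowLen.mpr this
      have := mem_iff_lt_colLen.mp this
      omega

lemma mem_remSet {x : YoungDiagram} {i : ℕ} : i ∈ remSet x ↔ Removable x i := by
  rw [remSet, Finset.mem_filter, Finset.mem_range]
  constructor
  · exact fun h => h.2
  · intro h
    refine ⟨?_, h⟩
    have hrm : x.rowLen (i + 1) < x.rowLen i := h
    have : ((i : ℕ), 0) ∈ x := mem_iff_lt_rowLen.mpr (by omega)
    have := mem_iff_lt_colLen.mp this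
    omega

lemma card_upF (x : YoungDiagram) : (upF x).card = (addSet x).card := by
  symm
  apply Finset.card_bij (fun i hi => addRow x i (mem_addSet.mp hi))
  · intro a ha
    rw [mem_upF]
    exact addCell_addRow _
  · intro a ha b hb heq
    exact addRow_inj heq
  · intro r hr
    obtain ⟨i, hi, rfl⟩ := up_eq_addRow (mem_upF.mp hr)
    exact ⟨i, mem_addSet.mpr hi, rfl⟩

lemma card_downF (x : YoungDiagram) : (downF x).card = (remSet x).card := by
  symm
  apply Finset.card_bij (fun i hi => remRow x i (mem_remSet.mp hi))
  · intro a ha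
    rw [mem_downF]
    exact addCell_remRow _
  · intro a ha b hb heq
    exact remRow_inj heq
  · intro g hg
    obtain ⟨i, hi, rfl⟩ := down_eq_remRow (mem_downF.mp hg)
    exact ⟨i, mem_remSet.mpr hi, rfl⟩

lemma addSet_card (x : YoungDiagram) : (addSet x).card = (remSet x).card + 1 := by
  have hset : addSet x = insert 0 ((remSet x).image Nat.succ) := by
    ext i
    rw [mem_addSet, Finset.mem_insert]
    constructor
    · rintro (rfl | hadd)
      · exact Or.inl rfl
      · rcases Nat.eq_zero_or_pos i with rfl | hi
        · exact Or.inl rfl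
        · right
          rw [Finset.mem_image]
          refine ⟨i - 1, mem_remSet.mpr ?_, by omega⟩
          show x.rowLen (i - 1 + 1) < x.rowLen (i - 1)
          have : i - 1 + 1 = i := by omega
          rw [this]
          exact hadd
    · rintro (rfl | hmem)
      · exact Or.inl rfl
      · rw [Finset.mem_image] at hmem
        obtain ⟨j, hj, rfl⟩ := hmem
        right
        have : Nat.succ j - 1 = j := by omega
        rw [this]
        exact mem_remSet.mp hj
  rw [hset, Finset.card_insert_of_notMem (by simp), Finset.card_image_of_injective _ Nat.succ_injective]

lemma one_step_diag (x : YoungDiagram) : (upF x).card = (downF x).card + 1 := by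
  rw [card_upF, card_downF, addSet_card]

lemma yd_card_lt_of_lt {x y : YoungDiagram} (h : x < y) : x.card < y.card :=
  Finset.card_lt_card (cells_ssubset_iff.mpr h)

lemma card_sup_inf (x y : YoungDiagram) :
    (x ⊔ y).card + (x ⊓ y).card = x.card + y.card := by
  show (x.cells ∪ y.cells).card + (x.cells ∩ y.cells).card = _
  exact Finset.card_union_add_card_inter x.cells y.cells

lemma one_step (x y : YoungDiagram) :
    ((upF x) ∩ (upF y)).card = ((downF x) ∩ (downF y)).card + (if x = y then 1 else 0) := by
  by_cases hxy : x = y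
  · subst hxy
    rw [if_pos rfl, Finset.inter_self, Finset.inter_self]
    exact one_step_diag x
  · rw [if_neg hxy, Nat.add_zero]
    have hup : upF x ∩ upF y ⊆ {x ⊔ y} := by
      intro r hr
      rw [Finset.mem_inter, mem_upF, mem_upF] at hr
      obtain ⟨⟨hx1, hx2⟩, ⟨hy1, hy2⟩⟩ := hr
      have hle : x ⊔ y ≤ r := sup_le hx1 hy1
      have hlt : x < x ⊔ y := by
        rcases lt_or_eq_of_le (le_sup_left : x ≤ x ⊔ y) with h | h
        · exact h
        · exfalso
          have hyx : y ≤ x := by rw [h]; exact le_sup_right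
          have : y = x := yd_eq_of_le_card hyx (by omega)
          exact hxy this.symm
      have hcard : r.card ≤ (x ⊔ y).card := by
        have := yd_card_lt_of_lt hlt
        have := yd_card_le_of_le hle
        omega
      rw [Finset.mem_singleton]
      exact (yd_eq_of_le_card hle hcard).symm
    have hdown : downF x ∩ downF y ⊆ {x ⊓ y} := by
      intro g hg
      rw [Finset.mem_inter, mem_downF, mem_downF] at hg
      obtain ⟨⟨hx1, hx2⟩, ⟨hy1, hy2⟩⟩ := hg
      have hle : g ≤ x ⊓ y := le_inf hx1 hy1
      have hlt : x ⊓ y < x := by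
        rcases lt_or_eq_of_le (inf_le_left : x ⊓ y ≤ x) with h | h
        · exact h
        · exfalso
          have hxy' : x ≤ y := by rw [← h]; exact inf_le_right
          have : x = y := yd_eq_of_le_card hxy' (by omega)
          exact hxy this
      have hcard : (x ⊓ y).card ≤ g.card := by
        have := yd_card_lt_of_lt hlt
        have := yd_card_le_of_le hle
        omega
      rw [Finset.mem_singleton]
      exact (yd_eq_of_le_card hle hcard)
    have hiff : (x ⊔ y ∈ upF x ∩ upF y) ↔ (x ⊓ y ∈ downF x ∩ downF y) := by
      have hsum := card_sup_inf x y
      rw [Finset.mem_inter, Finset.mem_inter, mem_upF, mem_upF, mem_downF, mem_downF]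
      constructor
      · rintro ⟨⟨-, h1⟩, ⟨-, h2⟩⟩
        exact ⟨⟨inf_le_left, by omega⟩, ⟨inf_le_right, by omega⟩⟩
      · rintro ⟨⟨-, h1⟩, ⟨-, h2⟩⟩
        exact ⟨⟨le_sup_left, by omega⟩, ⟨le_sup_right, by omega⟩⟩
    rcases Finset.subset_singleton_iff.mp hup with hu | hu <;>
      rcases Finset.subset_singleton_iff.mp hdown with hd | hd <;>
        rw [hu, hd]
    · exfalso
      have : x ⊓ y ∈ downF x ∩ downF y := by rw [hd]; exact Finset.mem_singleton_self _
      have := hiff.mpr this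
      rw [hu] at this
      exact absurd this (Finset.notMem_empty _)
    · exfalso
      have : x ⊔ y ∈ upF x ∩ upF y := by rw [hu]; exact Finset.mem_singleton_self _
      have := hiff.mp this
      rw [hd] at this
      exact absurd this (Finset.notMem_empty _)
    · simp

noncomputable def bigF (K : ℕ) : Finset YoungDiagram := (finite_card_le K).toFinset

@[simp] lemma mem_bigF {K : ℕ} {d : YoungDiagram} : d ∈ bigF K ↔ d.card ≤ K :=
  (finite_card_le K).mem_toFinset

/-- Number of saturated chains of length `t` from `a` up to `m`. -/
noncomputable def nup : ℕ → YoungDiagram → YoungDiagram → ℕ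
  | 0, a, m => if a = m then 1 else 0
  | t + 1, a, m => ∑ g ∈ downF m, nup t a g

@[simp] lemma nup_zero (a m : YoungDiagram) : nup 0 a m = if a = m then 1 else 0 := rfl

lemma nup_succ (t : ℕ) (a m : YoungDiagram) : nup (t + 1) a m = ∑ g ∈ downF m, nup t a g := rfl

lemma nup_succ_left (t : ℕ) : ∀ a m : YoungDiagram, nup (t + 1) a m = ∑ r ∈ upF a, nup t r m := by
  induction t with
  | zero =>
    intro a m
    rw [nup_succ]
    have h1 : ∑ g ∈ downF m, nup 0 a g = if a ∈ downF m then 1 else 0 := by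
      simp_rw [nup_zero]
      exact Finset.sum_ite_eq (downF m) a (fun _ => 1)
    have h2 : ∑ r ∈ upF a, nup 0 r m = if m ∈ upF a then 1 else 0 := by
      simp_rw [nup_zero]
      exact Finset.sum_ite_eq' (upF a) m (fun _ => 1)
    rw [h1, h2]
    simp only [mem_downF, mem_upF]
  | succ t ih =>
    intro a m
    rw [nup_succ]
    calc ∑ g ∈ downF m, nup (t + 1) a g = ∑ g ∈ downF m, ∑ r ∈ upF a, nup t r g := by
          exact Finset.sum_congr rfl (fun g _ => ih a g)
      _ = ∑ r ∈ upF a, ∑ g ∈ downF m, nup t r g := Finset.sum_comm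
      _ = ∑ r ∈ upF a, nup (t + 1) r m := by
          exact Finset.sum_congr rfl (fun r _ => (nup_succ t r m).symm)

lemma sum_downF_eq {F : YoungDiagram → ℕ} {r : YoungDiagram} {K : ℕ} (hK : downF r ⊆ bigF K) :
    ∑ g ∈ downF r, F g = ∑ x ∈ bigF K, if AddCell x r then F x else 0 := by
  simp_rw [← mem_downF (x := r)]
  rw [Finset.sum_ite_mem, Finset.inter_eq_right.mpr hK]

lemma sum_upF_eq {F : YoungDiagram → ℕ} {g : YoungDiagram} {K : ℕ} (hK : upF g ⊆ bigF K) :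
    ∑ r ∈ upF g, F r = ∑ x ∈ bigF K, if AddCell g x then F x else 0 := by
  simp_rw [← mem_upF (x := g)]
  rw [Finset.sum_ite_mem, Finset.inter_eq_right.mpr hK]

lemma exchange (F : YoungDiagram → ℕ) (a : YoungDiagram) :
    ∑ r ∈ upF a, ∑ g ∈ downF r, F g = (∑ g ∈ downF a, ∑ r ∈ upF g, F r) + F a := by
  have hL : ∑ r ∈ upF a, ∑ g ∈ downF r, F g
      = ∑ x ∈ bigF a.card, (#(upF a ∩ upF x)) * F x := by
    calc ∑ r ∈ upF a, ∑ g ∈ downF r, F g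
        = ∑ r ∈ upF a, ∑ x ∈ bigF a.card, if AddCell x r then F x else 0 := by
          refine Finset.sum_congr rfl (fun r hr => ?_)
          refine sum_downF_eq (fun g hg => ?_)
          rw [mem_upF] at hr
          rw [mem_downF] at hg
          rw [mem_bigF]
          have := hr.2
          have := hg.2
          omega
      _ = ∑ x ∈ bigF a.card, ∑ r ∈ upF a, if AddCell x r then F x else 0 := Finset.sum_comm
      _ = ∑ x ∈ bigF a.card, (#(upF a ∩ upF x)) * F x := by
          refine Finset.sum_congr rfl (fun x _ => ?_)
          simp_rw [← mem_upF (x := x)]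
          rw [Finset.sum_ite_mem, Finset.sum_const, smul_eq_mul]
  have hR : ∑ g ∈ downF a, ∑ r ∈ upF g, F r
      = ∑ x ∈ bigF a.card, (#(downF a ∩ downF x)) * F x := by
    calc ∑ g ∈ downF a, ∑ r ∈ upF g, F r
        = ∑ g ∈ downF a, ∑ x ∈ bigF a.card, if AddCell g x then F x else 0 := by
          refine Finset.sum_congr rfl (fun g hg => ?_)
          refine sum_upF_eq (fun r hr => ?_)
          rw [mem_downF] at hg
          rw [mem_upF] at hr
          rw [mem_bigF]
          have := hg.2
          have := hr.2
          omega
      _ = ∑ x ∈ bigF a.card, ∑ g ∈ downF a, if AddCell g x then F x else 0 := Finset.sum_comm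
      _ = ∑ x ∈ bigF a.card, (#(downF a ∩ downF x)) * F x := by
          refine Finset.sum_congr rfl (fun x _ => ?_)
          simp_rw [← mem_downF (x := x)]
          rw [Finset.sum_ite_mem, Finset.sum_const, smul_eq_mul]
  have hA : F a = ∑ x ∈ bigF a.card, if x = a then F x else 0 := by
    rw [Finset.sum_ite_eq' (bigF a.card) a F, if_pos (mem_bigF.mpr le_rfl)]
  rw [hL, hR, hA, ← Finset.sum_add_distrib]
  refine Finset.sum_congr rfl (fun x _ => ?_)
  rw [one_step a x]
  rw [add_mul]
  congr 1
  by_cases hxa : x = a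
  · subst hxa
    rw [if_pos rfl, if_pos rfl, one_mul]
  · rw [if_neg hxa, if_neg (fun h => hxa h.symm), zero_mul]

lemma comm_lemma (t : ℕ) : ∀ a m : YoungDiagram,
    ∑ b ∈ downF m, ∑ v ∈ upF b, nup t a v
      = (∑ g ∈ downF a, nup (t + 1) g m) + t * nup t a m := by
  induction t with
  | zero =>
    intro a m
    have hL : ∑ b ∈ downF m, ∑ v ∈ upF b, nup 0 a v = #(downF m ∩ downF a) := by
      calc ∑ b ∈ downF m, ∑ v ∈ upF b, nup 0 a v
          = ∑ b ∈ downF m, if b ∈ downF a then 1 else 0 := by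
            refine Finset.sum_congr rfl (fun b _ => ?_)
            simp_rw [nup_zero]
            rw [Finset.sum_ite_eq (upF b) a (fun _ => 1)]
            simp only [mem_upF, mem_downF]
        _ = #(downF m ∩ downF a) := by
            rw [Finset.sum_ite_mem, Finset.sum_const, smul_eq_mul, mul_one]
    have hR : ∑ g ∈ downF a, nup 1 g m = #(downF a ∩ downF m) := by
      calc ∑ g ∈ downF a, nup 1 g m
          = ∑ g ∈ downF a, if g ∈ downF m then 1 else 0 := by
            refine Finset.sum_congr rfl (fun g _ => ?_)
            rw [nup_succ]
            simp_rw [nup_zero]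
            exact Finset.sum_ite_eq (downF m) g (fun _ => 1)
        _ = #(downF a ∩ downF m) := by
            rw [Finset.sum_ite_mem, Finset.sum_const, smul_eq_mul, mul_one]
    rw [hL, hR, Finset.inter_comm]
    simp
  | succ t ih =>
    intro a m
    calc ∑ b ∈ downF m, ∑ v ∈ upF b, nup (t + 1) a v
        = ∑ b ∈ downF m, ∑ v ∈ upF b, ∑ r ∈ upF a, nup t r v := by
          refine Finset.sum_congr rfl fun b _ => Finset.sum_congr rfl fun v _ => ?_
          exact nup_succ_left t a v
      _ = ∑ r ∈ upF a, ∑ b ∈ downF m, ∑ v ∈ upF b, nup t r v := by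
          rw [Finset.sum_comm]
          refine Finset.sum_congr rfl fun b _ => Finset.sum_comm
      _ = ∑ r ∈ upF a, ((∑ g ∈ downF r, nup (t + 1) g m) + t * nup t r m) := by
          exact Finset.sum_congr rfl fun r _ => ih r m
      _ = (∑ r ∈ upF a, ∑ g ∈ downF r, nup (t + 1) g m) + t * ∑ r ∈ upF a, nup t r m := by
          rw [Finset.sum_add_distrib, Finset.mul_sum]
      _ = ((∑ g ∈ downF a, ∑ r ∈ upF g, nup (t + 1) r m) + nup (t + 1) a m)
            + t * nup (t + 1) a m := by
          rw [exchange (fun d => nup (t + 1) d m) a, nup_succ_left t a m]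
      _ = (∑ g ∈ downF a, nup (t + 2) g m) + (t + 1) * nup (t + 1) a m := by
          have : ∀ g, ∑ r ∈ upF g, nup (t + 1) r m = nup (t + 2) g m :=
            fun g => (nup_succ_left (t + 1) g m).symm
          simp_rw [this]
          ring

lemma vac_card_even {k : ℕ} {lam mu : YoungDiagram} {f : ℕ → YoungDiagram}
    (hf : f ∈ vacTabs k lam mu) : ∀ i, i ≤ k → (f (2 * i)).card = lam.card := by
  obtain ⟨h0, htail, hstep⟩ := hf
  intro i
  induction i with
  | zero => intro _; simpa using congrArg YoungDiagram.card h0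
  | succ i ih =>
    intro hik
    have hik' : i < k := by omega
    obtain ⟨h1, h2⟩ := hstep i hik'
    have e : 2 * (i + 1) = 2 * i + 2 := by ring
    rw [e]
    have := h1.2
    have := h2.2
    have := ih (by omega)
    omega

lemma vac_card_le {k : ℕ} {lam mu : YoungDiagram} {f : ℕ → YoungDiagram}
    (hf : f ∈ vacTabs k lam mu) : ∀ j, (f j).card ≤ lam.card := by
  have heven := vac_card_even hf
  obtain ⟨h0, htail, hstep⟩ := hf
  intro j
  rcases Nat.lt_or_ge j (2 * k) with hj | hj
  · rcases Nat.even_or_odd j with ⟨i, hi⟩ | ⟨i, hi⟩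
    · have : j = 2 * i := by omega
      rw [this, heven i (by omega)]
    · have : j = 2 * i + 1 := by omega
      subst this
      obtain ⟨h1, h2⟩ := hstep i (by omega)
      have := h1.2
      have := heven i (by omega)
      omega
  · rw [htail j hj]
    have h2k : f (2 * k) = mu := htail (2 * k) le_rfl
    rw [← h2k]
    rw [heven k le_rfl]

lemma vac_finite (k : ℕ) (lam mu : YoungDiagram) : (vacTabs k lam mu).Finite := by
  apply Set.Finite.of_finite_image (f := fun f => fun j : Fin (2 * k) => f j)
  · apply Set.Finite.subset (Set.Finite.pi (fun _ : Fin (2 * k) =>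
      finite_card_le lam.card) (t := fun _ => {d : YoungDiagram | d.card ≤ lam.card}))
    rintro g ⟨f, hf, rfl⟩
    rw [Set.mem_pi]
    intro j _
    exact vac_card_le hf j
  · intro f1 hf1 f2 hf2 heq
    funext j
    rcases Nat.lt_or_ge j (2 * k) with hj | hj
    · exact congrFun heq ⟨j, hj⟩
    · rw [hf1.2.1 j hj, hf2.2.1 j hj]

lemma vac_zero (lam mu : YoungDiagram) :
    (vacTabs 0 lam mu).ncard = if lam = mu then 1 else 0 := by
  by_cases h : lam = mu
  · subst h
    rw [if_pos rfl]
    have : vacTabs 0 lam lam = {fun _ => lam} := by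
      ext f
      constructor
      · rintro ⟨h0, htail, -⟩
        funext j
        exact htail j (by omega)
      · rintro rfl
        exact ⟨rfl, fun j _ => rfl, fun i hi => by omega⟩
    rw [this, Set.ncard_singleton]
  · rw [if_neg h]
    have : vacTabs 0 lam mu = ∅ := by
      ext f
      simp only [Set.mem_empty_iff_false, iff_false]
      rintro ⟨h0, htail, -⟩
      exact h (h0 ▸ (htail 0 (by omega)).symm ▸ rfl)
    rw [this, Set.ncard_empty]

/-- truncation of a vacillating tableau -/
noncomputable def trunc (k : ℕ) (v : YoungDiagram) (f : ℕ → YoungDiagram) : ℕ → YoungDiagram :=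
  fun j => if j < 2 * k then f j else v

def fib (k : ℕ) (lam mu v b : YoungDiagram) : Set (ℕ → YoungDiagram) :=
  {f | f ∈ vacTabs (k + 1) lam mu ∧ f (2 * k) = v ∧ f (2 * k + 1) = b}

lemma trunc_eq_of {k : ℕ} {v : YoungDiagram} {f : ℕ → YoungDiagram} (hfv : f (2 * k) = v) :
    ∀ j ≤ 2 * k, trunc k v f j = f j := by
  intro j hj
  unfold trunc
  rcases Nat.lt_or_ge j (2 * k) with h | h
  · rw [if_pos h]
  · have : j = 2 * k := by omega
    rw [if_neg (by omega), this, hfv]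

lemma fib_image {k : ℕ} {lam mu v b : YoungDiagram} (hvb : AddCell b v) (hbmu : AddCell b mu) :
    trunc k v '' fib k lam mu v b = vacTabs k lam v := by
  ext g
  constructor
  · rintro ⟨f, ⟨⟨h0, htail, hstep⟩, hfv, hfb⟩, rfl⟩
    have he := trunc_eq_of (f := f) hfv
    refine ⟨?_, ?_, ?_⟩
    · rw [he 0 (by omega)]; exact h0
    · intro j hj
      unfold trunc
      rcases Nat.lt_or_ge j (2 * k) with h | h
      · omega
      · rw [if_neg (by omega)]
    · intro i hi
      rw [he (2 * i) (by omega), he (2 * i + 1) (by omega), he (2 * i + 2) (by omega)]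
      exact hstep i (by omega)
  · intro hg
    obtain ⟨h0, htail, hstep⟩ := hg
    classical
    refine ⟨fun j => if j < 2 * k then g j else if j = 2 * k then v
      else if j = 2 * k + 1 then b else mu, ?_, ?_⟩
    · set f : ℕ → YoungDiagram := fun j => if j < 2 * k then g j else if j = 2 * k then v
        else if j = 2 * k + 1 then b else mu with hfdef
      have hfg : ∀ j ≤ 2 * k, f j = g j := by
        intro j hj
        rcases Nat.lt_or_ge j (2 * k) with h | h
        · simp only [hfdef, if_pos h]
        · have hj' : j = 2 * k := by omega
          subst hj'
          show (if 2 * k < 2 * k then g (2 * k) else if 2 * k = 2 * k then v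
            else if 2 * k = 2 * k + 1 then b else mu) = g (2 * k)
          rw [if_neg (lt_irrefl _), if_pos rfl]
          exact (htail (2 * k) le_rfl).symm
      have hfv : f (2 * k) = v := by
        show (if 2 * k < 2 * k then g (2 * k) else if 2 * k = 2 * k then v
          else if 2 * k = 2 * k + 1 then b else mu) = v
        rw [if_neg (lt_irrefl _), if_pos rfl]
      have hfb : f (2 * k + 1) = b := by
        show (if 2 * k + 1 < 2 * k then g (2 * k + 1) else if 2 * k + 1 = 2 * k then v
          else if 2 * k + 1 = 2 * k + 1 then b else mu) = b
        rw [if_neg (by omega), if_neg (by omega), if_pos rfl]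
      refine ⟨⟨?_, ?_, ?_⟩, hfv, hfb⟩
      · rw [hfg 0 (by omega)]; exact h0
      · intro j hj
        have hj' : 2 * k + 2 ≤ j := by omega
        show (if j < 2 * k then g j else if j = 2 * k then v
          else if j = 2 * k + 1 then b else mu) = mu
        rw [if_neg (by omega), if_neg (by omega), if_neg (by omega)]
      · intro i hi
        rcases Nat.lt_or_ge i k with hik | hik
        · rw [hfg (2 * i) (by omega), hfg (2 * i + 1) (by omega), hfg (2 * i + 2) (by omega)]
          exact hstep i hik
        · have hik2 : i = k := by omega
          rw [hik2]
          have h2 : f (2 * k + 2) = mu := by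
            show (if 2 * k + 2 < 2 * k then g (2 * k + 2) else if 2 * k + 2 = 2 * k then v
              else if 2 * k + 2 = 2 * k + 1 then b else mu) = mu
            rw [if_neg (by omega), if_neg (by omega), if_neg (by omega)]
          rw [hfv, hfb, h2]
          exact ⟨hvb, hbmu⟩
    · funext j
      unfold trunc
      rcases Nat.lt_or_ge j (2 * k) with h | h
      · rw [if_pos h]
        show (if j < 2 * k then g j else if j = 2 * k then v
          else if j = 2 * k + 1 then b else mu) = g j
        rw [if_pos h]
      · rw [if_neg (by omega)]
        exact (htail j h).symm

lemma fib_inj {k : ℕ} {lam mu v b : YoungDiagram} :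
    Set.InjOn (trunc k v) (fib k lam mu v b) := by
  rintro f1 ⟨⟨-, htail1, -⟩, hv1, hb1⟩ f2 ⟨⟨-, htail2, -⟩, hv2, hb2⟩ heq
  funext j
  rcases Nat.lt_or_ge j (2 * k) with hj | hj
  · have := congrFun heq j
    unfold trunc at this
    rwa [if_pos hj, if_pos hj] at this
  · rcases Nat.lt_or_ge j (2 * k + 2) with hj2 | hj2
    · rcases Nat.eq_or_lt_of_le hj with hj3 | hj3
      · rw [← hj3, hv1, hv2]
      · have : j = 2 * k + 1 := by omega
        rw [this, hb1, hb2]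
    · rw [htail1 j (by omega), htail2 j (by omega)]

lemma fib_ncard {k : ℕ} {lam mu v b : YoungDiagram} (hvb : AddCell b v) (hbmu : AddCell b mu) :
    (fib k lam mu v b).ncard = (vacTabs k lam v).ncard := by
  rw [← fib_image hvb hbmu, Set.ncard_image_of_injOn fib_inj]

lemma vac_peel (k : ℕ) (lam mu : YoungDiagram) :
    (vacTabs (k + 1) lam mu).ncard
      = ∑ b ∈ downF mu, ∑ v ∈ upF b, (vacTabs k lam v).ncard := by
  classical
  have hfin := vac_finite (k + 1) lam mu
  set T : Finset (YoungDiagram × YoungDiagram) :=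
    (downF mu).biUnion (fun b => (upF b).image (fun v => (b, v))) with hT
  have memT : ∀ p : YoungDiagram × YoungDiagram,
      p ∈ T ↔ AddCell p.1 mu ∧ AddCell p.1 p.2 := by
    intro p
    rw [hT, Finset.mem_biUnion]
    constructor
    · rintro ⟨b, hb, hp⟩
      rw [Finset.mem_image] at hp
      obtain ⟨v, hv, rfl⟩ := hp
      exact ⟨mem_downF.mp hb, mem_upF.mp hv⟩
    · rintro ⟨h1, h2⟩
      exact ⟨p.1, mem_downF.mpr h1, Finset.mem_image.mpr ⟨p.2, mem_upF.mpr h2, rfl⟩⟩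
  have hcard : (vacTabs (k + 1) lam mu).ncard = hfin.toFinset.card := by
    rw [← Set.ncard_coe_finset, hfin.coe_toFinset]
  rw [hcard]
  have hmap : ∀ f ∈ hfin.toFinset, (f (2 * k + 1), f (2 * k)) ∈ T := by
    intro f hf
    rw [Set.Finite.mem_toFinset] at hf
    obtain ⟨h0, htail, hstep⟩ := hf
    obtain ⟨h1, h2⟩ := hstep k (by omega)
    rw [memT]
    refine ⟨?_, h1⟩
    have hmu : f (2 * k + 2) = mu := htail (2 * k + 2) (by omega)
    rwa [hmu] at h2
  rw [Finset.card_eq_sum_card_fiberwise hmap]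
  have hfib : ∀ p ∈ T, ((hfin.toFinset.filter (fun f => (f (2 * k + 1), f (2 * k)) = p))).card
      = (vacTabs k lam p.2).ncard := by
    intro p hp
    rw [memT] at hp
    rw [← fib_ncard hp.2 hp.1, ← Set.ncard_coe_finset]
    congr 1
    ext f
    simp only [Finset.coe_filter, Set.mem_setOf_eq, Set.Finite.mem_toFinset]
    constructor
    · rintro ⟨hf, heq⟩
      exact ⟨hf, congrArg Prod.snd heq, congrArg Prod.fst heq⟩
    · rintro ⟨hf, h2, h1⟩
      exact ⟨hf, by rw [h1, h2]⟩
  rw [Finset.sum_congr rfl hfib, hT]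
  rw [Finset.sum_biUnion]
  · refine Finset.sum_congr rfl (fun b hb => ?_)
    rw [Finset.sum_image]
    intro v1 _ v2 _ heq
    exact congrArg Prod.snd heq
  · intro b1 h1 b2 h2 hne
    simp only [Function.onFun]
    rw [Finset.disjoint_left]
    intro p hp1 hp2
    rw [Finset.mem_image] at hp1 hp2
    obtain ⟨v1, -, rfl⟩ := hp1
    obtain ⟨v2, -, h⟩ := hp2
    exact hne (congrArg Prod.fst h).symm

lemma mem_rowD {n : ℕ} {c : ℕ × ℕ} : c ∈ rowD n ↔ c.1 = 0 ∧ c.2 < n := by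
  obtain ⟨i, j⟩ := c
  rw [rowD, mem_ofRowLens]
  constructor
  · rintro ⟨h1, h2⟩
    simp only [List.length_singleton] at h1
    have h0 : i = 0 := by omega
    subst h0
    exact ⟨rfl, by simpa using h2⟩
  · rintro ⟨h1, h2⟩
    simp only at h1
    subst h1
    exact ⟨by simp, by simpa using h2⟩

lemma mem_colD {n : ℕ} {c : ℕ × ℕ} : c ∈ colD n ↔ c.1 < n ∧ c.2 = 0 := by
  obtain ⟨i, j⟩ := c
  rw [colD, mem_ofRowLens]
  constructor
  · rintro ⟨h1, h2⟩
    simp only [List.length_replicate] at h1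
    refine ⟨h1, ?_⟩
    simp only [List.get_eq_getElem, List.getElem_replicate] at h2
    omega
  · rintro ⟨h1, h2⟩
    refine ⟨by simpa using h1, ?_⟩
    simp only [List.get_eq_getElem, List.getElem_replicate]
    omega

lemma cells_rowD (n : ℕ) : (rowD n).cells = ({0} : Finset ℕ) ×ˢ Finset.range n := by
  ext c
  rw [mem_cells, mem_rowD, Finset.mem_product, Finset.mem_singleton, Finset.mem_range]

lemma card_rowD (n : ℕ) : (rowD n).card = n := by
  show (rowD n).cells.card = n
  rw [cells_rowD, Finset.card_product, Finset.card_singleton, Finset.card_range, one_mul]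

lemma cells_colD (n : ℕ) : (colD n).cells = Finset.range n ×ˢ ({0} : Finset ℕ) := by
  ext c
  rw [mem_cells, mem_colD, Finset.mem_product, Finset.mem_singleton, Finset.mem_range]

lemma card_colD (n : ℕ) : (colD n).card = n := by
  show (colD n).cells.card = n
  rw [cells_colD, Finset.card_product, Finset.card_singleton, Finset.card_range, mul_one]

lemma rowD_zero : rowD 0 = ⊥ := by
  apply yd_eq_of_cells_eq
  rw [cells_rowD, cells_bot]
  simp

lemma colD_zero : colD 0 = ⊥ := by
  apply yd_eq_of_cells_eq
  rw [cells_colD, cells_bot]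
  simp

lemma rowD_one_eq_colD_one : rowD 1 = colD 1 := by
  apply yd_eq_of_cells_eq
  rw [cells_rowD, cells_colD]
  rfl

lemma rowD_eq_colD_iff {m : ℕ} : rowD m = colD m ↔ m ≤ 1 := by
  constructor
  · intro h
    by_contra hm
    push_neg at hm
    have h1 : ((0 : ℕ), (1 : ℕ)) ∈ rowD m := mem_rowD.mpr ⟨rfl, by omega⟩
    rw [h] at h1
    have := (mem_colD.mp h1).2
    omega
  · intro hm
    interval_cases m
    · rw [rowD_zero, colD_zero]
    · exact rowD_one_eq_colD_one

lemma le_rowD_eq {m : ℕ} {y : YoungDiagram} (h : y ≤ rowD m) : y = rowD y.card := by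
  have hcells : y.cells = ({0} : Finset ℕ) ×ˢ Finset.range (y.rowLen 0) := by
    ext ⟨i, j⟩
    rw [mem_cells, Finset.mem_product, Finset.mem_singleton, Finset.mem_range]
    constructor
    · intro hc
      have h0 : i = 0 := (mem_rowD.mp (h hc)).1
      subst h0
      exact ⟨rfl, mem_iff_lt_rowLen.mp hc⟩
    · rintro ⟨h0, h2⟩
      subst h0
      exact mem_iff_lt_rowLen.mpr h2
  have hcard : y.card = y.rowLen 0 := by
    show y.cells.card = _
    rw [hcells, Finset.card_product]
    simp
  apply yd_eq_of_cells_eq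
  rw [cells_rowD, hcells, hcard]

lemma le_colD_eq {m : ℕ} {y : YoungDiagram} (h : y ≤ colD m) : y = colD y.card := by
  have hcells : y.cells = Finset.range (y.colLen 0) ×ˢ ({0} : Finset ℕ) := by
    ext ⟨i, j⟩
    rw [mem_cells, Finset.mem_product, Finset.mem_singleton, Finset.mem_range]
    constructor
    · intro hc
      have h0 : j = 0 := (mem_colD.mp (h hc)).2
      subst h0
      exact ⟨mem_iff_lt_colLen.mp hc, rfl⟩
    · rintro ⟨h1, h0⟩
      subst h0
      exact mem_iff_lt_colLen.mpr h1
  have hcard : y.card = y.colLen 0 := by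
    show y.cells.card = _
    rw [hcells, Finset.card_product]
    simp
  apply yd_eq_of_cells_eq
  rw [cells_colD, hcells, hcard]

lemma card_bot : (⊥ : YoungDiagram).card = 0 := by
  show (⊥ : YoungDiagram).cells.card = 0
  rw [cells_bot, Finset.card_empty]

lemma downF_bot : downF (⊥ : YoungDiagram) = ∅ := by
  ext g
  rw [mem_downF]
  simp only [Finset.notMem_empty, iff_false]
  rintro ⟨-, h2⟩
  rw [card_bot] at h2
  omega

lemma downF_rowD {m : ℕ} : downF (rowD (m + 1)) = {rowD m} := by
  ext g
  rw [mem_downF, Finset.mem_singleton]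
  constructor
  · rintro ⟨h1, h2⟩
    have hg := le_rowD_eq h1
    rw [card_rowD] at h2
    have : g.card = m := by omega
    rwa [this] at hg
  · rintro rfl
    constructor
    · intro c hc
      have := mem_rowD.mp hc
      exact mem_rowD.mpr ⟨this.1, by omega⟩
    · rw [card_rowD, card_rowD]

lemma downF_colD {m : ℕ} : downF (colD (m + 1)) = {colD m} := by
  ext g
  rw [mem_downF, Finset.mem_singleton]
  constructor
  · rintro ⟨h1, h2⟩
    have hg := le_colD_eq h1
    rw [card_colD] at h2
    have : g.card = m := by omega
    rwa [this] at hg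
  · rintro rfl
    constructor
    · intro c hc
      have := mem_colD.mp hc
      exact mem_colD.mpr ⟨by omega, this.2⟩
    · rw [card_colD, card_colD]

lemma nup_colD : ∀ (t M : ℕ) (a : YoungDiagram), t ≤ M →
    nup t a (colD M) = if a = colD (M - t) then 1 else 0 := by
  intro t
  induction t with
  | zero => intro M a _; simp
  | succ t ih =>
    intro M a htM
    obtain ⟨M', rfl⟩ : ∃ M', M = M' + 1 := ⟨M - 1, by omega⟩
    rw [nup_succ, downF_colD, Finset.sum_singleton, ih M' a (by omega)]
    have : M' + 1 - (t + 1) = M' - t := by omega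
    rw [this]

/-- Stirling numbers of the second kind, defined recursively. -/
def st : ℕ → ℕ → ℕ
  | 0, 0 => 1
  | 0, _ + 1 => 0
  | _ + 1, 0 => 0
  | k + 1, l + 1 => st k l + (l + 1) * st k (l + 1)

lemma st_eq_zero : ∀ {k l : ℕ}, k < l → st k l = 0 := by
  intro k
  induction k with
  | zero =>
    intro l hl
    obtain ⟨l', rfl⟩ : ∃ l', l = l' + 1 := ⟨l - 1, by omega⟩
    rfl
  | succ k ih =>
    intro l hl
    obtain ⟨l', rfl⟩ : ∃ l', l = l' + 1 := ⟨l - 1, by omega⟩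
    show st k l' + (l' + 1) * st k (l' + 1) = 0
    rw [ih (by omega), ih (by omega)]
    ring

/-- `t` down-steps from `rowD n` followed by `t` up-steps ending at `mu`. -/
noncomputable def R (n t : ℕ) (mu : YoungDiagram) : ℕ :=
  if t ≤ n then nup t (rowD (n - t)) mu else 0

lemma keyR (n : ℕ) (t : ℕ) (mu : YoungDiagram) :
    ∑ b ∈ downF mu, ∑ v ∈ upF b, R n t v = R n (t + 1) mu + t * R n t mu := by
  rcases Nat.lt_or_ge n t with hnt | hnt
  · -- t > n : everything vanishes
    have hz : ∀ v : YoungDiagram, R n t v = 0 := fun v => if_neg (by omega)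
    rw [R, if_neg (by omega), hz]
    simp [hz]
  · -- t ≤ n
    have hR : ∀ v : YoungDiagram, R n t v = nup t (rowD (n - t)) v :=
      fun v => if_pos hnt
    simp_rw [hR]
    rw [comm_lemma t (rowD (n - t)) mu]
    rcases Nat.lt_or_ge n (t + 1) with ht1 | ht1
    · -- t = n
      have hnt' : n = t := by omega
      have : n - t = 0 := by omega
      rw [this, rowD_zero, downF_bot, Finset.sum_empty, R, if_neg (by omega)]
    · -- t + 1 ≤ n
      have : n - t = (n - (t + 1)) + 1 := by omega
      rw [this, downF_rowD, Finset.sum_singleton, R, if_pos ht1]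

lemma main_lemma (n : ℕ) : ∀ (k : ℕ) (mu : YoungDiagram),
    (vacTabs k (rowD n) mu).ncard = ∑ t ∈ Finset.range (k + 1), st k t * R n t mu := by
  intro k
  induction k with
  | zero =>
    intro mu
    rw [vac_zero, Finset.sum_range_one]
    have hR : st 0 0 * R n 0 mu = if rowD n = mu then 1 else 0 := by
      have h1 : st 0 0 = 1 := rfl
      rw [h1, one_mul, R, if_pos (Nat.zero_le n), Nat.sub_zero, nup_zero]
    rw [hR]
  | succ k ih =>
    intro mu
    rw [vac_peel]
    calc ∑ b ∈ downF mu, ∑ v ∈ upF b, (vacTabs k (rowD n) v).ncard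
        = ∑ b ∈ downF mu, ∑ v ∈ upF b, ∑ t ∈ Finset.range (k + 1), st k t * R n t v := by
          exact Finset.sum_congr rfl fun b _ => Finset.sum_congr rfl fun v _ => ih v
      _ = ∑ t ∈ Finset.range (k + 1), ∑ b ∈ downF mu, ∑ v ∈ upF b, st k t * R n t v := by
          rw [Finset.sum_comm]
          exact Finset.sum_congr rfl fun b _ => Finset.sum_comm
      _ = ∑ t ∈ Finset.range (k + 1), st k t * (∑ b ∈ downF mu, ∑ v ∈ upF b, R n t v) := by
          refine Finset.sum_congr rfl fun t _ => ?_
          rw [Finset.mul_sum]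
          exact Finset.sum_congr rfl fun b _ => (Finset.mul_sum _ _ _).symm
      _ = ∑ t ∈ Finset.range (k + 1), st k t * (R n (t + 1) mu + t * R n t mu) := by
          exact Finset.sum_congr rfl fun t _ => by rw [keyR]
      _ = (∑ t ∈ Finset.range (k + 1), st k t * R n (t + 1) mu)
            + ∑ t ∈ Finset.range (k + 1), st k t * (t * R n t mu) := by
          rw [← Finset.sum_add_distrib]
          exact Finset.sum_congr rfl fun t _ => by ring
      _ = ∑ t ∈ Finset.range (k + 2), st (k + 1) t * R n t mu := by
          rw [Finset.sum_range_succ' (fun t => st (k + 1) t * R n t mu) (k + 1)]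
          show _ = ∑ t ∈ Finset.range (k + 1), st (k + 1) (t + 1) * R n (t + 1) mu
            + st (k + 1) 0 * R n 0 mu
          have h0 : st (k + 1) 0 = 0 := rfl
          rw [h0, zero_mul, add_zero]
          have hsucc : ∀ t, st (k + 1) (t + 1) = st k t + (t + 1) * st k (t + 1) := fun t => rfl
          calc (∑ t ∈ Finset.range (k + 1), st k t * R n (t + 1) mu)
                + ∑ t ∈ Finset.range (k + 1), st k t * (t * R n t mu)
              = (∑ t ∈ Finset.range (k + 1), st k t * R n (t + 1) mu)
                + ∑ t ∈ Finset.range (k + 2), st k t * (t * R n t mu) := by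
                rw [Finset.sum_range_succ (fun t => st k t * (t * R n t mu)) (k + 1)]
                rw [st_eq_zero (by omega), zero_mul, add_zero]
            _ = (∑ t ∈ Finset.range (k + 1), st k t * R n (t + 1) mu)
                + ∑ t ∈ Finset.range (k + 1), st k (t + 1) * ((t + 1) * R n (t + 1) mu) := by
                congr 1
                rw [Finset.sum_range_succ' (fun t => st k t * (t * R n t mu)) (k + 1)]
                simp
            _ = ∑ t ∈ Finset.range (k + 1), st (k + 1) (t + 1) * R n (t + 1) mu := by
                rw [← Finset.sum_add_distrib]
                refine Finset.sum_congr rfl fun t _ => ?_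
                rw [hsucc t]
                ring

lemma R_colD {n : ℕ} (hn : 1 ≤ n) (t : ℕ) :
    R n t (colD n) = (if t = n then 1 else 0) + (if t = n - 1 then 1 else 0) := by
  rcases Nat.lt_or_ge n t with h | h
  · rw [R, if_neg (by omega), if_neg (by omega), if_neg (by omega)]
  · rw [R, if_pos h, nup_colD t n _ h]
    by_cases h1 : rowD (n - t) = colD (n - t)
    · rw [if_pos h1]
      have hle := rowD_eq_colD_iff.mp h1
      by_cases h2 : t = n
      · rw [if_pos h2, if_neg (by omega)]
      · have h3 : t = n - 1 := by omega
        rw [if_neg h2, if_pos h3]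
    · rw [if_neg h1]
      have h2 : ¬(n - t ≤ 1) := fun hc => h1 (rowD_eq_colD_iff.mpr hc)
      rw [if_neg (by omega), if_neg (by omega)]

lemma mVac_eq_st (n k : ℕ) (hn : 1 ≤ n) :
    mVac (rowD n) (colD n) k = st k n + st k (n - 1) := by
  rw [mVac, main_lemma n k (colD n)]
  calc ∑ t ∈ Finset.range (k + 1), st k t * R n t (colD n)
      = ∑ t ∈ Finset.range (k + 1),
          ((if t = n then st k t else 0) + (if t = n - 1 then st k t else 0)) := by
        refine Finset.sum_congr rfl fun t _ => ?_
        rw [R_colD hn t, mul_add]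
        congr 1 <;> split <;> simp
    _ = (if n ∈ Finset.range (k + 1) then st k n else 0)
        + (if n - 1 ∈ Finset.range (k + 1) then st k (n - 1) else 0) := by
        rw [Finset.sum_add_distrib, Finset.sum_ite_eq', Finset.sum_ite_eq']
    _ = st k n + st k (n - 1) := by
        congr 1
        · by_cases h : n ≤ k
          · rw [if_pos (Finset.mem_range.mpr (by omega))]
          · rw [if_neg (fun hc => absurd (Finset.mem_range.mp hc) (by omega)),
              st_eq_zero (show k < n by omega)]
        · by_cases h : n - 1 ≤ k
          · rw [if_pos (Finset.mem_range.mpr (by omega))]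
          · rw [if_neg (fun hc => absurd (Finset.mem_range.mp hc) (by omega)),
              st_eq_zero (show k < n - 1 by omega)]

section StirlingCount

variable {β : Type*} [DecidableEq β]

lemma insert_sdiff_singleton' (a : β) (s : Finset β) (ha : a ∉ s) :
    insert a s \ {a} = s := by
  ext x
  simp only [Finset.mem_sdiff, Finset.mem_insert, Finset.mem_singleton]
  constructor
  · rintro ⟨h1 | h1, h2⟩
    · exact absurd h1 h2
    · exact h1
  · intro hx
    exact ⟨Or.inr hx, fun h => ha (h ▸ hx)⟩

/-- restriction of a finpartition of `insert a s` to `s` -/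
def phi {a : β} {s : Finset β} (ha : a ∉ s) (P : Finpartition (insert a s)) : Finpartition s :=
  (P.avoid {a}).copy (by rw [insert_sdiff_singleton' a s ha])

lemma mem_phi {a : β} {s : Finset β} (ha : a ∉ s) (P : Finpartition (insert a s)) {c : Finset β} :
    c ∈ (phi ha P).parts ↔ ∃ d ∈ P.parts, ¬d ⊆ {a} ∧ d \ {a} = c := by
  rw [phi, Finpartition.copy_parts, Finpartition.mem_avoid]

lemma sdiff_singleton_not_mem {a : β} {d : Finset β} (hna : a ∉ d) : d \ {a} = d := by
  rw [Finset.sdiff_singleton_eq_erase, Finset.erase_eq_of_notMem hna]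

lemma not_sub_singleton {a : β} {d : Finset β} (hne : d.Nonempty) (hna : a ∉ d) : ¬d ⊆ {a} := by
  intro h
  obtain ⟨x, hx⟩ := hne
  have := h hx
  rw [Finset.mem_singleton] at this
  exact hna (this ▸ hx)

lemma mem_phi_iff {a : β} {s : Finset β} (ha : a ∉ s) (P : Finpartition (insert a s))
    {c : Finset β} :
    c ∈ (phi ha P).parts ↔
      (c ∈ P.parts ∧ c ≠ P.part a) ∨ (P.part a ≠ {a} ∧ c = (P.part a).erase a) := by
  have hmem : a ∈ insert a s := Finset.mem_insert_self a s
  rw [mem_phi ha]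
  constructor
  · rintro ⟨d, hd, hsub, rfl⟩
    by_cases hdp : d = P.part a
    · subst hdp
      right
      refine ⟨fun h => ?_, by rw [Finset.sdiff_singleton_eq_erase]⟩
      rw [h] at hsub
      exact hsub (subset_refl _)
    · left
      have hna : a ∉ d := fun hax => hdp (P.part_eq_of_mem hd hax).symm
      rw [sdiff_singleton_not_mem hna]
      exact ⟨hd, hdp⟩
  · rintro (⟨hc, hne⟩ | ⟨hne, rfl⟩)
    · have hna : a ∉ c := fun hax => hne (P.part_eq_of_mem hc hax).symm
      exact ⟨c, hc, not_sub_singleton (P.nonempty_of_mem_parts hc) hna,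
        sdiff_singleton_not_mem hna⟩
    · refine ⟨P.part a, P.part_mem.mpr hmem, fun hsub => hne ?_,
        by rw [Finset.sdiff_singleton_eq_erase]⟩
      exact Finset.Subset.antisymm hsub (Finset.singleton_subset_iff.mpr (P.mem_part hmem))

/-- extend a finpartition of `s` by the singleton part `{a}` -/
def ext1 {a : β} {s : Finset β} (ha : a ∉ s) (Q : Finpartition s) : Finpartition (insert a s) :=
  Q.extend (by simp) (Finset.disjoint_singleton_right.mpr ha)
    (by rw [Finset.sup_eq_union, Finset.union_comm, ← Finset.insert_eq])

lemma ext1_parts {a : β} {s : Finset β} (ha : a ∉ s) (Q : Finpartition s) :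
    (ext1 ha Q).parts = insert {a} Q.parts := rfl

lemma singleton_not_mem_parts {a : β} {s : Finset β} (ha : a ∉ s) (Q : Finpartition s) :
    ({a} : Finset β) ∉ Q.parts := by
  intro h
  exact ha (Q.le h (Finset.mem_singleton_self a))

lemma card_parts_ext1 {a : β} {s : Finset β} (ha : a ∉ s) (Q : Finpartition s) :
    (ext1 ha Q).parts.card = Q.parts.card + 1 := by
  rw [ext1_parts, Finset.card_insert_of_notMem (singleton_not_mem_parts ha Q)]

lemma part_ext1 {a : β} {s : Finset β} (ha : a ∉ s) (Q : Finpartition s) :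
    (ext1 ha Q).part a = {a} := by
  apply Finpartition.part_eq_of_mem
  · rw [ext1_parts]
    exact Finset.mem_insert_self _ _
  · exact Finset.mem_singleton_self a

lemma phi_ext1 {a : β} {s : Finset β} (ha : a ∉ s) (Q : Finpartition s) :
    phi ha (ext1 ha Q) = Q := by
  apply Finpartition.ext
  ext c
  rw [mem_phi_iff ha, part_ext1 ha Q, ext1_parts]
  constructor
  · rintro (⟨hc, hne⟩ | ⟨hne, -⟩)
    · rcases Finset.mem_insert.mp hc with rfl | hc
      · exact absurd rfl hne
      · exact hc
    · exact absurd rfl hne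
  · intro hc
    left
    refine ⟨Finset.mem_insert_of_mem hc, fun h => ?_⟩
    exact singleton_not_mem_parts ha Q (h ▸ hc)

/-- add `a` to the part `t` of a finpartition of `s` -/
def insertPart {a : β} {s : Finset β} (ha : a ∉ s) (Q : Finpartition s) (t : Finset β)
    (ht : t ∈ Q.parts) : Finpartition (insert a s) where
  parts := insert (insert a t) (Q.parts.erase t)
  supIndep := by
    rw [Finset.supIndep_iff_pairwiseDisjoint, Finset.coe_insert]
    apply Set.PairwiseDisjoint.insert
    · exact Q.disjoint.subset (fun u hu =>
        Finset.mem_coe.mpr (Finset.mem_of_mem_erase (Finset.mem_coe.mp hu)))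
    · intro u hu hne
      have hu' : u ∈ Q.parts := Finset.mem_of_mem_erase (Finset.mem_coe.mp hu)
      have hut : u ≠ t := Finset.ne_of_mem_erase (Finset.mem_coe.mp hu)
      show Disjoint (insert a t) u
      rw [Finset.disjoint_insert_left]
      constructor
      · exact fun h => ha (Q.le hu' h)
      · exact Q.disjoint ht hu' (fun h => hut h.symm)
  sup_parts := by
    ext x
    rw [Finset.mem_sup]
    constructor
    · rintro ⟨v, hv, hx⟩
      rcases Finset.mem_insert.mp hv with rfl | hv
      · rcases Finset.mem_insert.mp hx with rfl | hx
        · exact Finset.mem_insert_self _ _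
        · exact Finset.mem_insert_of_mem (Q.le ht hx)
      · exact Finset.mem_insert_of_mem (Q.le (Finset.mem_of_mem_erase hv) hx)
    · intro hx
      rcases Finset.mem_insert.mp hx with rfl | hx
      · exact ⟨insert x t, Finset.mem_insert_self _ _, Finset.mem_insert_self _ _⟩
      · obtain ⟨u, hu, hxu⟩ := Q.exists_mem hx
        by_cases hut : u = t
        · subst hut
          exact ⟨insert a u, Finset.mem_insert_self _ _, Finset.mem_insert_of_mem hxu⟩
        · exact ⟨u, Finset.mem_insert_of_mem (Finset.mem_erase.mpr ⟨hut, hu⟩), hxu⟩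
  bot_notMem := by
    intro h
    rcases Finset.mem_insert.mp h with h | h
    · exact Finset.insert_ne_empty a t h.symm
    · exact Q.bot_notMem (Finset.mem_of_mem_erase h)

lemma insertPart_parts {a : β} {s : Finset β} (ha : a ∉ s) (Q : Finpartition s) (t : Finset β)
    (ht : t ∈ Q.parts) :
    (insertPart ha Q t ht).parts = insert (insert a t) (Q.parts.erase t) := rfl

lemma insert_not_mem_erase {a : β} {s : Finset β} (ha : a ∉ s) (Q : Finpartition s)
    {t u : Finset β} (hu : u ∈ Q.parts.erase t) : insert a t ≠ u := by
  intro h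
  have : a ∈ u := h ▸ Finset.mem_insert_self a t
  exact ha (Q.le (Finset.mem_of_mem_erase hu) this)

lemma card_parts_insertPart {a : β} {s : Finset β} (ha : a ∉ s) (Q : Finpartition s) (t : Finset β)
    (ht : t ∈ Q.parts) : (insertPart ha Q t ht).parts.card = Q.parts.card := by
  rw [insertPart_parts, Finset.card_insert_of_notMem
    (fun h => insert_not_mem_erase ha Q h rfl), Finset.card_erase_of_mem ht]
  have : 0 < Q.parts.card := Finset.card_pos.mpr ⟨t, ht⟩
  omega

lemma part_insertPart {a : β} {s : Finset β} (ha : a ∉ s) (Q : Finpartition s) (t : Finset β)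
    (ht : t ∈ Q.parts) : (insertPart ha Q t ht).part a = insert a t := by
  apply Finpartition.part_eq_of_mem
  · rw [insertPart_parts]
    exact Finset.mem_insert_self _ _
  · exact Finset.mem_insert_self a t

lemma insert_ne_singleton {a : β} {t : Finset β} (hne : t.Nonempty) (hna : a ∉ t) :
    insert a t ≠ {a} := by
  intro h
  obtain ⟨x, hx⟩ := hne
  have hxa : x ≠ a := fun hh => hna (hh ▸ hx)
  have : x ∈ ({a} : Finset β) := h ▸ Finset.mem_insert_of_mem hx
  rw [Finset.mem_singleton] at this
  exact hxa this

lemma phi_insertPart {a : β} {s : Finset β} (ha : a ∉ s) (Q : Finpartition s) (t : Finset β)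
    (ht : t ∈ Q.parts) : phi ha (insertPart ha Q t ht) = Q := by
  have hna : a ∉ t := fun h => ha (Q.le ht h)
  apply Finpartition.ext
  ext c
  rw [mem_phi_iff ha, part_insertPart ha Q t ht, insertPart_parts]
  have he : (insert a t).erase a = t := Finset.erase_insert hna
  rw [he]
  constructor
  · rintro (⟨hc, hne⟩ | ⟨-, rfl⟩)
    · rcases Finset.mem_insert.mp hc with rfl | hc
      · exact absurd rfl hne
      · exact Finset.mem_of_mem_erase hc
    · exact ht
  · intro hc
    by_cases hct : c = t
    · subst hct
      exact Or.inr ⟨insert_ne_singleton (Q.nonempty_of_mem_parts hc) hna, rfl⟩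
    · left
      refine ⟨Finset.mem_insert_of_mem (Finset.mem_erase.mpr ⟨hct, hc⟩), ?_⟩
      intro h
      have : a ∈ c := h ▸ Finset.mem_insert_self a t
      exact ha (Q.le hc this)

end StirlingCount

section StirlingCount2

variable {β : Type*} [DecidableEq β]

attribute [local instance] Classical.propDecidable

lemma eq_ext1_of {a : β} {s : Finset β} (ha : a ∉ s) (P : Finpartition (insert a s))
    (h : P.part a = {a}) : P = ext1 ha (phi ha P) := by
  have hmem : a ∈ insert a s := Finset.mem_insert_self a s
  apply Finpartition.ext
  ext c
  rw [ext1_parts, Finset.mem_insert, mem_phi_iff ha, h]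
  constructor
  · intro hc
    by_cases hca : c = {a}
    · exact Or.inl hca
    · exact Or.inr (Or.inl ⟨hc, hca⟩)
  · rintro (rfl | (⟨hc, -⟩ | ⟨hne, -⟩))
    · exact h ▸ P.part_mem.mpr hmem
    · exact hc
    · exact absurd rfl hne

lemma part_erase_nonempty {a : β} {s : Finset β} (P : Finpartition (insert a s))
    (h : P.part a ≠ {a}) : ((P.part a).erase a).Nonempty := by
  have hmem : a ∈ insert a s := Finset.mem_insert_self a s
  have hsub : ¬P.part a ⊆ {a} := fun hsub => h
    (Finset.Subset.antisymm hsub (Finset.singleton_subset_iff.mpr (P.mem_part hmem)))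
  obtain ⟨x, hx, hxa⟩ := Finset.not_subset.mp hsub
  rw [Finset.mem_singleton] at hxa
  exact ⟨x, Finset.mem_erase.mpr ⟨hxa, hx⟩⟩

lemma eq_insertPart_of {a : β} {s : Finset β} (ha : a ∉ s) (P : Finpartition (insert a s))
    (h : P.part a ≠ {a}) :
    ∃ ht : (P.part a).erase a ∈ (phi ha P).parts,
      P = insertPart ha (phi ha P) ((P.part a).erase a) ht := by
  have hmem : a ∈ insert a s := Finset.mem_insert_self a s
  have ht : (P.part a).erase a ∈ (phi ha P).parts := (mem_phi_iff ha P).mpr (Or.inr ⟨h, rfl⟩)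
  refine ⟨ht, ?_⟩
  apply Finpartition.ext
  ext c
  rw [insertPart_parts, Finset.insert_erase (P.mem_part hmem), Finset.mem_insert,
    Finset.mem_erase, mem_phi_iff ha]
  constructor
  · intro hc
    by_cases hcp : c = P.part a
    · exact Or.inl hcp
    · refine Or.inr ⟨?_, Or.inl ⟨hc, hcp⟩⟩
      intro hce
      obtain ⟨x, hx⟩ := part_erase_nonempty P h
      have hx1 : x ∈ c := hce ▸ hx
      have hx2 : x ∈ P.part a := Finset.mem_of_mem_erase hx
      have := P.eq_of_mem_parts hc (P.part_mem.mpr hmem) hx1 hx2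
      exact hcp this
  · rintro (rfl | ⟨hne, (⟨hc, -⟩ | ⟨-, hce⟩)⟩)
    · exact P.part_mem.mpr hmem
    · exact hc
    · exact absurd hce hne

lemma count_zero_parts {a : β} {s : Finset β} (ha : a ∉ s) :
    #(Finset.univ.filter fun P : Finpartition (insert a s) => #P.parts = 0) = 0 := by
  rw [Finset.card_eq_zero, Finset.filter_eq_empty_iff]
  intro P _
  intro h0
  rw [Finset.card_eq_zero] at h0
  have := Finpartition.parts_eq_empty_iff.mp h0
  exact Finset.insert_ne_empty a s (by exact_mod_cast this)

lemma fiber_card {a : β} {s : Finset β} (ha : a ∉ s) (l : ℕ) (Q : Finpartition s) :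
    #((Finset.univ.filter fun P : Finpartition (insert a s) => #P.parts = l + 1).filter
        fun P => phi ha P = Q)
      = (if #Q.parts = l then 1 else 0) + (if #Q.parts = l + 1 then #Q.parts else 0) := by
  rw [Finset.filter_filter]
  rw [← Finset.card_filter_add_card_filter_not
    (s := Finset.univ.filter fun P : Finpartition (insert a s) => #P.parts = l + 1 ∧ phi ha P = Q)
    (p := fun P => P.part a = {a})]
  congr 1
  · -- singleton-part fiber
    rw [Finset.filter_filter]
    by_cases hq : #Q.parts = l
    · rw [if_pos hq]
      have : (Finset.univ.filter fun P : Finpartition (insert a s) =>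
          (#P.parts = l + 1 ∧ phi ha P = Q) ∧ P.part a = {a}) = {ext1 ha Q} := by
        ext P
        rw [Finset.mem_filter, Finset.mem_singleton]
        constructor
        · rintro ⟨-, ⟨hcard, hphi⟩, hpart⟩
          rw [eq_ext1_of ha P hpart, hphi]
        · rintro rfl
          exact ⟨Finset.mem_univ _, ⟨by rw [card_parts_ext1 ha Q, hq], phi_ext1 ha Q⟩,
            part_ext1 ha Q⟩
      rw [this, Finset.card_singleton]
    · rw [if_neg hq]
      rw [Finset.card_eq_zero, Finset.filter_eq_empty_iff]
      rintro P - ⟨⟨hcard, hphi⟩, hpart⟩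
      apply hq
      have := card_parts_ext1 ha Q
      rw [← hphi, ← eq_ext1_of ha P hpart, hphi] at this
      omega
  · -- non-singleton fiber
    rw [Finset.filter_filter]
    by_cases hq : #Q.parts = l + 1
    · rw [if_pos hq]
      symm
      apply Finset.card_bij (i := fun (t : Finset β) (ht : t ∈ Q.parts) =>
        insertPart ha Q t ht)
      · intro t ht
        rw [Finset.mem_filter]
        have hna : a ∉ t := fun hh => ha (Q.le ht hh)
        refine ⟨Finset.mem_univ _, ⟨?_, phi_insertPart ha Q t ht⟩, ?_⟩
        · rw [card_parts_insertPart ha Q t ht, hq]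
        · rw [part_insertPart ha Q t ht]
          exact insert_ne_singleton (Q.nonempty_of_mem_parts ht) hna
      · intro t1 ht1 t2 ht2 heq
        have h1 := part_insertPart ha Q t1 ht1
        have h2 := part_insertPart ha Q t2 ht2
        rw [heq] at h1
        rw [h1] at h2
        have hna1 : a ∉ t1 := fun hh => ha (Q.le ht1 hh)
        have hna2 : a ∉ t2 := fun hh => ha (Q.le ht2 hh)
        have := congrArg (fun u => Finset.erase u a) h2
        simpa [Finset.erase_insert hna1, Finset.erase_insert hna2] using this
      · rintro P hP
        rw [Finset.mem_filter] at hP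
        obtain ⟨-, ⟨hcard, hphi⟩, hpart⟩ := hP
        subst hphi
        obtain ⟨ht, hPeq⟩ := eq_insertPart_of ha P hpart
        exact ⟨(P.part a).erase a, ht, hPeq.symm⟩
    · rw [if_neg hq]
      rw [Finset.card_eq_zero, Finset.filter_eq_empty_iff]
      rintro P - ⟨⟨hcard, hphi⟩, hpart⟩
      apply hq
      obtain ⟨ht, hPeq⟩ := eq_insertPart_of ha P hpart
      have := card_parts_insertPart ha (phi ha P) _ ht
      rw [← hPeq, hphi] at this
      omega

end StirlingCount2

section StirlingCount3

variable {β : Type*} [DecidableEq β]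

lemma count_succ {a : β} {s : Finset β} (ha : a ∉ s) (l : ℕ) :
    #(Finset.univ.filter fun P : Finpartition (insert a s) => #P.parts = l + 1)
      = #(Finset.univ.filter fun Q : Finpartition s => #Q.parts = l)
        + (l + 1) * #(Finset.univ.filter fun Q : Finpartition s => #Q.parts = l + 1) := by
  classical
  rw [Finset.card_eq_sum_card_fiberwise
    (f := fun P => phi ha P) (t := Finset.univ) (fun P _ => Finset.mem_univ _)]
  have hstep : ∀ Q ∈ (Finset.univ : Finset (Finpartition s)),
      #((Finset.univ.filter fun P : Finpartition (insert a s) => #P.parts = l + 1).filter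
        fun P => phi ha P = Q)
      = (if #Q.parts = l then 1 else 0) + (if #Q.parts = l + 1 then #Q.parts else 0) :=
    fun Q _ => fiber_card ha l Q
  rw [Finset.sum_congr rfl hstep, Finset.sum_add_distrib]
  congr 1
  · rw [Finset.card_filter]
  · have h2 : ∀ Q ∈ (Finset.univ : Finset (Finpartition s)),
        (if #Q.parts = l + 1 then #Q.parts else 0)
          = (l + 1) * (if #Q.parts = l + 1 then 1 else 0) := by
      intro Q _
      by_cases h : #Q.parts = l + 1
      · rw [if_pos h, if_pos h, h, mul_one]
      · rw [if_neg h, if_neg h, mul_zero]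
    rw [Finset.sum_congr rfl h2, ← Finset.mul_sum, Finset.card_filter]

lemma count_all : ∀ (s : Finset β) (l : ℕ),
    #(Finset.univ.filter fun P : Finpartition s => #P.parts = l) = st s.card l := by
  classical
  intro s
  induction s using Finset.induction_on with
  | empty =>
    intro l
    rw [Finset.card_empty]
    have hparts : ∀ P : Finpartition (∅ : Finset β), P.parts = ∅ := fun P =>
      Finpartition.parts_eq_empty_iff.mpr (Finset.bot_eq_empty).symm
    cases l with
    | zero =>
      have h1 : (Finset.univ.filter fun P : Finpartition (∅ : Finset β) => #P.parts = 0)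
          = Finset.univ := by
        rw [Finset.filter_true_of_mem]
        intro P _
        rw [hparts P, Finset.card_empty]
      rw [h1, Finset.card_univ]
      exact Fintype.card_eq_one_of_forall_eq
        (i := (Finpartition.empty (Finset β)).copy Finset.bot_eq_empty)
        (fun P => Finpartition.ext (by rw [hparts, hparts]))
    | succ l =>
      have h1 : (Finset.univ.filter fun P : Finpartition (∅ : Finset β) => #P.parts = l + 1)
          = ∅ := by
        rw [Finset.filter_eq_empty_iff]
        intro P _
        rw [hparts P, Finset.card_empty]
        omega
      rw [h1, Finset.card_empty]
      rfl
  | insert _ _ ha ih =>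
    rename_i a s
    intro l
    rw [Finset.card_insert_of_notMem ha]
    cases l with
    | zero =>
      rw [count_zero_parts ha]
      rfl
    | succ l =>
      rw [count_succ ha l, ih l, ih (l + 1)]
      rfl

end StirlingCount3

lemma stirling_eq_st (k l : ℕ) : stirling k l = st k l := by
  classical
  rw [stirling]
  have hset : {P : Finpartition (Finset.univ : Finset (Fin k)) | P.parts.card = l}
      = ↑(Finset.univ.filter
          fun P : Finpartition (Finset.univ : Finset (Fin k)) => #P.parts = l) := by
    ext P
    simp
  rw [hset, Set.ncard_coe_finset, count_all, Finset.card_univ, Fintype.card_fin]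

end VP

theorem stmt6 (n k : ℕ) (hn : 1 ≤ n) (hk : 1 ≤ k) :
    mVac (rowD n) (colD n) k = stirling k n + stirling k (n - 1) := by
  rw [VP.stirling_eq_st, VP.stirling_eq_st]
  exact VP.mVac_eq_st n k hn
end
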